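/- arXiv:2103.17207 — 4 statements merged into one kernel-verified Lean document; each statement's English description precedes it below -/
import Mathlib

section
/- For every admissible policy π there exists a DE policy π̃ (a policy that executes or drops transactions only at deadline expiration times) such that at every deadline expiration time τ, the system state (the channel balances together with the multiset of pending transactions) under π̃ equals that under π, and the total blockages coincide: R^{π̃}(τ) = R^{π}(τ). -/
open scoped Classical
open Finset

/-- A transaction in a payment channel between nodes `A` and `B`.
`dir = true` means the transaction goes from `A` to `B`, `dir = false` from `B` to `A`.
`arr` is its arrival time, `amt` its (positive, integer) amount, and `ddl ≥ arr` its
deadline expiration time (arrival time plus maximum buffering time). -/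
structure Txn where
  dir : Bool
  arr : ℝ
  amt : ℕ
  ddl : ℝ
  arr_nonneg : 0 ≤ arr
  amt_pos : 1 ≤ amt
  arr_le_ddl : arr ≤ ddl

/-- An instance of the payment-channel scheduling problem: a channel of capacity
`cap ≥ 1`, an initial balance `QA0 ≤ cap` of node `A` (node `B` holds `cap - QA0`),
and a finite sequence of `N` transactions. -/
structure PCInstance (N : ℕ) where
  cap : ℕ
  cap_pos : 1 ≤ cap
  QA0 : ℕ
  QA0_le : QA0 ≤ cap
  tx : Fin N → Txn

/-- A (scheduling) policy: each transaction is assigned an execution time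
(`exec? n = some s`) or is dropped (`exec? n = none`; a dropped transaction is
dropped at its deadline expiration time).  `ord` is an injective priority used to
order actions, in particular transactions executed at the same time instant. -/
structure Policy (N : ℕ) where
  exec? : Fin N → Option ℝ
  ord : Fin N → ℕ
  ord_inj : Function.Injective ord

variable {N : ℕ}

/-- The net effect of executing a transaction on the balance of node `A`. -/
def delta (p : Txn) : ℤ := if p.dir then -(p.amt : ℤ) else (p.amt : ℤ)

/-- The balance of node `A` just before policy `P` executes transaction `n`,
i.e. accounting for all executions ordered before `n`. -/
noncomputable def QAbefore (I : PCInstance N) (P : Policy N) (n : Fin N) : ℤ :=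
  (I.QA0 : ℤ) +
    ∑ m ∈ univ.filter (fun m : Fin N => (P.exec? m).isSome ∧ P.ord m < P.ord n),
      delta (I.tx m)

/-- The balance of node `A` just before the action concerning transaction `n`
taken at time `τ`: all executions strictly before `τ`, together with executions
at the instant `τ` itself that are ordered before `n`, are accounted for. -/
noncomputable def QApre (I : PCInstance N) (P : Policy N) (n : Fin N) (τ : ℝ) : ℤ :=
  (I.QA0 : ℤ) +
    ∑ m ∈ univ.filter
        (fun m : Fin N => ∃ s, P.exec? m = some s ∧ (s < τ ∨ (s = τ ∧ P.ord m < P.ord n))),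
      delta (I.tx m)

/-- The balance of node `A` at time `τ⁻`, i.e. accounting for all executions
strictly before time `τ`. -/
noncomputable def QAminus (I : PCInstance N) (P : Policy N) (τ : ℝ) : ℤ :=
  (I.QA0 : ℤ) +
    ∑ m ∈ univ.filter (fun m : Fin N => ∃ s, P.exec? m = some s ∧ s < τ),
      delta (I.tx m)

/-- The balance of node `A` at time `t`, accounting for all executions up to and
including time `t`. -/
noncomputable def QAat (I : PCInstance N) (P : Policy N) (t : ℝ) : ℤ :=
  (I.QA0 : ℤ) +
    ∑ m ∈ univ.filter (fun m : Fin N => ∃ s, P.exec? m = some s ∧ s ≤ t),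
      delta (I.tx m)

/-- Feasibility of executing a transaction of direction `d` and amount `v` when the
balance of node `A` is `qa`: an `A`-to-`B` transaction needs `Q^A ≥ v`, a `B`-to-`A`
transaction needs `Q^B = cap - Q^A ≥ v`. -/
def FeasAt (I : PCInstance N) (d : Bool) (v : ℕ) (qa : ℤ) : Prop :=
  if d then (v : ℤ) ≤ qa else qa ≤ (I.cap : ℤ) - (v : ℤ)

/-- Admissibility of a policy: the tie-breaking order is consistent with execution
times; every transaction is executed within its window `[arr, ddl]` (if at all);
and every execution is feasible given the balance produced by the executions
ordered before it. -/
def Admissible (I : PCInstance N) (P : Policy N) : Prop :=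
  (∀ m n sm sn, P.exec? m = some sm → P.exec? n = some sn → sm < sn → P.ord m < P.ord n) ∧
  (∀ n s, P.exec? n = some s → (I.tx n).arr ≤ s ∧ s ≤ (I.tx n).ddl) ∧
  (∀ n, (P.exec? n).isSome → FeasAt I (I.tx n).dir (I.tx n).amt (QAbefore I P n))

/-- Total blockage `R^π(t)`: the sum of the amounts of the transactions dropped up to
and including time `t` (a transaction not executed is dropped at its deadline). -/
noncomputable def blockage (I : PCInstance N) (P : Policy N) (t : ℝ) : ℕ :=
  ∑ n ∈ univ.filter (fun n : Fin N => P.exec? n = none ∧ (I.tx n).ddl ≤ t), (I.tx n).amt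

/-- Throughput `S^π(t)`: the sum of the amounts of the transactions executed up to and
including time `t`. -/
noncomputable def throughput (I : PCInstance N) (P : Policy N) (t : ℝ) : ℕ :=
  ∑ n ∈ univ.filter (fun n : Fin N => ∃ s, P.exec? n = some s ∧ s ≤ t), (I.tx n).amt

/-- The number of transactions executed up to and including time `t`. -/
noncomputable def numExec (P : Policy N) (t : ℝ) : ℕ :=
  (univ.filter (fun n : Fin N => ∃ s, P.exec? n = some s ∧ s ≤ t)).card

/-- Transaction `m` is pending at time `τ⁻` under policy `P`: it has arrived, its
deadline has not passed, and it has not been executed before `τ`. -/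
def PendingAt (I : PCInstance N) (P : Policy N) (m : Fin N) (τ : ℝ) : Prop :=
  (I.tx m).arr ≤ τ ∧ τ ≤ (I.tx m).ddl ∧ ∀ s, P.exec? m = some s → τ ≤ s

/-- The fixed-amounts assumption: all transaction amounts equal a fixed `v` with
`1 ≤ v ≤ cap`, and initially `Q^A(0) ≥ v` or `Q^B(0) = cap - Q^A(0) ≥ v`. -/
def FixedAmounts (I : PCInstance N) (v : ℕ) : Prop :=
  1 ≤ v ∧ v ≤ I.cap ∧ (∀ n, (I.tx n).amt = v) ∧ (v ≤ I.QA0 ∨ v + I.QA0 ≤ I.cap)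

/-- The PMDE (Process or Match on Deadline Expiration) rule for transaction `n`:
either `n` is executed at its own deadline expiration being feasible when its turn
comes; or `n` is executed at its own deadline expiration immediately after a matching
pending opposite-direction transaction with the earliest deadline (`n` being
infeasible, and the match feasible, beforehand); or `n` is itself executed as the
matched transaction at the deadline expiration of an opposite-direction transaction;
or `n` is dropped at its deadline, being infeasible and with no feasible match
available. -/
def PMDECase (I : PCInstance N) (P : Policy N) (n : Fin N) : Prop :=
  (P.exec? n = some (I.tx n).ddl ∧
     FeasAt I (I.tx n).dir (I.tx n).amt (QAbefore I P n)) ∨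
  (P.exec? n = some (I.tx n).ddl ∧
     ∃ q : Fin N, (I.tx q).dir = !(I.tx n).dir ∧
       P.exec? q = some (I.tx n).ddl ∧ P.ord q < P.ord n ∧
       (∀ m : Fin N, (P.exec? m).isSome → ¬(P.ord q < P.ord m ∧ P.ord m < P.ord n)) ∧
       ¬ FeasAt I (I.tx n).dir (I.tx n).amt (QAbefore I P q) ∧
       FeasAt I (I.tx q).dir (I.tx q).amt (QAbefore I P q) ∧
       (∀ m : Fin N, (I.tx m).dir = (I.tx q).dir → PendingAt I P m (I.tx n).ddl →
          (I.tx q).ddl ≤ (I.tx m).ddl)) ∨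
  (∃ p : Fin N, (I.tx p).dir = !(I.tx n).dir ∧
     P.exec? n = some (I.tx p).ddl ∧ P.exec? p = some (I.tx p).ddl ∧
     P.ord n < P.ord p) ∨
  (P.exec? n = none ∧
     ¬ FeasAt I (I.tx n).dir (I.tx n).amt (QApre I P n (I.tx n).ddl) ∧
     ¬ (FeasAt I (!(I.tx n).dir) (I.tx n).amt (QApre I P n (I.tx n).ddl) ∧
        ∃ q : Fin N, (I.tx q).dir = !(I.tx n).dir ∧ PendingAt I P q (I.tx n).ddl))

/-- The PMDE scheduling policy: an admissible policy that handles every transaction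
according to the PMDE rule. -/
def IsPMDE (I : PCInstance N) (P : Policy N) : Prop :=
  Admissible I P ∧ ∀ n, PMDECase I P n

/-- A DE policy: transactions are executed (or dropped) only at deadline expiration
times.  (In this model dropped transactions are dropped at their own deadline by
definition.) -/
def DEPolicy (I : PCInstance N) (P : Policy N) : Prop :=
  ∀ n s, P.exec? n = some s → ∃ m : Fin N, (I.tx m).ddl = s

/-- The policy `P` acts like PMDE at time `τ`: every transaction whose deadline
expires at `τ`, and every transaction executed at `τ`, is handled according to the
PMDE rule. -/
def PMDEActionAt (I : PCInstance N) (P : Policy N) (τ : ℝ) : Prop :=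
  ∀ n : Fin N, ((I.tx n).ddl = τ ∨ P.exec? n = some τ) → PMDECase I P n

/-- The set of transactions pending just after time `τ` under policy `P`
(together with the channel balance, this constitutes the system state). -/
noncomputable def pendingSet (I : PCInstance N) (P : Policy N) (τ : ℝ) : Finset (Fin N) :=
  univ.filter (fun m : Fin N =>
    (I.tx m).arr ≤ τ ∧ (∀ s, P.exec? m = some s → τ < s) ∧
    (P.exec? m = none → τ < (I.tx m).ddl))

/-- The PFI (Process Feasible Immediately) policy: an admissible policy that executes
every transaction at its arrival time if it is feasible at that instant, and drops it
immediately otherwise. -/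
def IsPFI (I : PCInstance N) (P : Policy N) : Prop :=
  Admissible I P ∧ ∀ n : Fin N,
    (P.exec? n = some (I.tx n).arr ∧
       FeasAt I (I.tx n).dir (I.tx n).amt (QAbefore I P n)) ∨
    (P.exec? n = none ∧
       ¬ FeasAt I (I.tx n).dir (I.tx n).amt (QApre I P n (I.tx n).arr))

/-- A policy that executes each transaction at the earliest instant in
`[arr, ddl]` at which it is feasible: an executed transaction was infeasible at
every earlier instant of its window, and a dropped transaction was infeasible
throughout its window. -/
def GreedyEarliest (I : PCInstance N) (P : Policy N) : Prop :=
  Admissible I P ∧ ∀ n : Fin N,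
    (∀ s, P.exec? n = some s → ∀ s', (I.tx n).arr ≤ s' → s' < s →
        ¬ FeasAt I (I.tx n).dir (I.tx n).amt (QAminus I P s')) ∧
    (P.exec? n = none → ∀ s', (I.tx n).arr ≤ s' → s' ≤ (I.tx n).ddl →
        ¬ FeasAt I (I.tx n).dir (I.tx n).amt (QAminus I P s'))


/-- The set of deadlines that are at least `s`. -/
noncomputable def ddlSet {N : ℕ} (I : PCInstance N) (s : ℝ) : Finset ℝ :=
  (univ.filter (fun m : Fin N => s ≤ (I.tx m).ddl)).image (fun m => (I.tx m).ddl)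

/-- The next deadline expiration time at or after `s` (or `s` if none). -/
noncomputable def nextDdl {N : ℕ} (I : PCInstance N) (s : ℝ) : ℝ :=
  if h : (ddlSet I s).Nonempty then (ddlSet I s).min' h else s

lemma mem_ddlSet {N : ℕ} (I : PCInstance N) {s : ℝ} {n : Fin N}
    (h : s ≤ (I.tx n).ddl) : (I.tx n).ddl ∈ ddlSet I s :=
  Finset.mem_image.2 ⟨n, Finset.mem_filter.2 ⟨Finset.mem_univ _, h⟩, rfl⟩

lemma ddlSet_nonempty {N : ℕ} (I : PCInstance N) {s : ℝ} {n : Fin N}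
    (h : s ≤ (I.tx n).ddl) : (ddlSet I s).Nonempty := ⟨_, mem_ddlSet I h⟩

lemma nextDdl_mem {N : ℕ} (I : PCInstance N) {s : ℝ}
    (h : (ddlSet I s).Nonempty) : nextDdl I s ∈ ddlSet I s := by
  rw [nextDdl, dif_pos h]; exact Finset.min'_mem _ _

lemma le_nextDdl {N : ℕ} (I : PCInstance N) {s : ℝ}
    (h : (ddlSet I s).Nonempty) : s ≤ nextDdl I s := by
  rcases Finset.mem_image.1 (nextDdl_mem I h) with ⟨m, hm, hmeq⟩
  rw [← hmeq]; exact (Finset.mem_filter.1 hm).2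

lemma nextDdl_le {N : ℕ} (I : PCInstance N) {s τ : ℝ}
    (hτ : τ ∈ ddlSet I s) : nextDdl I s ≤ τ := by
  rw [nextDdl, dif_pos ⟨_, hτ⟩]; exact Finset.min'_le _ _ hτ

lemma nextDdl_mono {N : ℕ} (I : PCInstance N) {s s' : ℝ} (hss : s ≤ s')
    (h' : (ddlSet I s').Nonempty) : nextDdl I s ≤ nextDdl I s' := by
  rcases Finset.mem_image.1 (nextDdl_mem I h') with ⟨m, hm, hmeq⟩
  have hs : s ≤ (I.tx m).ddl := hss.trans (Finset.mem_filter.1 hm).2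
  exact hmeq ▸ nextDdl_le I (mem_ddlSet I hs)

/-- **Lemma 1, DE policies suffice.** For every admissible policy `π`
there exists a DE policy `π'` (executing/dropping only at deadline expiration times)
such that at every deadline expiration time the system state (channel balance together
with the set of pending transactions) under `π'` equals that under `π`, and the total
blockages coincide. -/
theorem de_policies_suffice {N : ℕ} (I : PCInstance N) (π : Policy N)
    (hπ : Admissible I π) :
    ∃ π' : Policy N, Admissible I π' ∧ DEPolicy I π' ∧
      ∀ m : Fin N,
        QAat I π' (I.tx m).ddl = QAat I π (I.tx m).ddl ∧
        pendingSet I π' (I.tx m).ddl = pendingSet I π (I.tx m).ddl ∧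
        blockage I π' (I.tx m).ddl = blockage I π (I.tx m).ddl := by
  
  obtain ⟨hord, hwin, hfeas⟩ := hπ
  set f : ℝ → ℝ := nextDdl I with hf
  have hne : ∀ (n : Fin N) (s : ℝ), π.exec? n = some s → (ddlSet I s).Nonempty :=
    fun n s h => ddlSet_nonempty I (hwin n s h).2
  refine ⟨⟨fun n => (π.exec? n).map f, π.ord, π.ord_inj⟩, ?_, ?_, ?_⟩
  · refine ⟨?_, ?_, ?_⟩
    · intro m n sm sn hm hn hlt
      rcases Option.map_eq_some_iff.1 hm with ⟨s0m, hs0m, rfl⟩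
      rcases Option.map_eq_some_iff.1 hn with ⟨s0n, hs0n, rfl⟩
      by_contra hcon
      have : s0n ≤ s0m := by
        by_contra h2
        exact hcon (hord m n s0m s0n hs0m hs0n (lt_of_not_ge h2))
      exact absurd hlt (not_lt.2 (nextDdl_mono I this (hne m s0m hs0m)))
    · intro n s hn
      rcases Option.map_eq_some_iff.1 hn with ⟨s0, hs0, rfl⟩
      obtain ⟨ha, hd⟩ := hwin n s0 hs0
      exact ⟨ha.trans (le_nextDdl I (hne n s0 hs0)), nextDdl_le I (mem_ddlSet I hd)⟩
    · intro n hn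
      have hQ : QAbefore I ⟨fun n => (π.exec? n).map f, π.ord, π.ord_inj⟩ n
          = QAbefore I π n := by
        unfold QAbefore
        congr 1
        refine Finset.sum_congr ?_ (fun _ _ => rfl)
        apply Finset.filter_congr
        intro m _
        simp [Option.isSome_map]
      rw [hQ]
      apply hfeas
      simpa [Option.isSome_map] using hn
  · intro n s hn
    rcases Option.map_eq_some_iff.1 hn with ⟨s0, hs0, rfl⟩
    rcases Finset.mem_image.1 (nextDdl_mem I (hne n s0 hs0)) with ⟨m, _, hmeq⟩
    exact ⟨m, hmeq⟩
  · intro k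
    set τ := (I.tx k).ddl with hτ
    have key : ∀ (m : Fin N) (s0 : ℝ), π.exec? m = some s0 → (f s0 ≤ τ ↔ s0 ≤ τ) := by
      intro m s0 hs0
      constructor
      · intro h; exact (le_nextDdl I (hne m s0 hs0)).trans h
      · intro h; exact nextDdl_le I (mem_ddlSet I h)
    refine ⟨?_, ?_, ?_⟩
    · unfold QAat
      congr 1
      refine Finset.sum_congr ?_ (fun _ _ => rfl)
      apply Finset.filter_congr
      intro m _
      simp only [eq_iff_iff]
      constructor
      · rintro ⟨s, hs, hle⟩
        rcases Option.map_eq_some_iff.1 hs with ⟨s0, hs0, rfl⟩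
        exact ⟨s0, hs0, (key m s0 hs0).1 hle⟩
      · rintro ⟨s0, hs0, hle⟩
        exact ⟨f s0, Option.map_eq_some_iff.2 ⟨s0, hs0, rfl⟩, (key m s0 hs0).2 hle⟩
    · unfold pendingSet
      apply Finset.filter_congr
      intro m _
      simp only [eq_iff_iff]
      constructor
      · rintro ⟨ha, hb, hc⟩
        refine ⟨ha, ?_, fun h => hc (by simp [h])⟩
        intro s hs
        by_contra h2
        have := hb (f s) (Option.map_eq_some_iff.2 ⟨s, hs, rfl⟩)
        exact absurd this (not_lt.2 ((key m s hs).2 (not_lt.1 h2)))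
      · rintro ⟨ha, hb, hc⟩
        refine ⟨ha, ?_, fun h => hc (Option.map_eq_none_iff.1 h)⟩
        intro s hs
        rcases Option.map_eq_some_iff.1 hs with ⟨s0, hs0, rfl⟩
        exact lt_of_lt_of_le (hb s0 hs0) (le_nextDdl I (hne m s0 hs0))
    · unfold blockage
      refine Finset.sum_congr ?_ (fun _ _ => rfl)
      apply Finset.filter_congr
      intro m _
      simp [Option.map_eq_none_iff]
end

section
/- Suppose every transaction has zero buffering time (τ_n = t_n for all n, i.e. the channel has no buffers) and the fixed-amounts assumption holds. Then policy PFI minimizes the total blockage among all admissible policies at every time, along every sample path: for every admissible policy π and every time t ∈ ℝ≥0, R^{PFI}(t) ≤ R^{π}(t). -/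
open scoped Classical
open Finset

variable {N : ℕ}

namespace PFIProof

variable {N : ℕ}

/-- Direction step: effect on `A`'s balance of a fixed-amount transaction. -/
def dd (I : PCInstance N) (v : ℕ) (n : Fin N) : ℤ :=
  if (I.tx n).dir then -(v : ℤ) else (v : ℤ)

/-- Pick the next transaction to process: a feasible one from the block of
minimal arrival time, if any, else the head. -/
noncomputable def pickP (I : PCInstance N) (v : ℕ) (qa : ℤ) (l : List (Fin N))
    (n₀ : Fin N) : Fin N :=
  ((l.takeWhile fun m => decide ((I.tx m).arr = (I.tx n₀).arr)).find?
      fun m => decide (FeasAt I (I.tx m).dir v qa)).getD n₀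

lemma pickP_mem (I : PCInstance N) (v : ℕ) (qa : ℤ) (l : List (Fin N)) (n₀ : Fin N)
    (h : n₀ ∈ l) : pickP I v qa l n₀ ∈ l := by
  unfold pickP
  cases hf : ((l.takeWhile fun m => decide ((I.tx m).arr = (I.tx n₀).arr)).find?
      fun m => decide (FeasAt I (I.tx m).dir v qa)) with
  | none => simpa using h
  | some x =>
      have hx := List.mem_of_find?_eq_some hf
      have := (List.takeWhile_sublist (l := l)
        (fun m => decide ((I.tx m).arr = (I.tx n₀).arr))).mem hx
      simpa using this

/-- The greedy PFI run: process transactions in nondecreasing arrival order,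
preferring feasible transactions within each arrival instant; record for each
transaction whether it was executed. -/
noncomputable def runP (I : PCInstance N) (v : ℕ) : List (Fin N) → ℤ → List (Fin N × Bool)
  | [], _ => []
  | n₀ :: tl, qa =>
      let m := pickP I v qa (n₀ :: tl) n₀
      (m, decide (FeasAt I (I.tx m).dir v qa)) ::
        runP I v ((n₀ :: tl).erase m)
          (if FeasAt I (I.tx m).dir v qa then qa + dd I v m else qa)
  termination_by l _ => l.length
  decreasing_by
    have hm : pickP I v qa (n₀ :: tl) n₀ ∈ n₀ :: tl :=
      pickP_mem I v qa (n₀ :: tl) n₀ (by simp)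
    rw [List.length_erase_of_mem hm]
    simp

lemma runP_nil (I : PCInstance N) (v : ℕ) (qa : ℤ) : runP I v [] qa = [] := by
  simp [runP]

lemma runP_cons (I : PCInstance N) (v : ℕ) (n₀ : Fin N) (tl : List (Fin N)) (qa : ℤ) :
    runP I v (n₀ :: tl) qa =
      (pickP I v qa (n₀ :: tl) n₀,
        decide (FeasAt I (I.tx (pickP I v qa (n₀ :: tl) n₀)).dir v qa)) ::
        runP I v ((n₀ :: tl).erase (pickP I v qa (n₀ :: tl) n₀))
          (if FeasAt I (I.tx (pickP I v qa (n₀ :: tl) n₀)).dir v qa then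
              qa + dd I v (pickP I v qa (n₀ :: tl) n₀) else qa) := by
  rw [runP]

/-- The run processes exactly the input transactions. -/
lemma runP_perm (I : PCInstance N) (v : ℕ) :
    ∀ (l : List (Fin N)) (qa : ℤ), ((runP I v l qa).map Prod.fst).Perm l
  | [], qa => by simp [runP_nil]
  | n₀ :: tl, qa => by
      rw [runP_cons]
      have hm : pickP I v qa (n₀ :: tl) n₀ ∈ n₀ :: tl :=
        pickP_mem I v qa (n₀ :: tl) n₀ (by simp)
      have ih := runP_perm I v ((n₀ :: tl).erase (pickP I v qa (n₀ :: tl) n₀))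
        (if FeasAt I (I.tx (pickP I v qa (n₀ :: tl) n₀)).dir v qa then
            qa + dd I v (pickP I v qa (n₀ :: tl) n₀) else qa)
      simp only [List.map_cons]
      exact ((ih.cons _).trans (List.perm_cons_erase hm).symm)
  termination_by l _ => l.length
  decreasing_by
    have hm : pickP I v qa (n₀ :: tl) n₀ ∈ n₀ :: tl :=
      pickP_mem I v qa (n₀ :: tl) n₀ (by simp)
    rw [List.length_erase_of_mem hm]
    simp

end PFIProof
namespace PFIProof

section
variable {N : ℕ}

/-- Arrival-time comparison relation. -/
def arrLE (I : PCInstance N) (m n : Fin N) : Prop := (I.tx m).arr ≤ (I.tx n).arr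

instance (I : PCInstance N) : IsTotal (Fin N) (arrLE I) := ⟨fun a b => le_total _ _⟩
instance (I : PCInstance N) : IsTrans (Fin N) (arrLE I) := ⟨fun a b c => le_trans⟩

/-- All transactions, sorted by arrival time. -/
noncomputable def baseL (I : PCInstance N) : List (Fin N) :=
  List.insertionSort (arrLE I) Finset.univ.toList

lemma baseL_perm (I : PCInstance N) : (baseL I).Perm Finset.univ.toList :=
  List.perm_insertionSort _ _

lemma baseL_nodup (I : PCInstance N) : (baseL I).Nodup :=
  (baseL_perm I).symm.nodup (Finset.nodup_toList _)

lemma baseL_mem (I : PCInstance N) (n : Fin N) : n ∈ baseL I :=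
  (baseL_perm I).mem_iff.2 (by simp)

lemma baseL_sorted (I : PCInstance N) : (baseL I).Pairwise (arrLE I) :=
  List.pairwise_insertionSort _ _

lemma pickP_arr (I : PCInstance N) (v : ℕ) (qa : ℤ) (l : List (Fin N)) (n₀ : Fin N) :
    (I.tx (pickP I v qa l n₀)).arr = (I.tx n₀).arr := by
  unfold pickP
  cases hf : ((l.takeWhile fun m => decide ((I.tx m).arr = (I.tx n₀).arr)).find?
      fun m => decide (FeasAt I (I.tx m).dir v qa)) with
  | none => simp
  | some x =>
      have hx := List.mem_of_find?_eq_some hf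
      have := List.mem_takeWhile_imp hx
      simpa using this

/-- The run output is sorted by arrival time. -/
lemma runP_sorted (I : PCInstance N) (v : ℕ) :
    ∀ (l : List (Fin N)) (qa : ℤ), l.Pairwise (arrLE I) →
      ((runP I v l qa).map Prod.fst).Pairwise (arrLE I)
  | [], qa, _ => by simp [runP_nil]
  | n₀ :: tl, qa, hs => by
      have hm : pickP I v qa (n₀ :: tl) n₀ ∈ n₀ :: tl :=
        pickP_mem I v qa (n₀ :: tl) n₀ (by simp)
      have hse : ((n₀ :: tl).erase (pickP I v qa (n₀ :: tl) n₀)).Pairwise (arrLE I) :=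
        hs.sublist List.erase_sublist
      have ih := runP_sorted I v ((n₀ :: tl).erase (pickP I v qa (n₀ :: tl) n₀))
        (if FeasAt I (I.tx (pickP I v qa (n₀ :: tl) n₀)).dir v qa then
            qa + dd I v (pickP I v qa (n₀ :: tl) n₀) else qa) hse
      rw [runP_cons]
      simp only [List.map_cons]
      refine List.Pairwise.cons (fun y hy => ?_) ih
      have hy' : y ∈ (n₀ :: tl).erase (pickP I v qa (n₀ :: tl) n₀) :=
        (runP_perm I v _ _).mem_iff.1 (by simpa using hy)
      have hyl : y ∈ n₀ :: tl := List.erase_sublist.mem hy'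
      have : arrLE I n₀ y := by
        rcases List.mem_cons.1 hyl with h | h
        · subst h; exact le_refl _
        · exact List.rel_of_pairwise_cons hs h
      unfold arrLE at this ⊢
      rw [pickP_arr]
      exact this
  termination_by l _ => l.length
  decreasing_by
    have hm : pickP I v qa (n₀ :: tl) n₀ ∈ n₀ :: tl :=
      pickP_mem I v qa (n₀ :: tl) n₀ (by simp)
    rw [List.length_erase_of_mem hm]
    simp

/-- State evolution along a trace. -/
def stA (I : PCInstance N) (v : ℕ) (qa : ℤ) (l : List (Fin N × Bool)) : ℤ :=
  l.foldl (fun q s => if s.2 then q + dd I v s.1 else q) qa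

@[simp] lemma stA_nil (I : PCInstance N) (v : ℕ) (qa : ℤ) : stA I v qa [] = qa := rfl

lemma stA_cons (I : PCInstance N) (v : ℕ) (qa : ℤ) (s : Fin N × Bool)
    (rest : List (Fin N × Bool)) :
    stA I v qa (s :: rest) = stA I v (if s.2 then qa + dd I v s.1 else qa) rest := rfl

lemma stA_append (I : PCInstance N) (v : ℕ)
    (l₁ l₂ : List (Fin N × Bool)) (qa : ℤ) :
      stA I v qa (l₁ ++ l₂) = stA I v (stA I v qa l₁) l₂ :=
  List.foldl_append

/-- Greedy trace predicate: each step executes iff feasible at the running state. -/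
def IsTrace (I : PCInstance N) (v : ℕ) : ℤ → List (Fin N × Bool) → Prop
  | _, [] => True
  | qa, s :: rest =>
      (s.2 = true ↔ FeasAt I (I.tx s.1).dir v qa) ∧
        IsTrace I v (if s.2 then qa + dd I v s.1 else qa) rest

lemma runP_trace (I : PCInstance N) (v : ℕ) :
    ∀ (l : List (Fin N)) (qa : ℤ), IsTrace I v qa (runP I v l qa)
  | [], qa => by simp [runP_nil, IsTrace]
  | n₀ :: tl, qa => by
      have hm : pickP I v qa (n₀ :: tl) n₀ ∈ n₀ :: tl :=
        pickP_mem I v qa (n₀ :: tl) n₀ (by simp)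
      rw [runP_cons]
      refine ⟨by simp, ?_⟩
      have ih := runP_trace I v ((n₀ :: tl).erase (pickP I v qa (n₀ :: tl) n₀))
        (if FeasAt I (I.tx (pickP I v qa (n₀ :: tl) n₀)).dir v qa then
            qa + dd I v (pickP I v qa (n₀ :: tl) n₀) else qa)
      by_cases hF : FeasAt I (I.tx (pickP I v qa (n₀ :: tl) n₀)).dir v qa <;>
        simpa [hF] using ih
  termination_by l _ => l.length
  decreasing_by
    have hm : pickP I v qa (n₀ :: tl) n₀ ∈ n₀ :: tl :=
      pickP_mem I v qa (n₀ :: tl) n₀ (by simp)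
    rw [List.length_erase_of_mem hm]
    simp

lemma IsTrace_append (I : PCInstance N) (v : ℕ) :
    ∀ (l₁ l₂ : List (Fin N × Bool)) (qa : ℤ), IsTrace I v qa (l₁ ++ l₂) →
      IsTrace I v qa l₁ ∧ IsTrace I v (stA I v qa l₁) l₂
  | [], l₂, qa, h => ⟨trivial, h⟩
  | s :: l₁, l₂, qa, h => by
      obtain ⟨h1, h2⟩ := h
      obtain ⟨ha, hb⟩ := IsTrace_append I v l₁ l₂ _ h2
      exact ⟨⟨h1, ha⟩, by rwa [stA_cons]⟩

/-- Extract the decision of the step at a given split point of a trace. -/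
lemma trace_at (I : PCInstance N) (v : ℕ) (qa : ℤ) (pre suf : List (Fin N × Bool))
    (s : Fin N × Bool) (h : IsTrace I v qa (pre ++ s :: suf)) :
    s.2 = true ↔ FeasAt I (I.tx s.1).dir v (stA I v qa pre) :=
  ((IsTrace_append I v pre (s :: suf) qa h).2).1

end
end PFIProof
namespace PFIProof

section
variable {N : ℕ}

/-- A generic helper: in a list whose first components are distinct, the boolean
attached to a given first component is unique. -/
lemma snd_unique {α : Type*} : ∀ {L : List (α × Bool)}, (L.map Prod.fst).Nodup →
    ∀ {a : α} {b b' : Bool}, (a, b) ∈ L → (a, b') ∈ L → b = b'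
  | [], _, _, _, _, h, _ => by simp at h
  | x :: tl, hnd, a, b, b', hb, hb' => by
      simp only [List.map_cons, List.nodup_cons] at hnd
      rcases List.mem_cons.1 hb with h1 | h1 <;> rcases List.mem_cons.1 hb' with h2 | h2
      · exact (Prod.ext_iff.1 (h1.trans h2.symm)).2
      · exfalso; apply hnd.1; rw [← h1]
        exact List.mem_map.2 ⟨_, h2, rfl⟩
      · exfalso; apply hnd.1; rw [← h2]
        exact List.mem_map.2 ⟨_, h1, rfl⟩
      · exact snd_unique hnd.2 h1 h2

lemma indexOf_append_cons {α : Type*} [DecidableEq α] :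
    ∀ (l₁ : List α) (a : α) (l₂ : List α), a ∉ l₁ →
      List.idxOf a (l₁ ++ a :: l₂) = l₁.length
  | [], a, l₂, _ => by simp
  | x :: l₁, a, l₂, h => by
      have hxa : x ≠ a := fun hh => h (by simp [hh])
      simp only [List.cons_append, List.length_cons]
      rw [List.idxOf_cons_ne _ hxa,
        indexOf_append_cons l₁ a l₂ (fun hh => h (List.mem_cons_of_mem _ hh))]

/-- The full greedy PFI run output. -/
noncomputable def outL (I : PCInstance N) (v : ℕ) : List (Fin N × Bool) :=
  runP I v (baseL I) (I.QA0 : ℤ)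

lemma outL_perm (I : PCInstance N) (v : ℕ) : ((outL I v).map Prod.fst).Perm (baseL I) :=
  runP_perm I v _ _

lemma outL_fst_nodup (I : PCInstance N) (v : ℕ) : ((outL I v).map Prod.fst).Nodup :=
  (outL_perm I v).symm.nodup (baseL_nodup I)

lemma mem_fst_outL (I : PCInstance N) (v : ℕ) (n : Fin N) : n ∈ (outL I v).map Prod.fst :=
  (outL_perm I v).mem_iff.2 (baseL_mem I n)

lemma outL_sorted (I : PCInstance N) (v : ℕ) : ((outL I v).map Prod.fst).Pairwise (arrLE I) :=
  runP_sorted I v _ _ (baseL_sorted I)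

lemma outL_trace (I : PCInstance N) (v : ℕ) : IsTrace I v (I.QA0 : ℤ) (outL I v) :=
  runP_trace I v _ _

/-- The PFI policy built from the greedy run. -/
noncomputable def Ppol (I : PCInstance N) (v : ℕ) : Policy N where
  exec? n := if (n, true) ∈ outL I v then some (I.tx n).arr else none
  ord n := List.idxOf n ((outL I v).map Prod.fst)
  ord_inj := fun m n h =>
    (List.idxOf_inj (mem_fst_outL I v m)).1 h

lemma Ppol_ord_lt (I : PCInstance N) (v : ℕ) (n : Fin N) :
    (Ppol I v).ord n < (outL I v).length := by
  have := List.idxOf_lt_length_iff.2 (mem_fst_outL I v n)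
  simpa [Ppol] using this

lemma Ppol_fst_at_ord (I : PCInstance N) (v : ℕ) (n : Fin N) :
    ((outL I v).get ⟨(Ppol I v).ord n, Ppol_ord_lt I v n⟩).1 = n := by
  have h : List.idxOf n ((outL I v).map Prod.fst) < ((outL I v).map Prod.fst).length :=
    List.idxOf_lt_length_iff.2 (mem_fst_outL I v n)
  have h2 := List.getElem_idxOf h
  rw [List.getElem_map] at h2
  simpa [Ppol, List.get_eq_getElem] using h2

lemma Ppol_exec_some (I : PCInstance N) (v : ℕ) {n : Fin N} {s : ℝ}
    (h : (Ppol I v).exec? n = some s) : s = (I.tx n).arr ∧ (n, true) ∈ outL I v := by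
  by_cases hm : (n, true) ∈ outL I v
  · simp only [Ppol, if_pos hm, Option.some.injEq] at h
    exact ⟨h.symm, hm⟩
  · simp [Ppol, if_neg hm] at h

lemma Ppol_exec_isSome_iff (I : PCInstance N) (v : ℕ) (n : Fin N) :
    ((Ppol I v).exec? n).isSome ↔ (n, true) ∈ outL I v := by
  by_cases hm : (n, true) ∈ outL I v <;> simp [Ppol, hm]

lemma Ppol_exec_none_iff (I : PCInstance N) (v : ℕ) (n : Fin N) :
    (Ppol I v).exec? n = none ↔ (n, false) ∈ outL I v := by
  obtain ⟨p, hp, hfst⟩ := List.mem_map.1 (mem_fst_outL I v n)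
  constructor
  · intro h
    by_cases hm : (n, true) ∈ outL I v
    · simp [Ppol, hm] at h
    · have hp' : (p.1, p.2) ∈ outL I v := by simpa using hp
      cases hb : p.2
      · rw [hfst, hb] at hp'; exact hp'
      · rw [hfst, hb] at hp'; exact absurd hp' hm
  · intro h
    by_cases hm : (n, true) ∈ outL I v
    · exact absurd (snd_unique (outL_fst_nodup I v) hm h) (by simp)
    · simp [Ppol, hm]

/-- On a sorted list, index order is compatible with arrival order. -/
lemma arrLE_of_indexOf_le (I : PCInstance N) (v : ℕ) {m n : Fin N}
    (h : (Ppol I v).ord m ≤ (Ppol I v).ord n) : (I.tx m).arr ≤ (I.tx n).arr := by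
  rcases eq_or_lt_of_le h with heq | hlt
  · have : m = n := (Ppol I v).ord_inj heq
    exact this ▸ le_refl _
  · have hs := outL_sorted I v
    have hm : List.idxOf m ((outL I v).map Prod.fst) < ((outL I v).map Prod.fst).length :=
      List.idxOf_lt_length_iff.2 (mem_fst_outL I v m)
    have hn : List.idxOf n ((outL I v).map Prod.fst) < ((outL I v).map Prod.fst).length :=
      List.idxOf_lt_length_iff.2 (mem_fst_outL I v n)
    have h3 := hs.rel_get_of_lt (a := ⟨_, hm⟩) (b := ⟨_, hn⟩)
      (by simpa [Ppol, Fin.mk_lt_mk] using hlt)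
    rw [List.get_eq_getElem, List.get_eq_getElem, List.getElem_idxOf,
      List.getElem_idxOf] at h3
    exact h3

lemma ord_lt_of_arr_lt (I : PCInstance N) (v : ℕ) {m n : Fin N}
    (h : (I.tx m).arr < (I.tx n).arr) : (Ppol I v).ord m < (Ppol I v).ord n := by
  by_contra hc
  exact absurd (arrLE_of_indexOf_le I v (not_lt.1 hc)) (not_le.2 h)

end
end PFIProof
namespace PFIProof

section
variable {N : ℕ}

lemma delta_eq_dd (I : PCInstance N) (v : ℕ) (hv : ∀ n, (I.tx n).amt = v) (n : Fin N) :
    delta (I.tx n) = dd I v n := by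
  simp [delta, dd, hv n]

/-- Bridge: the balance determined by the finset sum over executed transactions of
order less than a prefix length equals the trace state after that prefix. -/
lemma qa_sum_prefix (I : PCInstance N) (v : ℕ) (hv : ∀ n, (I.tx n).amt = v)
    (pre : List (Fin N × Bool)) : ∀ suf, outL I v = pre ++ suf →
    (I.QA0 : ℤ) + ∑ m ∈ univ.filter
        (fun m : Fin N => ((Ppol I v).exec? m).isSome ∧ (Ppol I v).ord m < pre.length),
        delta (I.tx m) = stA I v (I.QA0 : ℤ) pre := by
  induction pre using List.reverseRecOn with
  | nil => intro suf h; simp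
  | append_singleton pre' s ih =>
    intro suf h
    rw [List.append_assoc] at h
    have h' : outL I v = pre' ++ s :: suf := by simpa using h
    have ihe := ih (s :: suf) (by simpa using h)
    have hnd := outL_fst_nodup I v
    rw [h', List.map_append, List.map_cons] at hnd
    have hs1 : s.1 ∉ pre'.map Prod.fst := by
      intro hmem
      exact (List.disjoint_of_nodup_append hnd) hmem (by simp)
    have hordk : (Ppol I v).ord s.1 = pre'.length := by
      show List.idxOf s.1 ((outL I v).map Prod.fst) = pre'.length
      rw [h', List.map_append, List.map_cons, indexOf_append_cons _ _ _ hs1,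
        List.length_map]
    have hmem_s : (s.1, s.2) ∈ outL I v := by rw [h']; simp
    have hord_eq : ∀ m : Fin N, (Ppol I v).ord m = pre'.length → m = s.1 := fun m hm =>
      (Ppol I v).ord_inj (hm.trans hordk.symm)
    have hsome_s : ((Ppol I v).exec? s.1).isSome ↔ s.2 = true := by
      rw [Ppol_exec_isSome_iff]
      constructor
      · intro hmem; exact (snd_unique (outL_fst_nodup I v) hmem hmem_s).symm
      · intro h2; rwa [h2] at hmem_s
    have hlen : (pre' ++ [s]).length = pre'.length + 1 := by simp
    rw [stA_append, hlen]
    cases hb : s.2 with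
    | true =>
      have hset : univ.filter
          (fun m : Fin N => ((Ppol I v).exec? m).isSome ∧ (Ppol I v).ord m < pre'.length + 1)
          = insert s.1 (univ.filter
          (fun m : Fin N => ((Ppol I v).exec? m).isSome ∧ (Ppol I v).ord m < pre'.length)) := by
        ext m
        simp only [Finset.mem_filter, Finset.mem_insert, Finset.mem_univ, true_and]
        constructor
        · rintro ⟨hsm, hlt⟩
          rcases Nat.lt_succ_iff_lt_or_eq.1 hlt with h' | h'
          · exact Or.inr ⟨hsm, h'⟩
          · exact Or.inl (hord_eq m h')
        · rintro (rfl | ⟨hsm, hlt⟩)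
          · exact ⟨hsome_s.2 hb, by rw [hordk]; exact Nat.lt_succ_self _⟩
          · exact ⟨hsm, Nat.lt_succ_of_lt hlt⟩
      have hnotmem : s.1 ∉ univ.filter
          (fun m : Fin N => ((Ppol I v).exec? m).isSome ∧ (Ppol I v).ord m < pre'.length) := by
        simp only [Finset.mem_filter]
        rintro ⟨-, ⟨-, hlt⟩⟩
        rw [hordk] at hlt; exact lt_irrefl _ hlt
      rw [hset, Finset.sum_insert hnotmem, delta_eq_dd I v hv]
      have : stA I v (stA I v (I.QA0 : ℤ) pre') [s] = stA I v (I.QA0 : ℤ) pre' + dd I v s.1 := by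
        simp [stA, hb]
      rw [this, ← ihe]; ring
    | false =>
      have hset : univ.filter
          (fun m : Fin N => ((Ppol I v).exec? m).isSome ∧ (Ppol I v).ord m < pre'.length + 1)
          = univ.filter
          (fun m : Fin N => ((Ppol I v).exec? m).isSome ∧ (Ppol I v).ord m < pre'.length) := by
        ext m
        simp only [Finset.mem_filter, Finset.mem_univ, true_and]
        constructor
        · rintro ⟨hsm, hlt⟩
          rcases Nat.lt_succ_iff_lt_or_eq.1 hlt with h' | h'
          · exact ⟨hsm, h'⟩
          · exfalso; rw [hord_eq m h'] at hsm
            rw [hsome_s, hb] at hsm; exact Bool.false_ne_true hsm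
        · rintro ⟨hsm, hlt⟩; exact ⟨hsm, Nat.lt_succ_of_lt hlt⟩
      have : stA I v (stA I v (I.QA0 : ℤ) pre') [s] = stA I v (I.QA0 : ℤ) pre' := by
        simp [stA, hb]
      rw [hset, this, ← ihe]
  
lemma QAbefore_eq (I : PCInstance N) (v : ℕ) (hv : ∀ n, (I.tx n).amt = v) (n : Fin N) :
    QAbefore I (Ppol I v) n =
      stA I v (I.QA0 : ℤ) ((outL I v).take ((Ppol I v).ord n)) := by
  have hlen : (Ppol I v).ord n ≤ (outL I v).length := le_of_lt (Ppol_ord_lt I v n)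
  have h := qa_sum_prefix I v hv ((outL I v).take ((Ppol I v).ord n))
    ((outL I v).drop ((Ppol I v).ord n)) (List.take_append_drop _ _).symm
  rw [List.length_take, min_eq_left hlen] at h
  exact h

lemma executed_iff_feas (I : PCInstance N) (v : ℕ) (n : Fin N) :
    ((n, true) ∈ outL I v) ↔
      FeasAt I (I.tx n).dir v
        (stA I v (I.QA0 : ℤ) ((outL I v).take ((Ppol I v).ord n))) := by
  have hi : (Ppol I v).ord n < (outL I v).length := Ppol_ord_lt I v n
  have hsplit : outL I v = (outL I v).take ((Ppol I v).ord n) ++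
      (outL I v)[(Ppol I v).ord n] :: (outL I v).drop ((Ppol I v).ord n + 1) := by
    rw [← List.drop_eq_getElem_cons hi, List.take_append_drop]
  have hdec := trace_at I v (I.QA0 : ℤ) ((outL I v).take ((Ppol I v).ord n))
    ((outL I v).drop ((Ppol I v).ord n + 1)) ((outL I v)[(Ppol I v).ord n])
    (by rw [← hsplit]; exact outL_trace I v)
  have hfst : ((outL I v)[(Ppol I v).ord n]).1 = n := by
    have := Ppol_fst_at_ord I v n
    simpa [List.get_eq_getElem] using this
  rw [hfst] at hdec
  constructor
  · intro hmem
    have hmem2 : (n, ((outL I v)[(Ppol I v).ord n]).2) ∈ outL I v := by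
      have := List.getElem_mem hi
      rwa [show (outL I v)[(Ppol I v).ord n] =
        (n, ((outL I v)[(Ppol I v).ord n]).2) from Prod.ext hfst rfl] at this
    have := snd_unique (outL_fst_nodup I v) hmem hmem2
    exact hdec.1 this.symm
  · intro hF
    have h2 := hdec.2 hF
    have : (outL I v)[(Ppol I v).ord n] = (n, true) := Prod.ext hfst h2
    rw [← this]
    exact List.getElem_mem hi

lemma Ppol_admissible (I : PCInstance N) (v : ℕ) (hv : ∀ n, (I.tx n).amt = v) :
    Admissible I (Ppol I v) := by
  refine ⟨?_, ?_, ?_⟩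
  · intro m n sm sn hm hn hlt
    obtain ⟨rfl, -⟩ := Ppol_exec_some I v hm
    obtain ⟨rfl, -⟩ := Ppol_exec_some I v hn
    exact ord_lt_of_arr_lt I v hlt
  · intro n s h
    obtain ⟨rfl, -⟩ := Ppol_exec_some I v h
    exact ⟨le_refl _, (I.tx n).arr_le_ddl⟩
  · intro n hsome
    have hmem := (Ppol_exec_isSome_iff I v n).1 hsome
    rw [hv n, QAbefore_eq I v hv]
    exact (executed_iff_feas I v n).1 hmem

lemma QApre_arr_eq (I : PCInstance N) (v : ℕ) (n : Fin N) :
    QApre I (Ppol I v) n ((I.tx n).arr) = QAbefore I (Ppol I v) n := by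
  unfold QApre QAbefore
  congr 1
  apply Finset.sum_congr _ (fun _ _ => rfl)
  ext m
  simp only [Finset.mem_filter, Finset.mem_univ, true_and]
  constructor
  · rintro ⟨s, hs, hcase⟩
    obtain ⟨rfl, -⟩ := Ppol_exec_some I v hs
    refine ⟨by rw [hs]; rfl, ?_⟩
    rcases hcase with h' | ⟨-, h'⟩
    · exact ord_lt_of_arr_lt I v h'
    · exact h'
  · rintro ⟨hsome, hord⟩
    obtain ⟨s, hs⟩ := Option.isSome_iff_exists.1 hsome
    obtain ⟨rfl, -⟩ := Ppol_exec_some I v hs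
    refine ⟨_, hs, ?_⟩
    rcases lt_or_eq_of_le (arrLE_of_indexOf_le I v (le_of_lt hord)) with h' | h'
    · exact Or.inl h'
    · exact Or.inr ⟨h', hord⟩

lemma Ppol_isPFI (I : PCInstance N) (v : ℕ) (hv : ∀ n, (I.tx n).amt = v) :
    IsPFI I (Ppol I v) := by
  refine ⟨Ppol_admissible I v hv, fun n => ?_⟩
  by_cases hmem : (n, true) ∈ outL I v
  · left
    constructor
    · simp [Ppol, hmem]
    · rw [hv n, QAbefore_eq I v hv]
      exact (executed_iff_feas I v n).1 hmem
  · right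
    constructor
    · simp [Ppol, hmem]
    · rw [hv n, QApre_arr_eq I v, QAbefore_eq I v hv]
      exact fun hF => hmem ((executed_iff_feas I v n).2 hF)

end
end PFIProof
namespace PFIProof

section
variable {N : ℕ}

/-- Common residue of all reachable balances. -/
def rhoI (I : PCInstance N) (v : ℕ) : ℤ := (I.QA0 : ℤ) % v

/-- Lowest reachable balance. -/
def LbI (I : PCInstance N) (v : ℕ) : ℤ := rhoI I v

/-- Highest reachable balance. -/
def UbI (I : PCInstance N) (v : ℕ) : ℤ :=
  (I.cap : ℤ) - ((I.cap : ℤ) - (I.QA0 : ℤ)) % v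

lemma emod_le_self {x v : ℤ} (hv : 0 < v) (hx : 0 ≤ x) : x % v ≤ x := by
  rw [Int.emod_def]
  have h : 0 ≤ v * (x / v) := mul_nonneg hv.le (Int.ediv_nonneg hx hv.le)
  linarith

lemma emod_le_sub {x v : ℤ} (hv : 0 < v) (hx : v ≤ x) : x % v ≤ x - v := by
  have h1 : 1 ≤ x / v := by
    rw [Int.le_ediv_iff_mul_le hv]; linarith
  have h2 : v * 1 ≤ v * (x / v) := mul_le_mul_of_nonneg_left h1 hv.le
  rw [Int.emod_def]; linarith

section LU
variable (I : PCInstance N) (v : ℕ)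

lemma rho_nonneg (hv : 1 ≤ v) : 0 ≤ rhoI I v :=
  Int.emod_nonneg _ (by positivity)

lemma rho_lt (hv : 1 ≤ v) : rhoI I v < v :=
  Int.emod_lt_of_pos _ (by exact_mod_cast hv)

lemma rho_mod (hv : 1 ≤ v) : rhoI I v % v = rhoI I v :=
  Int.emod_emod_of_dvd _ (dvd_refl _)

lemma Ub_mod (hv : 1 ≤ v) : UbI I v % v = rhoI I v := by
  have hvpos : (0:ℤ) < v := by exact_mod_cast hv
  unfold UbI rhoI
  rw [Int.sub_emod, Int.emod_emod_of_dvd _ (dvd_refl _), ← Int.sub_emod]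
  rw [show (I.cap : ℤ) - ((I.cap : ℤ) - I.QA0) = (I.QA0 : ℤ) by ring]

lemma Lb_le_Ub_of_fix (hv : 1 ≤ v) (hvc : v ≤ I.cap)
    (hinit : v ≤ I.QA0 ∨ v + I.QA0 ≤ I.cap) : LbI I v + v ≤ UbI I v := by
  have hvpos : (0:ℤ) < v := by exact_mod_cast hv
  rcases hinit with h | h
  · have h' : (v:ℤ) ≤ I.QA0 := by exact_mod_cast h
    have h1 : LbI I v + v ≤ (I.QA0 : ℤ) := by
      have := emod_le_sub hvpos h'
      unfold LbI rhoI; linarith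
    have h2 : (I.QA0 : ℤ) ≤ UbI I v := by
      have hc : (0:ℤ) ≤ (I.cap : ℤ) - I.QA0 :=
        sub_nonneg.2 (by exact_mod_cast I.QA0_le)
      have := emod_le_self hvpos hc
      unfold UbI; linarith
    linarith
  · have h' : (v:ℤ) + I.QA0 ≤ I.cap := by exact_mod_cast h
    have h1 : LbI I v ≤ (I.QA0 : ℤ) := by
      have := emod_le_self hvpos (by positivity : (0:ℤ) ≤ (I.QA0 : ℤ))
      unfold LbI rhoI; linarith
    have h2 : (I.QA0 : ℤ) + v ≤ UbI I v := by
      have hc : (v:ℤ) ≤ (I.cap : ℤ) - I.QA0 := by linarith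
      have := emod_le_sub hvpos hc
      unfold UbI; linarith
    linarith

/-- A balance in `[0, cap]` with the right residue lies in `[Lb, Ub]`. -/
lemma mem_LU_of_range (hv : 1 ≤ v) {qa : ℤ} (h0 : 0 ≤ qa) (hc : qa ≤ I.cap)
    (hres : qa % v = rhoI I v) : LbI I v ≤ qa ∧ qa ≤ UbI I v := by
  have hvpos : (0:ℤ) < v := by exact_mod_cast hv
  constructor
  · have := emod_le_self hvpos h0
    rw [hres] at this
    exact this
  · have hsub : ((I.cap : ℤ) - qa) % v = ((I.cap : ℤ) - I.QA0) % v := by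
      rw [Int.sub_emod, hres, Int.sub_emod ((I.cap:ℤ)) (I.QA0:ℤ)]
      rfl
    have h0' : (0:ℤ) ≤ (I.cap : ℤ) - qa := by linarith
    have := emod_le_self hvpos h0'
    rw [hsub] at this
    unfold UbI
    linarith

/-- At an infeasible `A→B` step, the balance is at the lower boundary. -/
lemma eq_Lb_of_notFeasA (hv : 1 ≤ v) {qa : ℤ} (h1 : LbI I v ≤ qa)
    (hres : qa % v = rhoI I v) (hF : ¬ ((v:ℤ) ≤ qa)) : qa = LbI I v := by
  have hvpos : (0:ℤ) < v := by exact_mod_cast hv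
  have hd : (qa - rhoI I v) % v = 0 := by
    rw [Int.sub_emod, hres, rho_mod I v hv, sub_self, Int.zero_emod]
  have h2 : 0 ≤ qa - rhoI I v := by unfold LbI at h1; linarith
  have h3 : qa - rhoI I v < v := by
    have := rho_nonneg I v hv
    linarith [not_le.1 hF]
  have := Int.emod_eq_of_lt h2 h3
  rw [hd] at this
  unfold LbI
  linarith

/-- At an infeasible `B→A` step, the balance is at the upper boundary. -/
lemma eq_Ub_of_notFeasB (hv : 1 ≤ v) {qa : ℤ} (h2 : qa ≤ UbI I v)
    (hres : qa % v = rhoI I v) (hF : ¬ (qa ≤ (I.cap : ℤ) - v)) : qa = UbI I v := by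
  have hvpos : (0:ℤ) < v := by exact_mod_cast hv
  have hd : (UbI I v - qa) % v = 0 := by
    rw [Int.sub_emod, hres, Ub_mod I v hv, sub_self, Int.zero_emod]
  have h0 : 0 ≤ UbI I v - qa := by linarith
  have h3 : UbI I v - qa < v := by
    have hUb : UbI I v ≤ (I.cap : ℤ) := by
      have := Int.emod_nonneg (b := (v:ℤ)) ((I.cap : ℤ) - I.QA0) (by positivity)
      unfold UbI; linarith
    linarith [not_le.1 hF]
  have := Int.emod_eq_of_lt h0 h3
  rw [hd] at this
  linarith

/-- Executing a feasible transaction keeps the balance within `[Lb, Ub]` and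
preserves the residue. -/
lemma step_mem (hv : 1 ≤ v) {qa : ℤ} (m : Fin N) (h1 : LbI I v ≤ qa) (h2 : qa ≤ UbI I v)
    (hres : qa % v = rhoI I v) (hF : FeasAt I (I.tx m).dir v qa) :
    LbI I v ≤ qa + dd I v m ∧ qa + dd I v m ≤ UbI I v ∧ (qa + dd I v m) % v = rhoI I v := by
  have hvpos : (0:ℤ) < v := by exact_mod_cast hv
  have hres' : ∀ z : ℤ, (qa + z * v) % v = rhoI I v := fun z => by
    rw [Int.add_mul_emod_self_right, hres]
  cases hdir : (I.tx m).dir with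
  | true =>
      rw [FeasAt, if_pos hdir] at hF
      have hdd : dd I v m = -(v:ℤ) := by simp [dd, hdir]
      have hresn : (qa + dd I v m) % v = rhoI I v := by
        rw [hdd, show qa + -(v:ℤ) = qa + (-1) * v by ring]; exact hres' (-1)
      refine ⟨?_, by rw [hdd]; linarith, hresn⟩
      have h0 : 0 ≤ qa + dd I v m := by rw [hdd]; linarith
      have := emod_le_self hvpos h0
      rw [hresn] at this
      exact this
  | false =>
      rw [FeasAt, if_neg (by simp [hdir])] at hF
      have hdd : dd I v m = (v:ℤ) := by simp [dd, hdir]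
      have hresn : (qa + dd I v m) % v = rhoI I v := by
        rw [hdd, show qa + (v:ℤ) = qa + 1 * v by ring]; exact hres' 1
      refine ⟨by rw [hdd]; unfold LbI at h1 ⊢; linarith, ?_, hresn⟩
      have hcap : qa + dd I v m ≤ (I.cap : ℤ) := by rw [hdd]; linarith
      have h0 : 0 ≤ qa + dd I v m := by
        rw [hdd]
        have : (0:ℤ) ≤ LbI I v := rho_nonneg I v hv
        linarith
      exact (mem_LU_of_range I v hv h0 hcap hresn).2

end LU
end
end PFIProof
namespace PFIProof

section
variable {N : ℕ}

lemma takeWhile_eq_left {α : Type*} (p : α → Bool) :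
    ∀ (l₁ l₂ : List α), (∀ x ∈ l₁, p x = true) → (∀ x ∈ l₂, p x = false) →
      (l₁ ++ l₂).takeWhile p = l₁
  | [], l₂, _, h2 => by
      cases l₂ with
      | nil => rfl
      | cons y t => simp [List.takeWhile_cons, h2 y (by simp)]
  | x :: l₁, l₂, h1, h2 => by
      simp only [List.cons_append, List.takeWhile_cons, h1 x (by simp), if_true]
      rw [takeWhile_eq_left p l₁ l₂ (fun z hz => h1 z (by simp [hz])) h2]

/-- Net effect of a block of fixed-amount transactions on the balance. -/
def netL (I : PCInstance N) (v : ℕ) (bl : List (Fin N)) : ℤ := (bl.map (dd I v)).sum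

/-- Number of executed transactions in a trace segment. -/
def cntT {N : ℕ} (steps : List ((Fin N) × Bool)) : ℕ :=
  (steps.filter (fun s => s.2)).length

@[simp] lemma netL_nil (I : PCInstance N) (v : ℕ) : netL I v [] = 0 := rfl

lemma netL_erase (I : PCInstance N) (v : ℕ) {m : Fin N} {bl : List (Fin N)}
    (hm : m ∈ bl) : netL I v bl = dd I v m + netL I v (bl.erase m) := by
  have hperm : bl.Perm (m :: bl.erase m) := List.perm_cons_erase hm
  have := (hperm.map (dd I v)).sum_eq
  simpa [netL] using this

lemma netL_allA (I : PCInstance N) (v : ℕ) : ∀ (bl : List (Fin N)),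
    (∀ x ∈ bl, (I.tx x).dir = true) → netL I v bl = -((v:ℤ) * bl.length)
  | [], _ => by simp
  | x :: bl, h => by
      have hx := h x (by simp)
      have ih := netL_allA I v bl (fun z hz => h z (by simp [hz]))
      simp only [netL, List.map_cons, List.sum_cons] at ih ⊢
      rw [ih, dd, hx]
      simp only [if_true, List.length_cons]
      push_cast; ring

lemma netL_allB (I : PCInstance N) (v : ℕ) : ∀ (bl : List (Fin N)),
    (∀ x ∈ bl, (I.tx x).dir = false) → netL I v bl = (v:ℤ) * bl.length
  | [], _ => by simp
  | x :: bl, h => by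
      have hx := h x (by simp)
      have ih := netL_allB I v bl (fun z hz => h z (by simp [hz]))
      simp only [netL, List.map_cons, List.sum_cons] at ih ⊢
      rw [ih, dd, hx]
      simp only [Bool.false_eq_true, if_false, List.length_cons]
      push_cast; ring

@[simp] lemma cntT_nil {N : ℕ} : cntT ([] : List (Fin N × Bool)) = 0 := rfl

lemma cntT_cons_true {N : ℕ} (m : Fin N) (s : List (Fin N × Bool)) :
    cntT ((m, true) :: s) = cntT s + 1 := by
  simp [cntT, List.filter]

lemma cntT_cons_false {N : ℕ} (m : Fin N) (s : List (Fin N × Bool)) :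
    cntT ((m, false) :: s) = cntT s := by
  simp [cntT, List.filter]

/-- **Block lemma.** Processing the block of transactions arriving at one instant,
the greedy run executes as many as possible: the final balance is the clamp of
`qa + netL bl` to `[Lb, Ub]`, and the executed volume is `v·|bl|` minus the
clamped excess. -/
lemma runblock (I : PCInstance N) (v : ℕ) (hv : 1 ≤ v)
    (hLU : LbI I v + v ≤ UbI I v) :
    ∀ (bl rest : List (Fin N)) (qa : ℤ),
    (∀ x ∈ rest, (∀ y ∈ bl, (I.tx y).arr < (I.tx x).arr)) →
    (∀ x ∈ bl, ∀ y ∈ bl, (I.tx x).arr = (I.tx y).arr) →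
    LbI I v ≤ qa → qa ≤ UbI I v → qa % v = rhoI I v →
    ∃ (steps : List (Fin N × Bool)) (qa' : ℤ),
      runP I v (bl ++ rest) qa = steps ++ runP I v rest qa' ∧
      (steps.map Prod.fst).Perm bl ∧
      stA I v qa steps = qa' ∧
      qa' = max (LbI I v) (min (UbI I v) (qa + netL I v bl)) ∧
      (v:ℤ) * cntT steps = v * bl.length - |qa + netL I v bl - qa'| := by
  suffices H : ∀ (k : ℕ) (bl rest : List (Fin N)) (qa : ℤ), bl.length ≤ k →
      (∀ x ∈ rest, (∀ y ∈ bl, (I.tx y).arr < (I.tx x).arr)) →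
      (∀ x ∈ bl, ∀ y ∈ bl, (I.tx x).arr = (I.tx y).arr) →
      LbI I v ≤ qa → qa ≤ UbI I v → qa % v = rhoI I v →
      ∃ (steps : List (Fin N × Bool)) (qa' : ℤ),
        runP I v (bl ++ rest) qa = steps ++ runP I v rest qa' ∧
        (steps.map Prod.fst).Perm bl ∧
        stA I v qa steps = qa' ∧
        qa' = max (LbI I v) (min (UbI I v) (qa + netL I v bl)) ∧
        (v:ℤ) * cntT steps = v * bl.length - |qa + netL I v bl - qa'| by
    intro bl rest qa hrest hblk h1 h2 h3
    exact H bl.length bl rest qa le_rfl hrest hblk h1 h2 h3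
  intro k
  induction k with
  | zero =>
      intro bl rest qa hk _ _ h1 h2 _
      have hbl : bl = [] := List.eq_nil_of_length_eq_zero (Nat.le_zero.1 hk)
      subst hbl
      refine ⟨[], qa, by simp, by simp, by simp, ?_, by simp⟩
      rw [netL_nil, add_zero, min_eq_right h2, max_eq_right h1]
  | succ k ih =>
      intro bl rest qa hk hrest hblk h1 h2 h3
      cases bl with
      | nil =>
          refine ⟨[], qa, by simp, by simp, by simp, ?_, by simp⟩
          rw [netL_nil, add_zero, min_eq_right h2, max_eq_right h1]
      | cons b₀ bl' =>
      have hk' : bl'.length ≤ k := by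
        simp only [List.length_cons] at hk; omega
      have hvpos : (0:ℤ) < v := by exact_mod_cast hv
      have hbmem : b₀ ∈ b₀ :: bl' := by simp
      have htw : ((b₀ :: bl') ++ rest).takeWhile
          (fun m => decide ((I.tx m).arr = (I.tx b₀).arr)) = b₀ :: bl' := by
        apply takeWhile_eq_left
        · intro x hx; exact decide_eq_true (hblk x hx b₀ hbmem)
        · intro x hx
          exact decide_eq_false (ne_of_gt (hrest x hx b₀ hbmem))
      have hpickdef : pickP I v qa (b₀ :: (bl' ++ rest)) b₀ =
          (((b₀ :: bl').find? fun m => decide (FeasAt I (I.tx m).dir v qa)).getD b₀) := by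
        unfold pickP
        rw [← List.cons_append, htw]
      cases hfind : ((b₀ :: bl').find? fun m => decide (FeasAt I (I.tx m).dir v qa)) with
      | some m =>
          have hFm : FeasAt I (I.tx m).dir v qa := by
            have h := List.find?_some hfind
            exact of_decide_eq_true h
          have hmem : m ∈ b₀ :: bl' := List.mem_of_find?_eq_some hfind
          have hpick : pickP I v qa (b₀ :: (bl' ++ rest)) b₀ = m := by
            rw [hpickdef, hfind]; rfl
          have herase : (b₀ :: (bl' ++ rest)).erase m = ((b₀ :: bl').erase m) ++ rest := by
            rw [← List.cons_append]
            exact List.erase_append_left rest hmem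
          obtain ⟨hm1, hm2, hm3⟩ := step_mem I v hv m h1 h2 h3 hFm
          obtain ⟨steps', qa', e1, e2, e3, e4, e5⟩ :=
            ih ((b₀ :: bl').erase m) rest (qa + dd I v m)
              (by rw [List.length_erase_of_mem hmem]; simp only [List.length_cons]; omega)
              (fun x hx y hy => hrest x hx y (List.mem_of_mem_erase hy))
              (fun x hx y hy =>
                hblk x (List.mem_of_mem_erase hx) y (List.mem_of_mem_erase hy))
              hm1 hm2 hm3
          have hlenN : (b₀ :: bl').length = ((b₀ :: bl').erase m).length + 1 := by
            rw [List.length_erase_of_mem hmem]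
            simp only [List.length_cons]
            omega
          refine ⟨(m, true) :: steps', qa', ?_, ?_, ?_, ?_, ?_⟩
          · rw [List.cons_append, runP_cons, hpick, decide_eq_true hFm, if_pos hFm,
              herase, e1]
            rfl
          · simp only [List.map_cons]
            exact (e2.cons m).trans (List.perm_cons_erase hmem).symm
          · rw [stA_cons]; simpa using e3
          · rw [e4, netL_erase I v hmem]; ring_nf
          · have habs : qa + netL I v (b₀ :: bl') - qa'
                = qa + dd I v m + netL I v ((b₀ :: bl').erase m) - qa' := by
              rw [netL_erase I v hmem]; ring
            have hm2' : (v:ℤ) * (((b₀ :: bl').length : ℕ) : ℤ)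
                = v * ((((b₀ :: bl').erase m).length : ℕ) : ℤ) + v := by
              rw [hlenN]; push_cast; ring
            rw [cntT_cons_true, habs]
            push_cast
            push_cast at hm2' e5
            linarith [e5, hm2']
      | none =>
          have hAll : ∀ x ∈ b₀ :: bl', ¬ FeasAt I (I.tx x).dir v qa := by
            intro x hx hF
            have := List.find?_eq_none.1 hfind x hx
            exact this (decide_eq_true hF)
          have hpick : pickP I v qa (b₀ :: (bl' ++ rest)) b₀ = b₀ := by
            rw [hpickdef, hfind]; rfl
          have hdecF : decide (FeasAt I (I.tx b₀).dir v qa) = false :=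
            decide_eq_false (hAll b₀ hbmem)
          have herase : (b₀ :: (bl' ++ rest)).erase b₀ = bl' ++ rest := by
            rw [← List.cons_append, List.erase_append_left rest hbmem,
              List.erase_cons_head]
          obtain ⟨steps', qa', e1, e2, e3, e4, e5⟩ :=
            ih bl' rest qa hk'
              (fun x hx y hy => hrest x hx y (by simp [hy]))
              (fun x hx y hy => hblk x (by simp [hx]) y (by simp [hy]))
              h1 h2 h3
          have hcnt0 : (0:ℤ) ≤ (v:ℤ) * (cntT steps' : ℤ) := by positivity
          -- boundary analysis
          have hkey : (∃ hq : qa = LbI I v,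
                netL I v (b₀ :: bl') = -((v:ℤ) * (b₀ :: bl').length) ∧
                netL I v bl' = -((v:ℤ) * bl'.length)) ∨
              (∃ hq : qa = UbI I v,
                netL I v (b₀ :: bl') = (v:ℤ) * (b₀ :: bl').length ∧
                netL I v bl' = (v:ℤ) * bl'.length) := by
            cases hdb : (I.tx b₀).dir with
            | true =>
                left
                have hnF : ¬ ((v:ℤ) ≤ qa) := by
                  have := hAll b₀ hbmem
                  rwa [FeasAt, hdb, if_pos rfl] at this
                have hqL : qa = LbI I v := eq_Lb_of_notFeasA I v hv h1 h3 hnF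
                have hall : ∀ x ∈ b₀ :: bl', (I.tx x).dir = true := by
                  intro x hx
                  cases hdx : (I.tx x).dir with
                  | true => rfl
                  | false =>
                      exfalso
                      have := hAll x hx
                      rw [FeasAt, hdx] at this
                      simp only [Bool.false_eq_true, if_false] at this
                      have hqU : qa = UbI I v := eq_Ub_of_notFeasB I v hv h2 h3 this
                      rw [hqL] at hqU
                      linarith
                exact ⟨hqL, netL_allA I v _ hall,
                  netL_allA I v _ (fun z hz => hall z (by simp [hz]))⟩
            | false =>
                right
                have hnF : ¬ (qa ≤ (I.cap:ℤ) - v) := by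
                  have := hAll b₀ hbmem
                  rw [FeasAt, hdb] at this
                  simpa using this
                have hqU : qa = UbI I v := eq_Ub_of_notFeasB I v hv h2 h3 hnF
                have hall : ∀ x ∈ b₀ :: bl', (I.tx x).dir = false := by
                  intro x hx
                  cases hdx : (I.tx x).dir with
                  | false => rfl
                  | true =>
                      exfalso
                      have := hAll x hx
                      rw [FeasAt, hdx, if_pos rfl] at this
                      have hqL : qa = LbI I v := eq_Lb_of_notFeasA I v hv h1 h3 this
                      rw [hqU] at hqL
                      linarith
                exact ⟨hqU, netL_allB I v _ hall,
                  netL_allB I v _ (fun z hz => hall z (by simp [hz]))⟩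
          have hlenZ : (((b₀ :: bl').length : ℕ) : ℤ) = ((bl'.length : ℕ) : ℤ) + 1 := by
            simp only [List.length_cons]; push_cast; ring
          have hv0 : (0:ℤ) ≤ (v:ℤ) * ((bl'.length : ℕ) : ℤ) := by positivity
          rcases hkey with ⟨hq, hnet, hnet'⟩ | ⟨hq, hnet, hnet'⟩
          · -- all A→B, balance pinned at Lb
            have h5 : qa + netL I v bl' = LbI I v - (v:ℤ) * ((bl'.length : ℕ) : ℤ) := by
              rw [hnet', hq]; try ring
            rw [h5, min_eq_right (by linarith), max_eq_left (by linarith)] at e4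
            have h6 : qa + netL I v (b₀ :: bl')
                = LbI I v - ((v:ℤ) * ((bl'.length : ℕ) : ℤ) + v) := by
              rw [hnet, hq, hlenZ]; try ring
            have hx : qa + netL I v bl' - qa'
                = -((v:ℤ) * ((bl'.length : ℕ) : ℤ)) := by rw [h5, e4]; ring
            have hcz : (v:ℤ) * (cntT steps' : ℤ) = 0 := by
              rw [hx, abs_neg, abs_of_nonneg hv0] at e5
              linarith
            refine ⟨(b₀, false) :: steps', qa', ?_, ?_, ?_, ?_, ?_⟩
            · rw [List.cons_append, runP_cons, hpick, hdecF,
                if_neg (hAll b₀ hbmem), herase, e1]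
              rfl
            · simp only [List.map_cons]
              exact e2.cons b₀
            · rw [stA_cons]; simpa using e3
            · rw [h6, e4, min_eq_right (by linarith), max_eq_left (by linarith)]
            · have hy : qa + netL I v (b₀ :: bl') - qa'
                  = -((v:ℤ) * ((bl'.length : ℕ) : ℤ) + v) := by rw [h6, e4]; ring
              rw [cntT_cons_false, hy, abs_neg,
                abs_of_nonneg (by linarith : (0:ℤ) ≤ (v:ℤ) * ((bl'.length : ℕ) : ℤ) + v),
                hlenZ, hcz]
              ring
          · -- all B→A, balance pinned at Ub
            have h5 : qa + netL I v bl' = UbI I v + (v:ℤ) * ((bl'.length : ℕ) : ℤ) := by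
              rw [hnet', hq]; try ring
            have hLbUb : LbI I v ≤ UbI I v := by linarith
            rw [h5, min_eq_left (by linarith), max_eq_right hLbUb] at e4
            have h6 : qa + netL I v (b₀ :: bl')
                = UbI I v + ((v:ℤ) * ((bl'.length : ℕ) : ℤ) + v) := by
              rw [hnet, hq, hlenZ]; try ring
            have hx : qa + netL I v bl' - qa'
                = (v:ℤ) * ((bl'.length : ℕ) : ℤ) := by rw [h5, e4]; ring
            have hcz : (v:ℤ) * (cntT steps' : ℤ) = 0 := by
              rw [hx, abs_of_nonneg hv0] at e5
              linarith
            refine ⟨(b₀, false) :: steps', qa', ?_, ?_, ?_, ?_, ?_⟩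
            · rw [List.cons_append, runP_cons, hpick, hdecF,
                if_neg (hAll b₀ hbmem), herase, e1]
              rfl
            · simp only [List.map_cons]
              exact e2.cons b₀
            · rw [stA_cons]; simpa using e3
            · rw [h6, e4, min_eq_left (by linarith), max_eq_right hLbUb]
            · have hy : qa + netL I v (b₀ :: bl') - qa'
                  = (v:ℤ) * ((bl'.length : ℕ) : ℤ) + v := by rw [h6, e4]; ring
              rw [cntT_cons_false, hy,
                abs_of_nonneg (by linarith : (0:ℤ) ≤ (v:ℤ) * ((bl'.length : ℕ) : ℤ) + v),
                hlenZ, hcz]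
              ring

end
end PFIProof
namespace PFIProof

section
variable {N : ℕ}

lemma exec_eq_arr (I : PCInstance N) (π : Policy N) (hadm : Admissible I π)
    (hnb : ∀ n : Fin N, (I.tx n).ddl = (I.tx n).arr) {n : Fin N} {s : ℝ}
    (h : π.exec? n = some s) : s = (I.tx n).arr := by
  obtain ⟨h1, h2⟩ := hadm.2.1 n s h
  rw [hnb n] at h2
  linarith

lemma dropWhile_head_false {α : Type*} (p : α → Bool) :
    ∀ (l : List α) (x : α) (xs : List α), l.dropWhile p = x :: xs → p x = false
  | [], x, xs, h => by simp [List.dropWhile] at h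
  | y :: l, x, xs, h => by
      by_cases hy : p y = true
      · rw [List.dropWhile_cons_of_pos hy] at h
        exact dropWhile_head_false p l x xs h
      · rw [List.dropWhile_cons_of_neg hy] at h
        cases h
        exact Bool.not_eq_true _ ▸ (by simpa using hy)

lemma stA_eq_sum (I : PCInstance N) (v : ℕ) :
    ∀ (steps : List (Fin N × Bool)) (qa : ℤ),
      stA I v qa steps = qa + ((steps.filter (fun s => s.2)).map (fun s => dd I v s.1)).sum
  | [], qa => by simp
  | s :: steps, qa => by
      cases hb : s.2 with
      | true =>
          rw [stA_cons]
          rw [stA_eq_sum I v steps]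
          simp [List.filter, hb]
          ring
      | false =>
          rw [stA_cons]
          rw [stA_eq_sum I v steps]
          simp [List.filter, hb]

/-- Splitting executed-by-`τ` into executed-by-`t₀` and executed-at-instant-`τ`,
when there are no arrivals strictly between `t₀` and `τ`. -/
lemma split_instant (I : PCInstance N) (σ : Policy N)
    (hex : ∀ (n : Fin N) s, σ.exec? n = some s → s = (I.tx n).arr)
    (t₀ τ : ℝ) (ht : t₀ < τ)
    (hgap : ∀ n : Fin N, t₀ < (I.tx n).arr → (I.tx n).arr ≤ τ → (I.tx n).arr = τ) :
    QAat I σ τ = QAat I σ t₀ +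
        ∑ n ∈ univ.filter (fun n : Fin N => (σ.exec? n).isSome ∧ (I.tx n).arr = τ),
          delta (I.tx n) ∧
    numExec σ τ = numExec σ t₀ +
        (univ.filter (fun n : Fin N => (σ.exec? n).isSome ∧ (I.tx n).arr = τ)).card := by
  have hset : univ.filter (fun n : Fin N => ∃ s, σ.exec? n = some s ∧ s ≤ τ)
      = univ.filter (fun n : Fin N => ∃ s, σ.exec? n = some s ∧ s ≤ t₀) ∪
        univ.filter (fun n : Fin N => (σ.exec? n).isSome ∧ (I.tx n).arr = τ) := by
    ext n
    simp only [Finset.mem_filter, Finset.mem_union, Finset.mem_univ, true_and]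
    constructor
    · rintro ⟨s, hs, hsτ⟩
      have harr := hex n s hs
      subst harr
      by_cases h0 : (I.tx n).arr ≤ t₀
      · exact Or.inl ⟨_, hs, h0⟩
      · exact Or.inr ⟨by rw [hs]; rfl, hgap n (not_le.1 h0) hsτ⟩
    · rintro (⟨s, hs, hst⟩ | ⟨hsome, harr⟩)
      · exact ⟨s, hs, le_trans hst (le_of_lt ht)⟩
      · obtain ⟨s, hs⟩ := Option.isSome_iff_exists.1 hsome
        exact ⟨s, hs, le_of_eq ((hex n s hs).trans harr)⟩
  have hdisj : Disjoint
      (univ.filter (fun n : Fin N => ∃ s, σ.exec? n = some s ∧ s ≤ t₀))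
      (univ.filter (fun n : Fin N => (σ.exec? n).isSome ∧ (I.tx n).arr = τ)) := by
    rw [Finset.disjoint_left]
    intro n h1 h2
    simp only [Finset.mem_filter, Finset.mem_univ, true_and] at h1 h2
    obtain ⟨s, hs, hst⟩ := h1
    have := hex n s hs
    rw [this, h2.2] at hst
    linarith
  constructor
  · unfold QAat
    rw [hset, Finset.sum_union hdisj]
    ring
  · unfold numExec
    rw [hset, Finset.card_union_of_disjoint hdisj]

/-- If there are no arrivals in `(t₀, t]`, nothing changes on that interval. -/
lemma const_between (I : PCInstance N) (σ : Policy N)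
    (hex : ∀ (n : Fin N) s, σ.exec? n = some s → s = (I.tx n).arr)
    (t₀ t : ℝ) (htt : t₀ ≤ t)
    (h : ∀ n : Fin N, t₀ < (I.tx n).arr → ¬ (I.tx n).arr ≤ t) :
    QAat I σ t = QAat I σ t₀ ∧ numExec σ t = numExec σ t₀ := by
  have hset : univ.filter (fun n : Fin N => ∃ s, σ.exec? n = some s ∧ s ≤ t)
      = univ.filter (fun n : Fin N => ∃ s, σ.exec? n = some s ∧ s ≤ t₀) := by
    ext n
    simp only [Finset.mem_filter, Finset.mem_univ, true_and]
    constructor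
    · rintro ⟨s, hs, hst⟩
      refine ⟨s, hs, ?_⟩
      have harr := hex n s hs
      subst harr
      by_contra h0
      exact h n (not_le.1 h0) hst
    · rintro ⟨s, hs, hst⟩
      exact ⟨s, hs, le_trans hst htt⟩
  unfold QAat numExec
  rw [hset]
  exact ⟨rfl, rfl⟩

/-- An admissible policy keeps the balance within `[0, cap]` at all times. -/
lemma sum_range_of_closed (I : PCInstance N) (v : ℕ) (hamt : ∀ n, (I.tx n).amt = v)
    (π : Policy N) (hadm : Admissible I π) (S : Finset (Fin N)) :
    (∀ n ∈ S, (π.exec? n).isSome) →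
    (∀ m n : Fin N, n ∈ S → (π.exec? m).isSome → π.ord m < π.ord n → m ∈ S) →
    0 ≤ (I.QA0 : ℤ) + ∑ m ∈ S, delta (I.tx m) ∧
      (I.QA0 : ℤ) + ∑ m ∈ S, delta (I.tx m) ≤ I.cap := by
  induction S using Finset.strongInduction with
  | _ S ihS =>
  intro hex hclosed
  rcases S.eq_empty_or_nonempty with rfl | hS
  · simp only [Finset.sum_empty, add_zero]
    exact ⟨by positivity, by exact_mod_cast I.QA0_le⟩
  · obtain ⟨n, hn, hmax⟩ := Finset.exists_max_image S π.ord hS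
    have hSsub : S.erase n ⊂ S := Finset.erase_ssubset hn
    have hex' : ∀ m ∈ S.erase n, (π.exec? m).isSome := fun m hm =>
      hex m (Finset.mem_of_mem_erase hm)
    have hclosed' : ∀ m k : Fin N, k ∈ S.erase n → (π.exec? m).isSome →
        π.ord m < π.ord k → m ∈ S.erase n := by
      intro m k hk hm hmk
      have hkS := Finset.mem_of_mem_erase hk
      have hmS := hclosed m k hkS hm hmk
      refine Finset.mem_erase.2 ⟨?_, hmS⟩
      rintro rfl
      exact absurd (lt_of_lt_of_le hmk (hmax k hkS)) (lt_irrefl _)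
    obtain ⟨ih1, ih2⟩ := ihS (S.erase n) hSsub hex' hclosed'
    have hQb : QAbefore I π n = (I.QA0 : ℤ) + ∑ m ∈ S.erase n, delta (I.tx m) := by
      unfold QAbefore
      congr 1
      apply Finset.sum_congr _ (fun _ _ => rfl)
      ext m
      simp only [Finset.mem_filter, Finset.mem_univ, true_and, Finset.mem_erase]
      constructor
      · rintro ⟨hsm, hord⟩
        refine ⟨?_, hclosed m n hn hsm hord⟩
        rintro rfl
        exact absurd hord (lt_irrefl _)
      · rintro ⟨hne, hmS⟩
        refine ⟨hex m hmS, ?_⟩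
        rcases lt_or_eq_of_le (hmax m hmS) with h | h
        · exact h
        · exact absurd (π.ord_inj h) hne
    have hsum : ∑ m ∈ S, delta (I.tx m)
        = ∑ m ∈ S.erase n, delta (I.tx m) + delta (I.tx n) :=
      (Finset.sum_erase_add S _ hn).symm
    have hfeas := hadm.2.2 n (hex n hn)
    rw [hamt n] at hfeas
    rw [hQb] at hfeas
    rw [hsum]
    unfold FeasAt at hfeas
    cases hdir : (I.tx n).dir with
    | true =>
        rw [hdir, if_pos rfl] at hfeas
        have hd : delta (I.tx n) = -(v:ℤ) := by rw [delta, hamt n, hdir]; simp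
        rw [hd]
        constructor <;> linarith
    | false =>
        rw [hdir] at hfeas
        simp only [Bool.false_eq_true, if_false] at hfeas
        have hd : delta (I.tx n) = (v:ℤ) := by rw [delta, hamt n, hdir]; simp
        rw [hd]
        have h0 : (0:ℤ) ≤ (v:ℤ) := by positivity
        constructor <;> linarith

lemma QAat_range (I : PCInstance N) (v : ℕ) (hamt : ∀ n, (I.tx n).amt = v)
    (π : Policy N) (hadm : Admissible I π) (t : ℝ) :
    0 ≤ QAat I π t ∧ QAat I π t ≤ I.cap := by
  have := sum_range_of_closed I v hamt π hadm
    (univ.filter (fun n : Fin N => ∃ s, π.exec? n = some s ∧ s ≤ t))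
    (by
      intro n hn
      simp only [Finset.mem_filter, Finset.mem_univ, true_and] at hn
      obtain ⟨s, hs, -⟩ := hn
      rw [hs]; rfl)
    (by
      intro m n hn hm hord
      simp only [Finset.mem_filter, Finset.mem_univ, true_and] at hn ⊢
      obtain ⟨sn, hsn, hsnt⟩ := hn
      obtain ⟨sm, hsm⟩ := Option.isSome_iff_exists.1 hm
      refine ⟨sm, hsm, ?_⟩
      by_contra hc
      have : sn < sm := lt_of_le_of_lt hsnt (not_le.1 hc)
      exact absurd (hadm.1 n m sn sm hsn hsm this) (by omega))
  exact this

lemma QAat_res (I : PCInstance N) (v : ℕ) (hv : 1 ≤ v) (hamt : ∀ n, (I.tx n).amt = v)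
    (π : Policy N) (t : ℝ) : QAat I π t % v = rhoI I v := by
  unfold QAat rhoI
  have hdvd : (v:ℤ) ∣ ∑ m ∈ univ.filter (fun n : Fin N => ∃ s, π.exec? n = some s ∧ s ≤ t),
      delta (I.tx m) := by
    apply Finset.dvd_sum
    intro m _
    rw [delta, hamt m]
    cases (I.tx m).dir <;> simp
  obtain ⟨z, hz⟩ := hdvd
  rw [hz, mul_comm, Int.add_mul_emod_self_right]

/-- Triangle-type inequality for the clamp. -/
lemma clamp_abs {L U x q : ℤ} (hq1 : L ≤ q) (hq2 : q ≤ U) (hLU : L ≤ U) :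
    |max L (min U x) - q| + |x - max L (min U x)| ≤ |x - q| := by
  rcases le_total x L with h | h
  · rw [min_eq_right (h.trans hLU), max_eq_left h]
    rw [abs_of_nonpos (by linarith : x - L ≤ 0),
      abs_of_nonpos (by linarith : x - q ≤ 0),
      abs_of_nonpos (by linarith : L - q ≤ 0)]
    linarith
  · rcases le_total x U with h2 | h2
    · rw [min_eq_right h2, max_eq_right h]
      simp
    · rw [min_eq_left h2, max_eq_right hLU]
      rw [abs_of_nonneg (by linarith : (0:ℤ) ≤ x - U),
        abs_of_nonneg (by linarith : (0:ℤ) ≤ x - q),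
        abs_of_nonneg (by linarith : (0:ℤ) ≤ U - q)]
      linarith

/-- The arithmetic heart of the instant-step comparison. -/
lemma arith_step {v L U qa qa' Qp Qp' c cnt np np' mA mB a b : ℤ}
    (hv : 0 < v) (hLU : L ≤ U)
    (hinv : v * np + |qa - Qp| ≤ v * c)
    (hq' : qa' = max L (min U (qa + (v * mB - v * mA))))
    (hcnt : v * cnt = v * mA + v * mB - |qa + (v * mB - v * mA) - qa'|)
    (hQp' : Qp' = Qp + v * b - v * a) (hnp' : np' = np + a + b)
    (ha0 : 0 ≤ a) (hb0 : 0 ≤ b) (haA : a ≤ mA) (hbB : b ≤ mB)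
    (hL : L ≤ Qp') (hU : Qp' ≤ U) :
    v * np' + |qa' - Qp'| ≤ v * (c + cnt) := by
  have k1 : |qa' - Qp'| + |qa + (v * mB - v * mA) - qa'| ≤ |qa + (v * mB - v * mA) - Qp'| := by
    rw [hq']
    exact clamp_abs hL hU hLU
  have k2 : |qa + (v * mB - v * mA) - Qp'| ≤ |qa - Qp| + (v * mA - v * a) + (v * mB - v * b) := by
    have he : qa + (v * mB - v * mA) - Qp'
        = (qa - Qp) + ((v * mB - v * b) - (v * mA - v * a)) := by rw [hQp']; ring
    have hp : 0 ≤ v * mB - v * b := by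
      have := mul_le_mul_of_nonneg_left hbB hv.le; linarith
    have hq0 : 0 ≤ v * mA - v * a := by
      have := mul_le_mul_of_nonneg_left haA hv.le; linarith
    have h5 : |(v * mB - v * b) - (v * mA - v * a)| ≤ (v * mA - v * a) + (v * mB - v * b) := by
      rcases abs_cases ((v * mB - v * b) - (v * mA - v * a)) with ⟨h4, -⟩ | ⟨h4, -⟩ <;>
        rw [h4] <;> linarith
    rw [he]
    calc |(qa - Qp) + ((v * mB - v * b) - (v * mA - v * a))|
        ≤ |qa - Qp| + |(v * mB - v * b) - (v * mA - v * a)| := abs_add_le _ _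
      _ ≤ |qa - Qp| + ((v * mA - v * a) + (v * mB - v * b)) := by linarith
      _ = |qa - Qp| + (v * mA - v * a) + (v * mB - v * b) := by ring
  have hnp'' : v * np' = v * np + v * a + v * b := by rw [hnp']; ring
  have hccnt : v * (c + cnt) = v * c + v * cnt := by ring
  linarith

end
end PFIProof
namespace PFIProof

section
variable {N : ℕ}

lemma netL_res (I : PCInstance N) (v : ℕ) (bl : List (Fin N)) (qa : ℤ) :
    (qa + netL I v bl) % v = qa % v := by
  have hdvd : (v:ℤ) ∣ netL I v bl := by
    apply List.dvd_sum
    intro x hx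
    obtain ⟨m, -, rfl⟩ := List.mem_map.1 hx
    rw [dd]
    cases (I.tx m).dir <;> simp
  obtain ⟨z, hz⟩ := hdvd
  rw [hz, mul_comm, Int.add_mul_emod_self_right]

lemma clamp_res (I : PCInstance N) (v : ℕ) (hv : 1 ≤ v) {x : ℤ}
    (hx : x % v = rhoI I v) :
    (max (LbI I v) (min (UbI I v) x)) % v = rhoI I v := by
  rcases max_cases (LbI I v) (min (UbI I v) x) with ⟨hc, -⟩ | ⟨hc, -⟩
  · rw [hc]; exact rho_mod I v hv
  · rw [hc]
    rcases min_cases (UbI I v) x with ⟨hc2, -⟩ | ⟨hc2, -⟩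
    · rw [hc2]; exact Ub_mod I v hv
    · rw [hc2]; exact hx

/-- **Main comparison.** Along the remaining (sorted) transaction list, the greedy
PFI policy dominates any admissible policy in executed volume, with the coupling
invariant `v·nπ + |Q^P - Q^π| ≤ v·n_P`. -/
lemma main_compare (I : PCInstance N) (v : ℕ) (hv : 1 ≤ v)
    (hamt : ∀ n, (I.tx n).amt = v) (hLU : LbI I v + v ≤ UbI I v)
    (π : Policy N) (hadmπ : Admissible I π)
    (hexπ : ∀ (n : Fin N) s, π.exec? n = some s → s = (I.tx n).arr) :
    ∀ (k : ℕ) (l : List (Fin N)) (qa : ℤ) (t₀ : ℝ),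
      l.length ≤ k →
      l.Pairwise (arrLE I) → l.Nodup →
      (∀ n : Fin N, n ∈ l ↔ t₀ < (I.tx n).arr) →
      (∃ pre, outL I v = pre ++ runP I v l qa) →
      QAat I (Ppol I v) t₀ = qa →
      LbI I v ≤ qa → qa ≤ UbI I v → qa % v = rhoI I v →
      (v:ℤ) * numExec π t₀ + |qa - QAat I π t₀| ≤ v * numExec (Ppol I v) t₀ →
      ∀ t : ℝ, t₀ ≤ t →
        (v:ℤ) * numExec π t + |QAat I (Ppol I v) t - QAat I π t| ≤
          v * numExec (Ppol I v) t := by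
  have hexP : ∀ (n : Fin N) s, (Ppol I v).exec? n = some s → s = (I.tx n).arr :=
    fun n s h => (Ppol_exec_some I v h).1
  have hvpos : (0:ℤ) < v := by exact_mod_cast hv
  intro k
  induction k with
  | zero =>
      intro l qa t₀ hk hsort hnd hiff hsuf hQA hLb hUb hres hinv t ht
      have hl : l = [] := List.eq_nil_of_length_eq_zero (Nat.le_zero.1 hk)
      subst hl
      have hall : ∀ n : Fin N, ¬ t₀ < (I.tx n).arr := fun n hn => by
        simpa using (hiff n).2 hn
      obtain ⟨eπ1, eπ2⟩ := const_between I π hexπ t₀ t ht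
        (fun n hn => absurd hn (hall n))
      obtain ⟨eP1, eP2⟩ := const_between I (Ppol I v) hexP t₀ t ht
        (fun n hn => absurd hn (hall n))
      rw [eπ1, eπ2, eP1, eP2, hQA]
      exact hinv
  | succ k ih =>
      intro l qa t₀ hk hsort hnd hiff hsuf hQA hLb hUb hres hinv t ht
      cases hl : l with
      | nil =>
          subst hl
          have hall : ∀ n : Fin N, ¬ t₀ < (I.tx n).arr := fun n hn => by
            simpa using (hiff n).2 hn
          obtain ⟨eπ1, eπ2⟩ := const_between I π hexπ t₀ t ht
            (fun n hn => absurd hn (hall n))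
          obtain ⟨eP1, eP2⟩ := const_between I (Ppol I v) hexP t₀ t ht
            (fun n hn => absurd hn (hall n))
          rw [eπ1, eπ2, eP1, eP2, hQA]
          exact hinv
      | cons n₀ tl =>
      subst hl
      set τ := (I.tx n₀).arr with hτ
      have htlt : t₀ < τ := (hiff n₀).1 (by simp)
      set p := (fun m : Fin N => decide ((I.tx m).arr = τ)) with hp
      set bl := (n₀ :: tl).takeWhile p with hbl
      set rest := (n₀ :: tl).dropWhile p with hrestdef
      have hsplit : bl ++ rest = n₀ :: tl := List.takeWhile_append_dropWhile
      have hbl_arr : ∀ x ∈ bl, (I.tx x).arr = τ := by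
        intro x hx
        have := List.mem_takeWhile_imp hx
        simpa [hp] using this
      have hminl : ∀ x ∈ n₀ :: tl, τ ≤ (I.tx x).arr := by
        intro x hx
        rcases List.mem_cons.1 hx with rfl | hx'
        · exact le_refl _
        · exact List.rel_of_pairwise_cons hsort hx'
      have hrest_sub : rest.Sublist (n₀ :: tl) := List.dropWhile_sublist _
      have hrest_gt : ∀ x ∈ rest, τ < (I.tx x).arr := by
        intro x hx
        cases hr : rest with
        | nil => rw [hr] at hx; simp at hx
        | cons r₀ rr =>
            have hp0 : p r₀ = false := dropWhile_head_false p (n₀ :: tl) r₀ rr hr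
            have hne : (I.tx r₀).arr ≠ τ := by simpa [hp] using hp0
            have hr₀l : r₀ ∈ n₀ :: tl := hrest_sub.mem (by rw [hr]; simp)
            have hr₀ : τ < (I.tx r₀).arr := lt_of_le_of_ne (hminl r₀ hr₀l) (Ne.symm hne)
            rw [hr] at hx
            rcases List.mem_cons.1 hx with rfl | hx'
            · exact hr₀
            · have hsr : rest.Pairwise (arrLE I) := hsort.sublist hrest_sub
              rw [hr] at hsr
              exact lt_of_lt_of_le hr₀ (List.rel_of_pairwise_cons hsr hx')
      have hmem_bl : ∀ n : Fin N, (I.tx n).arr = τ → n ∈ bl := by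
        intro n harr
        have hnl : n ∈ n₀ :: tl := (hiff n).2 (by rw [harr]; exact htlt)
        rw [← hsplit] at hnl
        rcases List.mem_append.1 hnl with h | h
        · exact h
        · exact absurd harr (ne_of_gt (hrest_gt n h))
      -- apply the block lemma
      obtain ⟨pre, hpre⟩ := hsuf
      obtain ⟨steps, qa', e1, e2, e3, e4, e5⟩ :=
        runblock I v hv hLU bl rest qa
          (fun x hx y hy => by rw [hbl_arr y hy]; exact hrest_gt x hx)
          (fun x hx y hy => by rw [hbl_arr x hx, hbl_arr y hy])
          hLb hUb hres
      have hsuf' : outL I v = (pre ++ steps) ++ runP I v rest qa' := by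
        rw [hpre, ← hsplit, e1, List.append_assoc]
      have hstep_out : ∀ s ∈ steps, s ∈ outL I v := by
        intro s hs
        rw [hsuf']
        exact List.mem_append.2 (Or.inl (List.mem_append.2 (Or.inr hs)))
      have hbl_nd : bl.Nodup := hnd.sublist (List.takeWhile_sublist _)
      have hfst_nd : (steps.map Prod.fst).Nodup := e2.symm.nodup hbl_nd
      have hfil_nd : ((steps.filter (fun s => s.2)).map Prod.fst).Nodup :=
        hfst_nd.sublist ((List.filter_sublist (l := steps)).map Prod.fst)
      -- correspondence between the executed-at-τ set of P and the steps
      have hEPset : univ.filter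
          (fun n : Fin N => (((Ppol I v)).exec? n).isSome ∧ (I.tx n).arr = τ)
          = ((steps.filter (fun s => s.2)).map Prod.fst).toFinset := by
        ext n
        simp only [Finset.mem_filter, Finset.mem_univ, true_and, List.mem_toFinset,
          List.mem_map, List.mem_filter]
        constructor
        · rintro ⟨hsome, harr⟩
          have htrue := (Ppol_exec_isSome_iff I v n).1 hsome
          have hnbl : n ∈ bl := hmem_bl n harr
          have hnfst : n ∈ steps.map Prod.fst := e2.mem_iff.2 hnbl
          obtain ⟨s, hs, hsfst⟩ := List.mem_map.1 hnfst
          have hsout : s ∈ outL I v := hstep_out s hs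
          have hs2 : s.2 = true := by
            have : (n, s.2) ∈ outL I v := by
              rwa [show (n, s.2) = s from Prod.ext hsfst.symm rfl]
            exact snd_unique (outL_fst_nodup I v) this htrue
          exact ⟨s, ⟨hs, hs2⟩, hsfst⟩
        · rintro ⟨s, ⟨hs, hs2⟩, hsfst⟩
          have hseq : s = (n, true) := Prod.ext hsfst hs2
          rw [hseq] at hs
          have hout : (n, true) ∈ outL I v := hstep_out _ hs
          constructor
          · exact (Ppol_exec_isSome_iff I v n).2 hout
          · apply hbl_arr
            apply e2.mem_iff.1
            exact List.mem_map.2 ⟨(n, true), hs, rfl⟩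
      have hgap : ∀ n : Fin N, t₀ < (I.tx n).arr → (I.tx n).arr ≤ τ → (I.tx n).arr = τ := by
        intro n h1 h2
        have hnl : n ∈ n₀ :: tl := (hiff n).2 h1
        rw [← hsplit] at hnl
        rcases List.mem_append.1 hnl with h | h
        · exact hbl_arr n h
        · exact absurd h2 (not_le.2 (hrest_gt n h))
      -- P's state at τ
      obtain ⟨hPs1, hPs2⟩ := split_instant I (Ppol I v) hexP t₀ τ htlt hgap
      have hsum_steps : ∑ n ∈ univ.filter
          (fun n : Fin N => (((Ppol I v)).exec? n).isSome ∧ (I.tx n).arr = τ),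
          delta (I.tx n) = qa' - qa := by
        rw [hEPset, List.sum_toFinset _ hfil_nd, List.map_map]
        have hmapeq : ((steps.filter (fun s => s.2)).map ((fun n => delta (I.tx n)) ∘ Prod.fst))
            = ((steps.filter (fun s => s.2)).map (fun s => dd I v s.1)) :=
          List.map_congr_left (fun s _ => delta_eq_dd I v hamt s.1)
        rw [hmapeq]
        have := stA_eq_sum I v steps qa
        rw [e3] at this
        linarith
      have hQAp : QAat I (Ppol I v) τ = qa' := by
        rw [hPs1, hsum_steps, hQA]; ring
      have hNEp : (numExec (Ppol I v) τ : ℤ) = numExec (Ppol I v) t₀ + cntT steps := by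
        rw [hPs2, hEPset]
        rw [List.toFinset_card_of_nodup hfil_nd]
        push_cast [cntT, List.length_map]
        ring
      -- π's state at τ
      obtain ⟨hπs1, hπs2⟩ := split_instant I π hexπ t₀ τ htlt hgap
      set Eπ := univ.filter (fun n : Fin N => (π.exec? n).isSome ∧ (I.tx n).arr = τ) with hEπ
      set a := (Eπ.filter (fun n => (I.tx n).dir = true)).card with ha
      set b := (Eπ.filter (fun n => ¬ (I.tx n).dir = true)).card with hb
      have hEcard : a + b = Eπ.card := Finset.card_filter_add_card_filter_not _
      have hsum_Eπ : ∑ n ∈ Eπ, delta (I.tx n) = (v:ℤ) * b - v * a := by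
        rw [← Finset.sum_filter_add_sum_filter_not Eπ (fun n => (I.tx n).dir = true)]
        have hA' : ∀ n ∈ Eπ.filter (fun n => (I.tx n).dir = true),
            delta (I.tx n) = -(v:ℤ) := by
          intro n hn
          simp only [Finset.mem_filter] at hn
          rw [delta, hamt n, hn.2]; simp
        have hB' : ∀ n ∈ Eπ.filter (fun n => ¬ (I.tx n).dir = true),
            delta (I.tx n) = (v:ℤ) := by
          intro n hn
          simp only [Finset.mem_filter] at hn
          have hdf : (I.tx n).dir = false := by
            cases hdd : (I.tx n).dir
            · rfl
            · exact absurd hdd hn.2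
          rw [delta, hamt n, hdf]; simp
        rw [Finset.sum_congr rfl hA', Finset.sum_congr rfl hB',
          Finset.sum_const, Finset.sum_const, nsmul_eq_mul, nsmul_eq_mul]
        ring
      set mA := ((univ.filter (fun n : Fin N => (I.tx n).arr = τ)).filter
        (fun n => (I.tx n).dir = true)).card with hmA
      set mB := ((univ.filter (fun n : Fin N => (I.tx n).arr = τ)).filter
        (fun n => ¬ (I.tx n).dir = true)).card with hmB
      have hmAB : mA + mB = (univ.filter (fun n : Fin N => (I.tx n).arr = τ)).card :=
        Finset.card_filter_add_card_filter_not _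
      have haA : a ≤ mA := by
        apply Finset.card_le_card
        intro n hn
        simp only [Finset.mem_filter, Finset.mem_univ, true_and, hEπ] at hn ⊢
        exact ⟨hn.1.2, hn.2⟩
      have hbB : b ≤ mB := by
        apply Finset.card_le_card
        intro n hn
        simp only [Finset.mem_filter, Finset.mem_univ, true_and, hEπ] at hn ⊢
        exact ⟨hn.1.2, hn.2⟩
      -- net of the block in terms of the counts
      have hblfin : bl.toFinset = univ.filter (fun n : Fin N => (I.tx n).arr = τ) := by
        ext n
        simp only [List.mem_toFinset, Finset.mem_filter, Finset.mem_univ, true_and]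
        exact ⟨fun h => hbl_arr n h, fun h => hmem_bl n h⟩
      have hblen : (bl.length : ℤ) = (mA : ℤ) + mB := by
        have h1 : bl.toFinset.card = bl.length := List.toFinset_card_of_nodup hbl_nd
        rw [hblfin] at h1
        rw [← h1, ← hmAB]
        push_cast; ring
      have hnet : netL I v bl = (v:ℤ) * mB - v * mA := by
        have h0 : netL I v bl = ∑ n ∈ bl.toFinset, dd I v n := by
          rw [List.sum_toFinset _ hbl_nd]; rfl
        rw [h0, hblfin,
          ← Finset.sum_filter_add_sum_filter_not
            (univ.filter (fun n : Fin N => (I.tx n).arr = τ)) (fun n => (I.tx n).dir = true)]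
        have hA' : ∀ n ∈ (univ.filter (fun n : Fin N => (I.tx n).arr = τ)).filter
            (fun n => (I.tx n).dir = true), dd I v n = -(v:ℤ) := by
          intro n hn
          simp only [Finset.mem_filter] at hn
          rw [dd, hn.2]; simp
        have hB' : ∀ n ∈ (univ.filter (fun n : Fin N => (I.tx n).arr = τ)).filter
            (fun n => ¬ (I.tx n).dir = true), dd I v n = (v:ℤ) := by
          intro n hn
          simp only [Finset.mem_filter] at hn
          have hdf : (I.tx n).dir = false := by
            cases hdd : (I.tx n).dir
            · rfl
            · exact absurd hdd hn.2
          rw [dd, hdf]; simp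
        rw [Finset.sum_congr rfl hA', Finset.sum_congr rfl hB',
          Finset.sum_const, Finset.sum_const, nsmul_eq_mul, nsmul_eq_mul]
        ring
      -- π's balance at τ is in range
      have hπrange := QAat_range I v hamt π hadmπ τ
      have hπres := QAat_res I v hv hamt π τ
      obtain ⟨hπL, hπU⟩ := mem_LU_of_range I v hv hπrange.1 hπrange.2 hπres
      -- the new coupling invariant at τ
      have hhq' : qa' = max (LbI I v) (min (UbI I v) (qa + ((v:ℤ) * mB - v * mA))) := by
        rw [e4, hnet]
      have hhcnt : (v:ℤ) * (cntT steps : ℤ)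
          = (v:ℤ) * mA + v * mB - |qa + ((v:ℤ) * mB - v * mA) - qa'| := by
        rw [e5, hnet, hblen]; ring
      have hhQp' : QAat I π τ = QAat I π t₀ + (v:ℤ) * b - v * a := by
        rw [hπs1, hsum_Eπ]; ring
      have hhnp' : (numExec π τ : ℤ) = (numExec π t₀ : ℤ) + (a : ℤ) + b := by
        rw [hπs2, ← hEcard]; push_cast; ring
      clear_value a b mA mB Eπ
      have hinvτ : (v:ℤ) * numExec π τ + |qa' - QAat I π τ| ≤ v * numExec (Ppol I v) τ := by
        have harith := arith_step hvpos (by linarith) hinv hhq' hhcnt hhQp' hhnp'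
          (Int.natCast_nonneg a) (Int.natCast_nonneg b)
          (Nat.cast_le.2 haA) (Nat.cast_le.2 hbB) hπL hπU
        rw [hNEp]
        exact harith
      -- new interval facts for qa'
      have hLb' : LbI I v ≤ qa' := by rw [e4]; exact le_max_left _ _
      have hUb' : qa' ≤ UbI I v := by
        rw [e4]; exact max_le (by linarith) (min_le_left _ _)
      have hres' : qa' % v = rhoI I v := by
        rw [e4]
        exact clamp_res I v hv (by rw [netL_res]; exact hres)
      -- recurse or stay within the instant
      rcases lt_or_ge t τ with hcase | hcase
      · have hnone : ∀ n : Fin N, t₀ < (I.tx n).arr → ¬ (I.tx n).arr ≤ t := by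
          intro n h1 h2
          have hnl : n ∈ n₀ :: tl := (hiff n).2 h1
          have := hminl n hnl
          linarith
        obtain ⟨eπ1, eπ2⟩ := const_between I π hexπ t₀ t ht hnone
        obtain ⟨eP1, eP2⟩ := const_between I (Ppol I v) hexP t₀ t ht hnone
        rw [eπ1, eπ2, eP1, eP2, hQA]
        exact hinv
      · have hrest_len : rest.length ≤ k := by
          have h1 : rest.length ≤ tl.length := by
            have : rest = tl.dropWhile p := by
              rw [hrestdef, List.dropWhile_cons_of_pos (by simp [hp]; rfl)]
            rw [this]
            exact (List.dropWhile_sublist _).length_le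
          simp only [List.length_cons] at hk
          omega
        have hiff' : ∀ n : Fin N, n ∈ rest ↔ τ < (I.tx n).arr := by
          intro n
          constructor
          · exact hrest_gt n
          · intro hn
            have hnl : n ∈ n₀ :: tl := (hiff n).2 (lt_trans htlt hn)
            rw [← hsplit] at hnl
            rcases List.mem_append.1 hnl with h | h
            · exact absurd (hbl_arr n h) (ne_of_gt hn)
            · exact h
        exact ih rest qa' τ hrest_len (hsort.sublist hrest_sub)
          (hnd.sublist hrest_sub) hiff' ⟨pre ++ steps, hsuf'⟩ hQAp
          hLb' hUb' hres' hinvτ t hcase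

end
end PFIProof
namespace PFIProof

section
variable {N : ℕ}

lemma init_state (I : PCInstance N) (σ : Policy N)
    (hex : ∀ (n : Fin N) s, σ.exec? n = some s → s = (I.tx n).arr) :
    QAat I σ (-1) = (I.QA0 : ℤ) ∧ numExec σ (-1) = 0 := by
  have hempty : univ.filter (fun n : Fin N => ∃ s, σ.exec? n = some s ∧ s ≤ (-1:ℝ))
      = (∅ : Finset (Fin N)) := by
    ext n
    simp only [Finset.mem_filter, Finset.mem_univ, true_and, Finset.notMem_empty,
      iff_false]
    rintro ⟨s, hs, hst⟩
    have := hex n s hs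
    have := (I.tx n).arr_nonneg
    subst ‹s = (I.tx n).arr›
    linarith
  constructor
  · unfold QAat; rw [hempty]; simp
  · unfold numExec; rw [hempty]; simp

lemma blockage_split (I : PCInstance N) (v : ℕ) (hamt : ∀ n, (I.tx n).amt = v)
    (hnb : ∀ n : Fin N, (I.tx n).ddl = (I.tx n).arr) (σ : Policy N)
    (hex : ∀ (n : Fin N) s, σ.exec? n = some s → s = (I.tx n).arr) (t : ℝ) :
    blockage I σ t + v * numExec σ t
      = v * (univ.filter (fun n : Fin N => (I.tx n).arr ≤ t)).card := by
  have hsplit : univ.filter (fun n : Fin N => (I.tx n).arr ≤ t)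
      = univ.filter (fun n : Fin N => σ.exec? n = none ∧ (I.tx n).ddl ≤ t) ∪
        univ.filter (fun n : Fin N => ∃ s, σ.exec? n = some s ∧ s ≤ t) := by
    ext n
    simp only [Finset.mem_filter, Finset.mem_union, Finset.mem_univ, true_and]
    constructor
    · intro harr
      cases hx : σ.exec? n with
      | none => exact Or.inl ⟨rfl, by rw [hnb n]; exact harr⟩
      | some s => exact Or.inr ⟨s, rfl, by rw [hex n s hx]; exact harr⟩
    · rintro (⟨-, hddl⟩ | ⟨s, hs, hst⟩)
      · rw [hnb n] at hddl; exact hddl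
      · rw [← hex n s hs]; exact hst
  have hdisj : Disjoint
      (univ.filter (fun n : Fin N => σ.exec? n = none ∧ (I.tx n).ddl ≤ t))
      (univ.filter (fun n : Fin N => ∃ s, σ.exec? n = some s ∧ s ≤ t)) := by
    rw [Finset.disjoint_left]
    intro n h1 h2
    simp only [Finset.mem_filter, Finset.mem_univ, true_and] at h1 h2
    obtain ⟨s, hs, -⟩ := h2
    rw [h1.1] at hs
    cases hs
  have hblk : blockage I σ t
      = v * (univ.filter (fun n : Fin N => σ.exec? n = none ∧ (I.tx n).ddl ≤ t)).card := by
    unfold blockage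
    rw [Finset.sum_congr rfl (fun n _ => hamt n), Finset.sum_const, smul_eq_mul,
      mul_comm]
  rw [hblk, hsplit, Finset.card_union_of_disjoint hdisj]
  unfold numExec
  ring

end
end PFIProof

open PFIProof in
/-- **Corollary, PFI blockage optimality.** If every transaction has
zero buffering time (no buffers) and the fixed-amounts assumption holds, the PFI
policy minimizes the total blockage among all admissible policies at every time,
along every sample path. -/
theorem pfi_minimizes_blockage_no_buffers {N : ℕ} (I : PCInstance N) (v : ℕ)
    (hnb : ∀ n : Fin N, (I.tx n).ddl = (I.tx n).arr)
    (hfix : FixedAmounts I v) :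
    ∃ P : Policy N, IsPFI I P ∧
      ∀ π : Policy N, Admissible I π → ∀ t : ℝ, 0 ≤ t →
        blockage I P t ≤ blockage I π t := by

  obtain ⟨hv1, hvc, hamt, hinit⟩ := hfix
  have hvpos : (0:ℤ) < v := by exact_mod_cast hv1
  refine ⟨Ppol I v, Ppol_isPFI I v hamt, ?_⟩
  intro π hadmπ t ht0
  have hexπ : ∀ (n : Fin N) s, π.exec? n = some s → s = (I.tx n).arr :=
    fun n s h => exec_eq_arr I π hadmπ hnb h
  have hexP : ∀ (n : Fin N) s, (Ppol I v).exec? n = some s → s = (I.tx n).arr :=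
    fun n s h => (Ppol_exec_some I v h).1
  have hLU : LbI I v + v ≤ UbI I v := Lb_le_Ub_of_fix I v hv1 hvc hinit
  obtain ⟨hP0, hP0'⟩ := init_state I (Ppol I v) hexP
  obtain ⟨hπ0, hπ0'⟩ := init_state I π hexπ
  have hres0 : (I.QA0 : ℤ) % v = rhoI I v := rfl
  obtain ⟨hLb0, hUb0⟩ := mem_LU_of_range I v hv1 (by positivity)
    (by exact_mod_cast I.QA0_le) hres0
  have hmain := main_compare I v hv1 hamt hLU π hadmπ hexπ
    (baseL I).length (baseL I) (I.QA0 : ℤ) (-1 : ℝ) le_rfl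
    (baseL_sorted I) (baseL_nodup I)
    (fun n => ⟨fun _ => lt_of_lt_of_le (by norm_num) (I.tx n).arr_nonneg,
      fun _ => baseL_mem I n⟩)
    ⟨[], by simp [outL]⟩
    hP0 hLb0 hUb0 hres0
    (by rw [hP0', hπ0', hπ0]; simp)
    t (by linarith)
  -- deduce the count comparison
  have hcount : numExec π t ≤ numExec (Ppol I v) t := by
    have h1 : (v:ℤ) * numExec π t ≤ v * numExec (Ppol I v) t := by
      have := abs_nonneg (QAat I (Ppol I v) t - QAat I π t)
      linarith
    have h2 : (numExec π t : ℤ) ≤ (numExec (Ppol I v) t : ℤ) :=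
      le_of_mul_le_mul_left h1 hvpos
    exact_mod_cast h2
  have hbπ := blockage_split I v hamt hnb π hexπ t
  have hbP := blockage_split I v hamt hnb (Ppol I v) hexP t
  have hmul : v * numExec π t ≤ v * numExec (Ppol I v) t :=
    Nat.mul_le_mul_left v hcount
  omega
end

section
/- Suppose every transaction has zero buffering time (τ_n = t_n for all n, i.e. the channel has no buffers) and the fixed-amounts assumption holds. Then policy PFI maximizes the throughput among all admissible policies at every time, along every sample path: for every admissible policy π and every time t ∈ ℝ≥0, S^{PFI}(t) ≥ S^{π}(t). -/
open scoped Classical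
open Finset

variable {N : ℕ}

namespace PFIAux

variable {N : ℕ}

/-- interleave two lists, alternating, starting with the first. -/
def ivl {α : Type*} : List α → List α → List α
  | [], ys => ys
  | x :: xs, [] => x :: xs
  | x :: xs, y :: ys => x :: y :: ivl xs ys

lemma ivl_nil_left {α : Type*} (ys : List α) : ivl [] ys = ys := by cases ys <;> rfl

lemma ivl_nil_right {α : Type*} (xs : List α) : ivl xs [] = xs := by cases xs <;> rfl

lemma ivl_perm {α : Type*} : ∀ (xs ys : List α), (ivl xs ys).Perm (xs ++ ys)
  | [], ys => by simp [ivl]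
  | x :: xs, [] => by simp [ivl]
  | x :: xs, y :: ys => by
      show (x :: y :: ivl xs ys).Perm (x :: (xs ++ y :: ys))
      exact (((ivl_perm xs ys).cons y).trans List.perm_middle.symm).cons x

lemma mem_ivl {α : Type*} (a : α) (xs ys : List α) : a ∈ ivl xs ys ↔ a ∈ xs ∨ a ∈ ys := by
  rw [(ivl_perm xs ys).mem_iff]; simp

lemma length_ivl {α : Type*} (xs ys : List α) : (ivl xs ys).length = xs.length + ys.length :=
  by rw [(ivl_perm xs ys).length_eq]; simp

lemma nodup_ivl {α : Type*} {xs ys : List α} (h : (xs ++ ys).Nodup) : (ivl xs ys).Nodup :=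
  (ivl_perm xs ys).nodup_iff.mpr h


/-- Boolean feasibility test. -/
def feasB (I : PCInstance N) (n : Fin N) (q : ℤ) : Bool :=
  if (I.tx n).dir then decide (((I.tx n).amt : ℤ) ≤ q)
  else decide (q ≤ (I.cap : ℤ) - ((I.tx n).amt : ℤ))

lemma feasB_iff (I : PCInstance N) (n : Fin N) (q : ℤ) :
    feasB I n q = true ↔ FeasAt I (I.tx n).dir (I.tx n).amt q := by
  unfold feasB FeasAt
  by_cases h : (I.tx n).dir <;> simp [h]

/-- greedy processing of a list: resulting balance. -/
def gRun (I : PCInstance N) : ℤ → List (Fin N) → ℤ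
  | q, [] => q
  | q, n :: l => if feasB I n q then gRun I (q + delta (I.tx n)) l else gRun I q l

/-- greedy processing of a list: number executed. -/
def gCnt (I : PCInstance N) : ℤ → List (Fin N) → ℕ
  | _, [] => 0
  | q, n :: l => if feasB I n q then gCnt I (q + delta (I.tx n)) l + 1 else gCnt I q l

/-- the sorted list of distinct arrival instants -/
noncomputable def instL (I : PCInstance N) : List ℝ :=
  (univ.image (fun n : Fin N => (I.tx n).arr)).sort (· ≤ ·)

/-- index of the instant of transaction `n` -/
noncomputable def idxA (I : PCInstance N) (n : Fin N) : ℕ :=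
  (instL I).idxOf (I.tx n).arr

/-- transactions from B to A ("up", increasing `Q^A`) at instant `i`, sorted -/
noncomputable def upsL (I : PCInstance N) (i : ℕ) : List (Fin N) :=
  (univ.filter (fun n : Fin N => idxA I n = i ∧ (I.tx n).dir = false)).sort (· ≤ ·)

/-- transactions from A to B ("down") at instant `i`, sorted -/
noncomputable def dnsL (I : PCInstance N) (i : ℕ) : List (Fin N) :=
  (univ.filter (fun n : Fin N => idxA I n = i ∧ (I.tx n).dir = true)).sort (· ≤ ·)

/-- simulated balance of the PFI policy just before instant `i` -/
noncomputable def sim (I : PCInstance N) (v : ℕ) : ℕ → ℤ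
  | 0 => (I.QA0 : ℤ)
  | i + 1 => gRun I (sim I v i)
      (if sim I v i ≤ (I.cap : ℤ) - (v : ℤ) then ivl (upsL I i) (dnsL I i)
       else ivl (dnsL I i) (upsL I i))

/-- processing order of the PFI policy at instant `i` -/
noncomputable def blk (I : PCInstance N) (v : ℕ) (i : ℕ) : List (Fin N) :=
  if sim I v i ≤ (I.cap : ℤ) - (v : ℤ) then ivl (upsL I i) (dnsL I i)
  else ivl (dnsL I i) (upsL I i)

lemma sim_succ (I : PCInstance N) (v : ℕ) (i : ℕ) :
    sim I v (i + 1) = gRun I (sim I v i) (blk I v i) := rfl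

/-- the global PFI priority of transaction `n` -/
noncomputable def ordP (I : PCInstance N) (v : ℕ) (n : Fin N) : ℕ :=
  2 * N * idxA I n + (blk I v (idxA I n)).idxOf n

/-- the (at most one) transaction with PFI priority `k` -/
noncomputable def slot (I : PCInstance N) (v : ℕ) (k : ℕ) : Finset (Fin N) :=
  univ.filter (fun n => ordP I v n = k)

/-- the balance of the PFI policy before processing priority `k` -/
noncomputable def run (I : PCInstance N) (v : ℕ) : ℕ → ℤ
  | 0 => (I.QA0 : ℤ)
  | k + 1 => run I v k +
      ∑ n ∈ (slot I v k).filter (fun n => feasB I n (run I v k)), delta (I.tx n)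

/-- whether PFI executes transaction `n` -/
noncomputable def execB (I : PCInstance N) (v : ℕ) (n : Fin N) : Bool :=
  feasB I n (run I v (ordP I v n))


lemma arr_mem_instL (I : PCInstance N) (n : Fin N) : (I.tx n).arr ∈ instL I := by
  rw [instL, Finset.mem_sort]
  exact Finset.mem_image.2 ⟨n, Finset.mem_univ n, rfl⟩

lemma idxA_lt (I : PCInstance N) (n : Fin N) : idxA I n < (instL I).length :=
  List.idxOf_lt_length_iff.2 (arr_mem_instL I n)

lemma get_idxA (I : PCInstance N) (n : Fin N) :
    (instL I).get ⟨idxA I n, idxA_lt I n⟩ = (I.tx n).arr :=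
  List.idxOf_get _

lemma arr_eq_of_idx_eq' (I : PCInstance N) {m n : Fin N} (h : idxA I m = idxA I n) :
    (I.tx m).arr = (I.tx n).arr := by
  have h1 := get_idxA I m
  have h2 := get_idxA I n
  rw [← h1, ← h2]
  congr 1
  exact Fin.ext h

lemma arr_lt_of_idx_lt (I : PCInstance N) {m n : Fin N} (h : idxA I m < idxA I n) :
    (I.tx m).arr < (I.tx n).arr := by
  have hs := Finset.sortedLT_sort (univ.image (fun n : Fin N => (I.tx n).arr))
  have : (instL I).get ⟨idxA I m, idxA_lt I m⟩ < (instL I).get ⟨idxA I n, idxA_lt I n⟩ :=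
    (hs : StrictMono (instL I).get)
    (show (⟨idxA I m, idxA_lt I m⟩ : Fin _) < ⟨idxA I n, idxA_lt I n⟩ from h)
  rwa [get_idxA, get_idxA] at this

lemma idx_lt_of_arr_lt (I : PCInstance N) {m n : Fin N}
    (h : (I.tx m).arr < (I.tx n).arr) : idxA I m < idxA I n := by
  rcases lt_trichotomy (idxA I m) (idxA I n) with h'|h'|h'
  · exact h'
  · exact absurd (arr_eq_of_idx_eq' I h') (ne_of_lt h)
  · exact absurd (arr_lt_of_idx_lt I h') (by linarith)

lemma idx_le_of_arr_le (I : PCInstance N) {m n : Fin N}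
    (h : (I.tx m).arr ≤ (I.tx n).arr) : idxA I m ≤ idxA I n := by
  by_contra h'
  have := arr_lt_of_idx_lt I (show idxA I n < idxA I m by omega)
  linarith

lemma arr_le_of_idx_le (I : PCInstance N) {m n : Fin N} (h : idxA I m ≤ idxA I n) :
    (I.tx m).arr ≤ (I.tx n).arr := by
  rcases eq_or_lt_of_le h with h'|h'
  · exact (arr_eq_of_idx_eq' I h').le
  · exact le_of_lt (arr_lt_of_idx_lt I h')

lemma arr_eq_of_idx_eq (I : PCInstance N) {m n : Fin N} (h : idxA I m = idxA I n) :
    (I.tx m).arr = (I.tx n).arr :=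
  le_antisymm (arr_le_of_idx_le I h.le) (arr_le_of_idx_le I h.ge)

lemma mem_upsL (I : PCInstance N) {i : ℕ} {n : Fin N} :
    n ∈ upsL I i ↔ idxA I n = i ∧ (I.tx n).dir = false := by
  rw [upsL, Finset.mem_sort, Finset.mem_filter]; simp

lemma mem_dnsL (I : PCInstance N) {i : ℕ} {n : Fin N} :
    n ∈ dnsL I i ↔ idxA I n = i ∧ (I.tx n).dir = true := by
  rw [dnsL, Finset.mem_sort, Finset.mem_filter]; simp

lemma mem_blk (I : PCInstance N) (v : ℕ) {i : ℕ} {n : Fin N} :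
    n ∈ blk I v i ↔ idxA I n = i := by
  rw [blk]
  constructor
  · intro h
    rcases (by split at h <;>
      [exact (mem_ivl _ _ _).1 h; exact Or.symm ((mem_ivl _ _ _).1 h)] :
        n ∈ upsL I i ∨ n ∈ dnsL I i) with h'|h'
    · exact ((mem_upsL I).1 h').1
    · exact ((mem_dnsL I).1 h').1
  · intro h
    have : n ∈ upsL I i ∨ n ∈ dnsL I i := by
      rcases Bool.eq_false_or_eq_true (I.tx n).dir with hd|hd
      · exact Or.inr ((mem_dnsL I).2 ⟨h, hd⟩)
      · exact Or.inl ((mem_upsL I).2 ⟨h, hd⟩)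
    split <;> [exact (mem_ivl _ _ _).2 this; exact (mem_ivl _ _ _).2 this.symm]

lemma nodup_app_ud (I : PCInstance N) (i : ℕ) :
    ((upsL I i) ++ (dnsL I i)).Nodup ∧ ((dnsL I i) ++ (upsL I i)).Nodup := by
  have h1 := Finset.sort_nodup (univ.filter (fun n : Fin N => idxA I n = i ∧ (I.tx n).dir = false)) (· ≤ ·)
  have h2 := Finset.sort_nodup (univ.filter (fun n : Fin N => idxA I n = i ∧ (I.tx n).dir = true)) (· ≤ ·)
  have hd : ∀ n, n ∈ upsL I i → n ∈ dnsL I i → False := by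
    intro n hn hn'
    have := ((mem_upsL I).1 hn).2
    have := ((mem_dnsL I).1 hn').2
    simp_all
  constructor
  · exact List.Nodup.append h1 h2 (fun a ha hb => hd a ha hb)
  · exact List.Nodup.append h2 h1 (fun a ha hb => hd a hb ha)

lemma blk_nodup (I : PCInstance N) (v : ℕ) (i : ℕ) : (blk I v i).Nodup := by
  rw [blk]; split
  · exact nodup_ivl (nodup_app_ud I i).1
  · exact nodup_ivl (nodup_app_ud I i).2

lemma blk_len_le (I : PCInstance N) (v : ℕ) (i : ℕ) : (blk I v i).length ≤ N := by
  have := List.Nodup.length_le_card (blk_nodup I v i)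
  simpa using this

lemma idxOf_blk_lt (I : PCInstance N) (v : ℕ) (n : Fin N) :
    (blk I v (idxA I n)).idxOf n < (blk I v (idxA I n)).length :=
  List.idxOf_lt_length_iff.2 ((mem_blk I v).2 rfl)

lemma nat_decomp {W i r i' r' : ℕ} (h : r < W) (h' : r' < W)
    (e : W * i + r = W * i' + r') : i = i' ∧ r = r' := by
  have : i = i' := by
    rcases lt_trichotomy i i' with hl|hl|hl
    · have h2 : W * i + W ≤ W * i' := by
        have := Nat.mul_le_mul_left W hl
        rwa [Nat.mul_succ] at this
      omega
    · exact hl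
    · have h2 : W * i' + W ≤ W * i := by
        have := Nat.mul_le_mul_left W hl
        rwa [Nat.mul_succ] at this
      omega
  subst this
  omega

lemma ordP_inj (I : PCInstance N) (v : ℕ) : Function.Injective (ordP I v) := by
  intro m n h
  have hN : 0 < N := Fin.pos m
  have hm := idxOf_blk_lt I v m
  have hn := idxOf_blk_lt I v n
  have hm' : (blk I v (idxA I m)).idxOf m < 2 * N :=
    lt_of_lt_of_le hm (le_trans (blk_len_le I v _) (by omega))
  have hn' : (blk I v (idxA I n)).idxOf n < 2 * N :=
    lt_of_lt_of_le hn (le_trans (blk_len_le I v _) (by omega))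
  obtain ⟨hi, hr⟩ := nat_decomp hm' hn' h
  rw [hi] at hr hm
  exact (List.idxOf_inj ((mem_blk I v).2 hi)).1 hr

lemma slot_eq (I : PCInstance N) (v : ℕ) {n : Fin N} {k : ℕ} (h : ordP I v n = k) :
    slot I v k = {n} := by
  ext m
  simp only [slot, Finset.mem_filter, Finset.mem_univ, true_and, Finset.mem_singleton]
  constructor
  · intro hm; exact ordP_inj I v (hm.trans h.symm)
  · rintro rfl; exact h

lemma slot_empty (I : PCInstance N) (v : ℕ) {k : ℕ} (h : ¬ ∃ n, ordP I v n = k) :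
    slot I v k = ∅ := by
  ext m
  simp only [slot, Finset.mem_filter, Finset.mem_univ, true_and, Finset.notMem_empty,
    iff_false]
  exact fun hm => h ⟨m, hm⟩

lemma run_succ_empty (I : PCInstance N) (v : ℕ) {k : ℕ} (h : slot I v k = ∅) :
    run I v (k + 1) = run I v k := by
  rw [run, h]; simp

lemma run_succ_some (I : PCInstance N) (v : ℕ) {n : Fin N} {k : ℕ} (h : ordP I v n = k) :
    run I v (k + 1) =
      if feasB I n (run I v k) then run I v k + delta (I.tx n) else run I v k := by
  rw [run, slot_eq I v h]
  by_cases hf : feasB I n (run I v k) <;>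
    simp [Finset.filter_singleton, hf, Finset.sum_singleton]

lemma run_const (I : PCInstance N) (v : ℕ) (a : ℕ) :
    ∀ m, (∀ r, r < m → slot I v (a + r) = ∅) → run I v (a + m) = run I v a := by
  intro m
  induction m with
  | zero => intro _; rfl
  | succ m ih =>
    intro h
    have : a + (m+1) = (a + m) + 1 := by omega
    rw [this, run_succ_empty I v (h m (by omega)), ih (fun r hr => h r (by omega))]


lemma slot_get (I : PCInstance N) (v : ℕ) (i : ℕ) {r : ℕ} (hr : r < (blk I v i).length) :
    ordP I v ((blk I v i).get ⟨r, hr⟩) = 2 * N * i + r := by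
  set n := (blk I v i).get ⟨r, hr⟩ with hn
  have hmem : n ∈ blk I v i := List.get_mem _ _
  have hidx : idxA I n = i := (mem_blk I v).1 hmem
  have hio : (blk I v i).idxOf n = r := by
    rw [hn]
    simpa using List.Nodup.idxOf_getElem (blk_nodup I v i) r hr
  rw [ordP, hidx, hio]

lemma slot_vacant (I : PCInstance N) (v : ℕ) (i : ℕ) {r : ℕ}
    (h1 : (blk I v i).length ≤ r) (h2 : r < 2 * N) :
    slot I v (2 * N * i + r) = ∅ := by
  apply slot_empty
  rintro ⟨n, hn⟩
  have hN : 0 < N := Fin.pos n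
  have hlt := idxOf_blk_lt I v n
  have hlt' : (blk I v (idxA I n)).idxOf n < 2 * N :=
    lt_of_lt_of_le hlt (le_trans (blk_len_le I v _) (by omega))
  obtain ⟨hi, hr⟩ := nat_decomp hlt' h2 hn
  rw [hi] at hlt hr
  omega

lemma runList (I : PCInstance N) (v : ℕ) :
    ∀ (l : List (Fin N)) (base : ℕ),
      (∀ r (hr : r < l.length), ordP I v (l.get ⟨r, hr⟩) = base + r) →
      run I v (base + l.length) = gRun I (run I v base) l ∧
        l.countP (fun n => execB I v n) = gCnt I (run I v base) l := by
  intro l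
  induction l with
  | nil => intro base _; exact ⟨rfl, rfl⟩
  | cons n l' ih =>
    intro base hslot
    have h0 : ordP I v n = base := by
      have := hslot 0 (by simp)
      simpa using this
    have hrun1 : run I v (base + 1) =
        if feasB I n (run I v base) then run I v base + delta (I.tx n)
        else run I v base := run_succ_some I v h0
    have hexec : execB I v n = feasB I n (run I v base) := by
      rw [execB, h0]
    have hsh : ∀ r (hr : r < l'.length),
        ordP I v (l'.get ⟨r, hr⟩) = (base + 1) + r := by
      intro r hr
      have h' := hslot (r+1) (by simp only [List.length_cons]; omega)
      exact h'.trans (by omega)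
    obtain ⟨ihr, ihc⟩ := ih (base + 1) hsh
    have hlen : base + (n :: l').length = (base + 1) + l'.length := by
      simp; omega
    constructor
    · rw [hlen, ihr, gRun]
      by_cases hf : feasB I n (run I v base)
      · rw [if_pos hf]
        congr 1
        rw [hrun1, if_pos hf]
      · rw [if_neg hf]
        congr 1
        rw [hrun1, if_neg hf]
    · rw [List.countP_cons, ihc, gCnt]
      by_cases hf : feasB I n (run I v base)
      · have e := hrun1
        rw [if_pos hf] at e
        rw [if_pos hf, e]
        simp [hexec, hf]
      · have e := hrun1
        rw [if_neg hf] at e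
        rw [if_neg hf, e]
        simp [hexec, hf]

lemma run_sim (I : PCInstance N) (v : ℕ) : ∀ i, run I v (2 * N * i) = sim I v i := by
  intro i
  induction i with
  | zero => rfl
  | succ i ih =>
    have hlen := blk_len_le I v i
    have h1 := (runList I v (blk I v i) (2 * N * i) (fun r hr => slot_get I v i hr)).1
    have h2 : run I v (2 * N * i + (blk I v i).length + (2 * N - (blk I v i).length)) =
        run I v (2 * N * i + (blk I v i).length) := by
      apply run_const
      intro r hr
      have : 2 * N * i + (blk I v i).length + r = 2 * N * i + ((blk I v i).length + r) := by
        omega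
      rw [this]
      exact slot_vacant I v i (by omega) (by omega)
    have h3 : 2 * N * (i + 1) = 2 * N * i + (blk I v i).length + (2 * N - (blk I v i).length) := by
      have : 2 * N * (i+1) = 2 * N * i + 2 * N := by ring
      omega
    rw [h3, h2, h1, ih, sim_succ]

lemma blk_countP (I : PCInstance N) (v : ℕ) (i : ℕ) :
    (blk I v i).countP (fun n => execB I v n) = gCnt I (sim I v i) (blk I v i) := by
  have := (runList I v (blk I v i) (2 * N * i) (fun r hr => slot_get I v i hr)).2
  rwa [run_sim] at this

lemma run_blk_end (I : PCInstance N) (v : ℕ) (i : ℕ) :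
    run I v (2 * N * i + (blk I v i).length) = gRun I (sim I v i) (blk I v i) := by
  have := (runList I v (blk I v i) (2 * N * i) (fun r hr => slot_get I v i hr)).1
  rwa [run_sim] at this


def allUp (I : PCInstance N) (l : List (Fin N)) : Prop := ∀ n ∈ l, (I.tx n).dir = false
def allDn (I : PCInstance N) (l : List (Fin N)) : Prop := ∀ n ∈ l, (I.tx n).dir = true

/-- characterization of the greedy result on one instant -/
def Conc (I : PCInstance N) (v : ℕ) (q : ℤ) (l : List (Fin N)) (u d : ℕ) : Prop :=
  0 ≤ gRun I q l ∧ gRun I q l ≤ (I.cap : ℤ) ∧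
  (d ≤ u → ∃ k : ℕ, k ≤ u - d ∧ gRun I q l = q + (v : ℤ) * k ∧
      ((k : ℕ) = u - d ∨ (I.cap : ℤ) - v < gRun I q l) ∧ gCnt I q l = 2 * d + k) ∧
  (u ≤ d → ∃ k : ℕ, k ≤ d - u ∧ gRun I q l = q - (v : ℤ) * k ∧
      ((k : ℕ) = d - u ∨ gRun I q l < (v : ℤ)) ∧ gCnt I q l = 2 * u + k)

section Char

variable (I : PCInstance N) (v : ℕ) (hamt : ∀ n, (I.tx n).amt = v)

include hamt

lemma up_delta {n : Fin N} (hd : (I.tx n).dir = false) : delta (I.tx n) = (v : ℤ) := by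
  simp [delta, hd, hamt n]

lemma dn_delta {n : Fin N} (hd : (I.tx n).dir = true) : delta (I.tx n) = -(v : ℤ) := by
  simp [delta, hd, hamt n]

lemma up_feas {n : Fin N} (hd : (I.tx n).dir = false) (q : ℤ) :
    feasB I n q = true ↔ q ≤ (I.cap : ℤ) - v := by
  simp [feasB, hd, hamt n]

lemma dn_feas {n : Fin N} (hd : (I.tx n).dir = true) (q : ℤ) :
    feasB I n q = true ↔ (v : ℤ) ≤ q := by
  simp [feasB, hd, hamt n]

lemma stuck_up : ∀ (l : List (Fin N)) (q : ℤ), allUp I l → (I.cap : ℤ) - v < q →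
    gRun I q l = q ∧ gCnt I q l = 0 := by
  intro l
  induction l with
  | nil => intro q _ _; exact ⟨rfl, rfl⟩
  | cons n l ih =>
    intro q hall hq
    have hd := hall n (by simp)
    have hf : ¬ feasB I n q = true := by
      rw [up_feas I v hamt hd]; linarith
    rw [gRun, if_neg hf, gCnt, if_neg hf]
    exact ih q (fun m hm => hall m (by simp [hm])) hq

lemma stuck_dn : ∀ (l : List (Fin N)) (q : ℤ), allDn I l → q < (v : ℤ) →
    gRun I q l = q ∧ gCnt I q l = 0 := by
  intro l
  induction l with
  | nil => intro q _ _; exact ⟨rfl, rfl⟩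
  | cons n l ih =>
    intro q hall hq
    have hd := hall n (by simp)
    have hf : ¬ feasB I n q = true := by
      rw [dn_feas I v hamt hd]; linarith
    rw [gRun, if_neg hf, gCnt, if_neg hf]
    exact ih q (fun m hm => hall m (by simp [hm])) hq

lemma ascend : ∀ (l : List (Fin N)) (q : ℤ), allUp I l → 0 ≤ q → q ≤ (I.cap : ℤ) →
    ∃ k : ℕ, k ≤ l.length ∧ gRun I q l = q + (v : ℤ) * k ∧
      (k = l.length ∨ (I.cap : ℤ) - v < gRun I q l) ∧ gCnt I q l = k ∧
      0 ≤ gRun I q l ∧ gRun I q l ≤ (I.cap : ℤ) := by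
  have hv0 : (0 : ℤ) ≤ v := by positivity
  intro l
  induction l with
  | nil =>
    intro q _ h0 hc
    exact ⟨0, by simp, by simp [gRun], Or.inl rfl, rfl, h0, hc⟩
  | cons n l ih =>
    intro q hall h0 hc
    have hd := hall n (by simp)
    by_cases hq : q ≤ (I.cap : ℤ) - v
    · have hf : feasB I n q = true := (up_feas I v hamt hd q).2 hq
      have e1 : gRun I q (n :: l) = gRun I (q + (v : ℤ)) l := by
        rw [gRun, if_pos hf, up_delta I v hamt hd]
      have e2 : gCnt I q (n :: l) = gCnt I (q + (v : ℤ)) l + 1 := by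
        rw [gCnt, if_pos hf, up_delta I v hamt hd]
      obtain ⟨k, hk1, hk2, hk3, hk4, hk5, hk6⟩ :=
        ih (q + v) (fun m hm => hall m (by simp [hm])) (by linarith) (by linarith)
      refine ⟨k + 1, by simp only [List.length_cons]; omega, ?_, ?_,
        by rw [e2, hk4], by rw [e1]; exact hk5, by rw [e1]; exact hk6⟩
      · rw [e1, hk2]; push_cast; ring
      · rcases hk3 with h|h
        · exact Or.inl (by simp only [List.length_cons]; omega)
        · exact Or.inr (by rw [e1]; exact h)
    · obtain ⟨h1, h2⟩ := stuck_up I v hamt (n :: l) q hall (by linarith)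
      exact ⟨0, by simp, by simp [h1], Or.inr (by rw [h1]; linarith), h2, by rw [h1]; exact h0,
        by rw [h1]; exact hc⟩

lemma descend : ∀ (l : List (Fin N)) (q : ℤ), allDn I l → 0 ≤ q → q ≤ (I.cap : ℤ) →
    ∃ k : ℕ, k ≤ l.length ∧ gRun I q l = q - (v : ℤ) * k ∧
      (k = l.length ∨ gRun I q l < (v : ℤ)) ∧ gCnt I q l = k ∧
      0 ≤ gRun I q l ∧ gRun I q l ≤ (I.cap : ℤ) := by
  have hv0 : (0 : ℤ) ≤ v := by positivity
  intro l
  induction l with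
  | nil =>
    intro q _ h0 hc
    exact ⟨0, by simp, by simp [gRun], Or.inl rfl, rfl, h0, hc⟩
  | cons n l ih =>
    intro q hall h0 hc
    have hd := hall n (by simp)
    by_cases hq : (v : ℤ) ≤ q
    · have hf : feasB I n q = true := (dn_feas I v hamt hd q).2 hq
      have e1 : gRun I q (n :: l) = gRun I (q + -(v : ℤ)) l := by
        rw [gRun, if_pos hf, dn_delta I v hamt hd]
      have e2 : gCnt I q (n :: l) = gCnt I (q + -(v : ℤ)) l + 1 := by
        rw [gCnt, if_pos hf, dn_delta I v hamt hd]
      obtain ⟨k, hk1, hk2, hk3, hk4, hk5, hk6⟩ :=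
        ih (q + -(v : ℤ)) (fun m hm => hall m (by simp [hm])) (by linarith) (by linarith)
      refine ⟨k + 1, by simp only [List.length_cons]; omega, ?_, ?_,
        by rw [e2, hk4], by rw [e1]; exact hk5, by rw [e1]; exact hk6⟩
      · rw [e1, hk2]; push_cast; ring
      · rcases hk3 with h|h
        · exact Or.inl (by simp only [List.length_cons]; omega)
        · exact Or.inr (by rw [e1]; exact h)
    · obtain ⟨h1, h2⟩ := stuck_dn I v hamt (n :: l) q hall (by linarith)
      exact ⟨0, by simp, by simp [h1], Or.inr (by rw [h1]; linarith), h2, by rw [h1]; exact h0,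
        by rw [h1]; exact hc⟩

lemma conc_ivl_up : ∀ (us ds : List (Fin N)) (q : ℤ), allUp I us → allDn I ds →
    0 ≤ q → q ≤ (I.cap : ℤ) - v →
    Conc I v q (ivl us ds) us.length ds.length := by
  have hv0 : (0 : ℤ) ≤ v := by positivity
  intro us
  induction us with
  | nil =>
    intro ds q _ hdn h0 hc
    rw [ivl_nil_left]
    simp only [List.length_nil]
    obtain ⟨k, hk1, hk2, hk3, hk4, hk5, hk6⟩ := descend I v hamt ds q hdn h0 (by linarith)
    refine ⟨hk5, hk6, ?_, ?_⟩
    · intro h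
      have hk0 : k = 0 := by omega
      subst hk0
      refine ⟨0, by omega, by simpa using hk2, Or.inl (by omega), by omega⟩
    · intro _
      refine ⟨k, by omega, hk2, ?_, by omega⟩
      rcases hk3 with h|h
      · exact Or.inl (by omega)
      · exact Or.inr h
  | cons x xs ih =>
    intro ds q hup hdn h0 hc
    cases ds with
    | nil =>
      rw [ivl_nil_right]
      simp only [List.length_nil]
      obtain ⟨k, hk1, hk2, hk3, hk4, hk5, hk6⟩ :=
        ascend I v hamt (x :: xs) q hup h0 (by linarith)
      refine ⟨hk5, hk6, ?_, ?_⟩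
      · intro _
        refine ⟨k, by omega, hk2, ?_, by omega⟩
        rcases hk3 with h|h
        · exact Or.inl (by omega)
        · exact Or.inr h
      · intro h
        simp only [List.length_cons] at h
        have hk0 : k = 0 := by omega
        subst hk0
        exact absurd hk1 (by omega)
    | cons y ys =>
      have hdx : (I.tx x).dir = false := hup x (by simp)
      have hdy : (I.tx y).dir = true := hdn y (by simp)
      have hfx : feasB I x q = true := (up_feas I v hamt hdx q).2 hc
      have hfy : feasB I y (q + (v : ℤ)) = true := (dn_feas I v hamt hdy _).2 (by linarith)
      have hqq : q + (v : ℤ) + -(v : ℤ) = q := by ring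
      have step1 : gRun I q (ivl (x :: xs) (y :: ys)) = gRun I q (ivl xs ys) := by
        show gRun I q (x :: y :: ivl xs ys) = _
        rw [gRun, if_pos hfx, up_delta I v hamt hdx, gRun, if_pos hfy,
          dn_delta I v hamt hdy, hqq]
      have step2 : gCnt I q (ivl (x :: xs) (y :: ys)) = gCnt I q (ivl xs ys) + 2 := by
        show gCnt I q (x :: y :: ivl xs ys) = _
        rw [gCnt, if_pos hfx, up_delta I v hamt hdx, gCnt, if_pos hfy,
          dn_delta I v hamt hdy, hqq]
      obtain ⟨c1, c2, c3, c4⟩ :=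
        ih ys q (fun m hm => hup m (by simp [hm])) (fun m hm => hdn m (by simp [hm])) h0 hc
      simp only [List.length_cons]
      refine ⟨by rw [step1]; exact c1, by rw [step1]; exact c2, ?_, ?_⟩
      · intro h
        obtain ⟨k, hk1, hk2, hk3, hk4⟩ := c3 (by omega)
        refine ⟨k, by omega, by rw [step1, hk2], ?_, by rw [step2, hk4]; omega⟩
        rcases hk3 with h'|h'
        · exact Or.inl (by omega)
        · exact Or.inr (by rw [step1]; exact h')
      · intro h
        obtain ⟨k, hk1, hk2, hk3, hk4⟩ := c4 (by omega)
        refine ⟨k, by omega, by rw [step1, hk2], ?_, by rw [step2, hk4]; omega⟩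
        rcases hk3 with h'|h'
        · exact Or.inl (by omega)
        · exact Or.inr (by rw [step1]; exact h')

lemma conc_ivl_dn : ∀ (ds us : List (Fin N)) (q : ℤ), allUp I us → allDn I ds →
    (v : ℤ) ≤ q → q ≤ (I.cap : ℤ) →
    Conc I v q (ivl ds us) us.length ds.length := by
  have hv0 : (0 : ℤ) ≤ v := by positivity
  intro ds
  induction ds with
  | nil =>
    intro us q hup _ h0 hc
    rw [ivl_nil_left]
    simp only [List.length_nil]
    obtain ⟨k, hk1, hk2, hk3, hk4, hk5, hk6⟩ :=
      ascend I v hamt us q hup (by linarith) hc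
    refine ⟨hk5, hk6, ?_, ?_⟩
    · intro _
      refine ⟨k, by omega, hk2, ?_, by omega⟩
      rcases hk3 with h|h
      · exact Or.inl (by omega)
      · exact Or.inr h
    · intro h
      have hk0 : k = 0 := by omega
      subst hk0
      refine ⟨0, by omega, by simpa using hk2, Or.inl (by omega), by omega⟩
  | cons y ys ih =>
    intro us q hup hdn h0 hc
    cases us with
    | nil =>
      rw [ivl_nil_right]
      simp only [List.length_nil]
      obtain ⟨k, hk1, hk2, hk3, hk4, hk5, hk6⟩ :=
        descend I v hamt (y :: ys) q hdn (by linarith) hc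
      refine ⟨hk5, hk6, ?_, ?_⟩
      · intro h
        simp only [List.length_cons] at h
        have hk0 : k = 0 := by omega
        subst hk0
        exact absurd hk1 (by omega)
      · intro _
        refine ⟨k, by omega, hk2, ?_, by omega⟩
        rcases hk3 with h|h
        · exact Or.inl (by omega)
        · exact Or.inr h
    | cons x xs =>
      have hdx : (I.tx x).dir = false := hup x (by simp)
      have hdy : (I.tx y).dir = true := hdn y (by simp)
      have hfy : feasB I y q = true := (dn_feas I v hamt hdy q).2 h0
      have hfx : feasB I x (q + -(v : ℤ)) = true := (up_feas I v hamt hdx _).2 (by linarith)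
      have hqq : q + -(v : ℤ) + (v : ℤ) = q := by ring
      have step1 : gRun I q (ivl (y :: ys) (x :: xs)) = gRun I q (ivl ys xs) := by
        show gRun I q (y :: x :: ivl ys xs) = _
        rw [gRun, if_pos hfy, dn_delta I v hamt hdy, gRun, if_pos hfx,
          up_delta I v hamt hdx, hqq]
      have step2 : gCnt I q (ivl (y :: ys) (x :: xs)) = gCnt I q (ivl ys xs) + 2 := by
        show gCnt I q (y :: x :: ivl ys xs) = _
        rw [gCnt, if_pos hfy, dn_delta I v hamt hdy, gCnt, if_pos hfx,
          up_delta I v hamt hdx, hqq]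
      obtain ⟨c1, c2, c3, c4⟩ :=
        ih xs q (fun m hm => hup m (by simp [hm])) (fun m hm => hdn m (by simp [hm])) h0 hc
      simp only [List.length_cons]
      refine ⟨by rw [step1]; exact c1, by rw [step1]; exact c2, ?_, ?_⟩
      · intro h
        obtain ⟨k, hk1, hk2, hk3, hk4⟩ := c3 (by omega)
        refine ⟨k, by omega, by rw [step1, hk2], ?_, by rw [step2, hk4]; omega⟩
        rcases hk3 with h'|h'
        · exact Or.inl (by omega)
        · exact Or.inr (by rw [step1]; exact h')
      · intro h
        obtain ⟨k, hk1, hk2, hk3, hk4⟩ := c4 (by omega)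
        refine ⟨k, by omega, by rw [step1, hk2], ?_, by rw [step2, hk4]; omega⟩
        rcases hk3 with h'|h'
        · exact Or.inl (by omega)
        · exact Or.inr (by rw [step1]; exact h')

omit hamt in
lemma allUp_upsL (i : ℕ) : allUp I (upsL I i) := fun n hn => ((mem_upsL I).1 hn).2

omit hamt in
lemma allDn_dnsL (i : ℕ) : allDn I (dnsL I i) := fun n hn => ((mem_dnsL I).1 hn).2

lemma conc_blk (i : ℕ) (h0 : 0 ≤ sim I v i) (hc : sim I v i ≤ (I.cap : ℤ))
    (hd : sim I v i ≤ (I.cap : ℤ) - v ∨ (v : ℤ) ≤ sim I v i) :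
    Conc I v (sim I v i) (blk I v i) (upsL I i).length (dnsL I i).length := by
  rw [blk]
  by_cases h : sim I v i ≤ (I.cap : ℤ) - (v : ℤ)
  · rw [if_pos h]
    exact conc_ivl_up I v hamt _ _ _ (allUp_upsL I i) (allDn_dnsL I i) h0 h
  · rw [if_neg h]
    rcases hd with hd|hd
    · exact absurd hd h
    · exact conc_ivl_dn I v hamt _ _ _ (allUp_upsL I i) (allDn_dnsL I i) hd hc

lemma siminv (hv : 1 ≤ v) (hinit : v ≤ I.QA0 ∨ v + I.QA0 ≤ I.cap) :
    ∀ i, 0 ≤ sim I v i ∧ sim I v i ≤ (I.cap : ℤ) ∧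
      (sim I v i ≤ (I.cap : ℤ) - v ∨ (v : ℤ) ≤ sim I v i) := by
  have hv0 : (0 : ℤ) ≤ v := by positivity
  intro i
  induction i with
  | zero =>
    have h00 : sim I v 0 = (I.QA0 : ℤ) := rfl
    rw [h00]
    refine ⟨by positivity, by exact_mod_cast I.QA0_le, ?_⟩
    rcases hinit with h|h
    · exact Or.inr (by exact_mod_cast h)
    · exact Or.inl (by omega)
  | succ i ih =>
    obtain ⟨h0, hc, hd⟩ := ih
    obtain ⟨c1, c2, c3, c4⟩ := conc_blk I v hamt i h0 hc hd
    rw [← sim_succ] at c1 c2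
    refine ⟨c1, c2, ?_⟩
    rcases le_total (dnsL I i).length (upsL I i).length with hud|hud
    · obtain ⟨k, hk1, hk2, hk3, hk4⟩ := c3 hud
      rw [← sim_succ] at hk2
      rcases Nat.eq_zero_or_pos k with hk|hk
      · subst hk
        simp only [Nat.cast_zero, mul_zero, add_zero] at hk2
        rw [hk2]
        exact hd
      · right
        have h1k : (1 : ℤ) ≤ (k : ℤ) := by exact_mod_cast hk
        have hm : (v : ℤ) * 1 ≤ (v : ℤ) * k := mul_le_mul_of_nonneg_left h1k hv0
        rw [hk2]
        linarith
    · obtain ⟨k, hk1, hk2, hk3, hk4⟩ := c4 hud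
      rw [← sim_succ] at hk2
      rcases Nat.eq_zero_or_pos k with hk|hk
      · subst hk
        simp only [Nat.cast_zero, mul_zero, sub_zero] at hk2
        rw [hk2]
        exact hd
      · left
        have h1k : (1 : ℤ) ≤ (k : ℤ) := by exact_mod_cast hk
        have hm : (v : ℤ) * 1 ≤ (v : ℤ) * k := mul_le_mul_of_nonneg_left h1k hv0
        rw [hk2]
        linarith

end Char


/-- The PFI policy. -/
noncomputable def Ppol (I : PCInstance N) (v : ℕ) : Policy N :=
  ⟨fun n => if execB I v n then some (I.tx n).arr else none, ordP I v, ordP_inj I v⟩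

lemma Ppol_exec_iff (I : PCInstance N) (v : ℕ) {n : Fin N} {s : ℝ} :
    (Ppol I v).exec? n = some s ↔ execB I v n = true ∧ s = (I.tx n).arr := by
  show (if execB I v n then some (I.tx n).arr else none) = some s ↔ _
  by_cases h : execB I v n <;> simp [h, eq_comm]

lemma Ppol_isSome_iff (I : PCInstance N) (v : ℕ) {n : Fin N} :
    ((Ppol I v).exec? n).isSome = true ↔ execB I v n = true := by
  show (if execB I v n then some (I.tx n).arr else none).isSome = true ↔ _
  by_cases h : execB I v n <;> simp [h]

lemma ordP_lt_of_arr_lt (I : PCInstance N) (v : ℕ) {m n : Fin N}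
    (h : (I.tx m).arr < (I.tx n).arr) : ordP I v m < ordP I v n := by
  have hN : 0 < N := Fin.pos m
  have hi := idx_lt_of_arr_lt I h
  have hr := idxOf_blk_lt I v m
  have hlen := blk_len_le I v (idxA I m)
  have h2 : 2 * N * (idxA I m) + 2 * N ≤ 2 * N * (idxA I n) := by
    have := Nat.mul_le_mul_left (2 * N) (show idxA I m + 1 ≤ idxA I n by omega)
    rwa [Nat.mul_succ] at this
  have em : ordP I v m = 2 * N * idxA I m + (blk I v (idxA I m)).idxOf m := rfl
  have en : ordP I v n = 2 * N * idxA I n + (blk I v (idxA I n)).idxOf n := rfl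
  omega

lemma ordP_lt_iff (I : PCInstance N) (v : ℕ) (m n : Fin N) :
    ordP I v m < ordP I v n ↔
      ((I.tx m).arr < (I.tx n).arr ∨
        ((I.tx m).arr = (I.tx n).arr ∧ ordP I v m < ordP I v n)) := by
  constructor
  · intro h
    rcases lt_trichotomy (I.tx m).arr (I.tx n).arr with h'|h'|h'
    · exact Or.inl h'
    · exact Or.inr ⟨h', h⟩
    · exact absurd (ordP_lt_of_arr_lt I v h') (by omega)
  · rintro (h | ⟨_, h⟩)
    · exact ordP_lt_of_arr_lt I v h
    · exact h

lemma run_sum (I : PCInstance N) (v : ℕ) : ∀ k,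
    run I v k = (I.QA0 : ℤ) +
      ∑ m ∈ univ.filter (fun m => execB I v m = true ∧ ordP I v m < k), delta (I.tx m) := by
  intro k
  induction k with
  | zero => simp [run]
  | succ k ih =>
    have hset : (slot I v k).filter (fun n => feasB I n (run I v k)) =
        univ.filter (fun m => execB I v m = true ∧ ordP I v m = k) := by
      ext m
      simp only [slot, Finset.mem_filter, Finset.mem_univ, true_and]
      constructor
      · rintro ⟨h1, h2⟩
        refine ⟨?_, h1⟩
        rw [execB, h1]
        exact h2
      · rintro ⟨h1, h2⟩
        refine ⟨h2, ?_⟩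
        rw [execB, h2] at h1
        exact h1
    have hsplit : univ.filter (fun m => execB I v m = true ∧ ordP I v m < k + 1) =
        univ.filter (fun m => execB I v m = true ∧ ordP I v m < k) ∪
          univ.filter (fun m => execB I v m = true ∧ ordP I v m = k) := by
      ext m
      simp only [Finset.mem_filter, Finset.mem_univ, true_and, Finset.mem_union]
      constructor
      · rintro ⟨h1, h2⟩
        rcases Nat.lt_succ_iff_lt_or_eq.1 h2 with h|h
        · exact Or.inl ⟨h1, h⟩
        · exact Or.inr ⟨h1, h⟩
      · rintro (⟨h1, h2⟩ | ⟨h1, h2⟩)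
        · exact ⟨h1, by omega⟩
        · exact ⟨h1, by omega⟩
    have hdisj : Disjoint
        (univ.filter (fun m => execB I v m = true ∧ ordP I v m < k))
        (univ.filter (fun m => execB I v m = true ∧ ordP I v m = k)) := by
      rw [Finset.disjoint_left]
      intro m h1 h2
      simp only [Finset.mem_filter] at h1 h2
      omega
    rw [run, hset, ih, hsplit, Finset.sum_union hdisj]
    ring

lemma QAbefore_P (I : PCInstance N) (v : ℕ) (n : Fin N) :
    QAbefore I (Ppol I v) n = run I v (ordP I v n) := by
  rw [QAbefore, run_sum]
  congr 1
  apply Finset.sum_congr _ (fun x _ => rfl)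
  apply Finset.filter_congr
  intro m _
  rw [Ppol_isSome_iff I v]
  exact Iff.rfl

lemma QApre_P (I : PCInstance N) (v : ℕ) (n : Fin N) :
    QApre I (Ppol I v) n (I.tx n).arr = run I v (ordP I v n) := by
  rw [QApre, run_sum]
  congr 1
  apply Finset.sum_congr _ (fun x _ => rfl)
  apply Finset.filter_congr
  intro m _
  constructor
  · rintro ⟨s, hs, hcond⟩
    obtain ⟨he, rfl⟩ := (Ppol_exec_iff I v).1 hs
    refine ⟨he, (ordP_lt_iff I v m n).2 ?_⟩
    exact hcond
  · rintro ⟨he, hlt⟩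
    exact ⟨(I.tx m).arr, (Ppol_exec_iff I v).2 ⟨he, rfl⟩, (ordP_lt_iff I v m n).1 hlt⟩

lemma isPFI_P (I : PCInstance N) (v : ℕ) : IsPFI I (Ppol I v) := by
  constructor
  · refine ⟨?_, ?_, ?_⟩
    · intro m n sm sn hm hn hlt
      obtain ⟨_, rfl⟩ := (Ppol_exec_iff I v).1 hm
      obtain ⟨_, rfl⟩ := (Ppol_exec_iff I v).1 hn
      exact ordP_lt_of_arr_lt I v hlt
    · intro n s hs
      obtain ⟨_, rfl⟩ := (Ppol_exec_iff I v).1 hs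
      exact ⟨le_refl _, (I.tx n).arr_le_ddl⟩
    · intro n hn
      have he := (Ppol_isSome_iff I v).1 hn
      rw [QAbefore_P]
      rw [execB] at he
      exact (feasB_iff I n _).1 he
  · intro n
    by_cases h : execB I v n = true
    · left
      refine ⟨(Ppol_exec_iff I v).2 ⟨h, rfl⟩, ?_⟩
      rw [QAbefore_P]
      rw [execB] at h
      exact (feasB_iff I n _).1 h
    · right
      refine ⟨?_, ?_⟩
      · show (if execB I v n then some (I.tx n).arr else none) = none
        simp [h]
      · rw [QApre_P]
        intro hf
        exact h ((feasB_iff I n _).2 hf)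


section Pi

variable (I : PCInstance N) (v : ℕ) (π : Policy N)

/-- balance of π after the first `j` instants -/
noncomputable def piS (j : ℕ) : ℤ :=
  (I.QA0 : ℤ) +
    ∑ m ∈ univ.filter (fun m => ((π.exec? m).isSome : Prop) ∧ idxA I m < j), delta (I.tx m)

/-- balance of π after the transactions of priority `< K` -/
noncomputable def piOrdS (K : ℕ) : ℤ :=
  (I.QA0 : ℤ) +
    ∑ m ∈ univ.filter (fun m => ((π.exec? m).isSome : Prop) ∧ π.ord m < K), delta (I.tx m)

/-- number of "up" transactions executed by π at instant `i` -/
noncomputable def piA (i : ℕ) : ℕ :=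
  (univ.filter (fun n => ((π.exec? n).isSome : Prop) ∧ idxA I n = i ∧
    (I.tx n).dir = false)).card

/-- number of "down" transactions executed by π at instant `i` -/
noncomputable def piB (i : ℕ) : ℕ :=
  (univ.filter (fun n => ((π.exec? n).isSome : Prop) ∧ idxA I n = i ∧
    (I.tx n).dir = true)).card

variable (hadm : Admissible I π)

include hadm

lemma pi_time (hnb : ∀ n : Fin N, (I.tx n).ddl = (I.tx n).arr) {n : Fin N} {s : ℝ}
    (hs : π.exec? n = some s) : s = (I.tx n).arr := by
  obtain ⟨h1, h2⟩ := hadm.2.1 n s hs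
  rw [hnb n] at h2
  linarith

lemma piOrdS_bound : ∀ K, 0 ≤ piOrdS I π K ∧ piOrdS I π K ≤ (I.cap : ℤ) := by
  intro K
  induction K with
  | zero =>
    have : univ.filter (fun m : Fin N => ((π.exec? m).isSome : Prop) ∧ π.ord m < 0) = ∅ := by
      ext m; simp
    rw [piOrdS, this]
    simp only [Finset.sum_empty, add_zero]
    constructor
    · positivity
    · exact_mod_cast I.QA0_le
  | succ K ih =>
    by_cases h : ∃ m, ((π.exec? m).isSome : Prop) ∧ π.ord m = K
    · obtain ⟨m, hm1, hm2⟩ := h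
      have hnotmem : m ∉ univ.filter
          (fun x : Fin N => ((π.exec? x).isSome : Prop) ∧ π.ord x < K) := by
        simp only [Finset.mem_filter, Finset.mem_univ, true_and, not_and]
        intro _; omega
      have hins : univ.filter (fun x : Fin N => ((π.exec? x).isSome : Prop) ∧ π.ord x < K + 1) =
          insert m (univ.filter (fun x : Fin N => ((π.exec? x).isSome : Prop) ∧ π.ord x < K)) := by
        ext x
        simp only [Finset.mem_filter, Finset.mem_univ, true_and, Finset.mem_insert]
        constructor
        · rintro ⟨h1, h2⟩
          rcases Nat.lt_succ_iff_lt_or_eq.1 h2 with h'|h'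
          · exact Or.inr ⟨h1, h'⟩
          · exact Or.inl (π.ord_inj (h'.trans hm2.symm))
        · rintro (rfl | ⟨h1, h2⟩)
          · exact ⟨hm1, by omega⟩
          · exact ⟨h1, by omega⟩
      have hstep : piOrdS I π (K + 1) = piOrdS I π K + delta (I.tx m) := by
        rw [piOrdS, piOrdS, hins, Finset.sum_insert hnotmem]
        ring
      have hqab : QAbefore I π m = piOrdS I π K := by
        rw [QAbefore, piOrdS]
        congr 2
        apply Finset.filter_congr
        intro x _
        rw [hm2]
      have hfeas := hadm.2.2 m hm1
      rw [hqab] at hfeas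
      rw [FeasAt] at hfeas
      have hamtpos : (0 : ℤ) ≤ ((I.tx m).amt : ℤ) := by positivity
      rw [hstep, delta]
      by_cases hdir : (I.tx m).dir = true
      · rw [if_pos hdir] at hfeas ⊢
        constructor <;> omega
      · rw [if_neg hdir] at hfeas ⊢
        constructor <;> omega
    · have : univ.filter (fun x : Fin N => ((π.exec? x).isSome : Prop) ∧ π.ord x < K + 1) =
          univ.filter (fun x : Fin N => ((π.exec? x).isSome : Prop) ∧ π.ord x < K) := by
        ext x
        simp only [Finset.mem_filter, Finset.mem_univ, true_and]
        constructor
        · rintro ⟨h1, h2⟩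
          refine ⟨h1, ?_⟩
          rcases Nat.lt_succ_iff_lt_or_eq.1 h2 with h'|h'
          · exact h'
          · exact absurd ⟨x, h1, h'⟩ h
        · rintro ⟨h1, h2⟩
          exact ⟨h1, by omega⟩
      rw [piOrdS, this, ← piOrdS]
      exact ih

lemma piS_bound (hnb : ∀ n : Fin N, (I.tx n).ddl = (I.tx n).arr) :
    ∀ j, 0 ≤ piS I π j ∧ piS I π j ≤ (I.cap : ℤ) := by
  intro j
  set E := univ.filter (fun m : Fin N => ((π.exec? m).isSome : Prop) ∧ idxA I m < j) with hE
  rcases E.eq_empty_or_nonempty with he|he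
  · rw [piS, ← hE, he]
    simp only [Finset.sum_empty, add_zero]
    constructor
    · positivity
    · exact_mod_cast I.QA0_le
  · have hne : (E.image π.ord).Nonempty := he.image _
    set K := (E.image π.ord).max' hne + 1 with hK
    obtain ⟨mstar, hmstar, hmax⟩ := Finset.mem_image.1 ((E.image π.ord).max'_mem hne)
    simp only [hE, Finset.mem_filter, Finset.mem_univ, true_and] at hmstar
    have hsets : univ.filter (fun m : Fin N => ((π.exec? m).isSome : Prop) ∧ π.ord m < K) = E := by
      ext m
      simp only [hE, Finset.mem_filter, Finset.mem_univ, true_and]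
      constructor
      · rintro ⟨h1, h2⟩
        refine ⟨h1, ?_⟩
        -- show idxA I m < j
        obtain ⟨sm, hsm⟩ := Option.isSome_iff_exists.1 h1
        obtain ⟨ss, hss⟩ := Option.isSome_iff_exists.1 hmstar.1
        have hsm' : sm = (I.tx m).arr := pi_time I π hadm hnb hsm
        have hss' : ss = (I.tx mstar).arr := pi_time I π hadm hnb hss
        by_cases harr : (I.tx m).arr ≤ (I.tx mstar).arr
        · have := idx_le_of_arr_le I harr
          omega
        · exfalso
          push_neg at harr
          have := hadm.1 mstar m ss sm hss hsm (by rw [hsm', hss']; exact harr)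
          have hle : π.ord m ≤ (E.image π.ord).max' hne := by omega
          rw [← hmax] at hle
          omega
      · rintro ⟨h1, h2⟩
        refine ⟨h1, ?_⟩
        have : π.ord m ≤ (E.image π.ord).max' hne := by
          apply Finset.le_max'
          apply Finset.mem_image_of_mem
          rw [hE]
          simp only [Finset.mem_filter, Finset.mem_univ, true_and]
          exact ⟨h1, h2⟩
        omega
    have : piS I π j = piOrdS I π K := by
      rw [piS, piOrdS, hsets]
    rw [this]
    exact piOrdS_bound I π hadm K

omit hadm in
lemma piS_step (hamt : ∀ n, (I.tx n).amt = v) (j : ℕ) :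
    piS I π (j + 1) = piS I π j + (v : ℤ) * piA I π j - (v : ℤ) * piB I π j := by
  have hsplit : univ.filter (fun m : Fin N => ((π.exec? m).isSome : Prop) ∧ idxA I m < j + 1) =
      univ.filter (fun m : Fin N => ((π.exec? m).isSome : Prop) ∧ idxA I m < j) ∪
        (univ.filter (fun n : Fin N => ((π.exec? n).isSome : Prop) ∧ idxA I n = j ∧
            (I.tx n).dir = false) ∪
         univ.filter (fun n : Fin N => ((π.exec? n).isSome : Prop) ∧ idxA I n = j ∧
            (I.tx n).dir = true)) := by
    ext m
    simp only [Finset.mem_filter, Finset.mem_univ, true_and, Finset.mem_union]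
    constructor
    · rintro ⟨h1, h2⟩
      rcases Nat.lt_succ_iff_lt_or_eq.1 h2 with h'|h'
      · exact Or.inl ⟨h1, h'⟩
      · rcases Bool.eq_false_or_eq_true (I.tx m).dir with hd|hd
        · exact Or.inr (Or.inr ⟨h1, h', hd⟩)
        · exact Or.inr (Or.inl ⟨h1, h', hd⟩)
    · rintro (⟨h1, h2⟩ | ⟨h1, h2, _⟩ | ⟨h1, h2, _⟩) <;> exact ⟨h1, by omega⟩
  have hd1 : Disjoint
      (univ.filter (fun n : Fin N => ((π.exec? n).isSome : Prop) ∧ idxA I n = j ∧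
          (I.tx n).dir = false))
      (univ.filter (fun n : Fin N => ((π.exec? n).isSome : Prop) ∧ idxA I n = j ∧
          (I.tx n).dir = true)) := by
    rw [Finset.disjoint_left]
    intro m h1 h2
    simp only [Finset.mem_filter] at h1 h2
    rw [h1.2.2.2] at h2
    exact absurd h2.2.2.2 (by simp)
  have hd2 : Disjoint
      (univ.filter (fun m : Fin N => ((π.exec? m).isSome : Prop) ∧ idxA I m < j))
      ((univ.filter (fun n : Fin N => ((π.exec? n).isSome : Prop) ∧ idxA I n = j ∧
          (I.tx n).dir = false)) ∪
       (univ.filter (fun n : Fin N => ((π.exec? n).isSome : Prop) ∧ idxA I n = j ∧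
          (I.tx n).dir = true))) := by
    rw [Finset.disjoint_left]
    intro m h1 h2
    simp only [Finset.mem_filter, Finset.mem_union] at h1 h2
    rcases h2 with h2|h2 <;> omega
  have hup : ∑ n ∈ univ.filter (fun n : Fin N => ((π.exec? n).isSome : Prop) ∧ idxA I n = j ∧
      (I.tx n).dir = false), delta (I.tx n) = (piA I π j : ℤ) * (v : ℤ) := by
    rw [Finset.sum_congr rfl (fun n hn => by
      have := (Finset.mem_filter.1 hn).2.2.2
      exact up_delta I v hamt this), Finset.sum_const, nsmul_eq_mul]
    rfl
  have hdn : ∑ n ∈ univ.filter (fun n : Fin N => ((π.exec? n).isSome : Prop) ∧ idxA I n = j ∧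
      (I.tx n).dir = true), delta (I.tx n) = (piB I π j : ℤ) * (-(v : ℤ)) := by
    rw [Finset.sum_congr rfl (fun n hn => by
      have := (Finset.mem_filter.1 hn).2.2.2
      exact dn_delta I v hamt this), Finset.sum_const, nsmul_eq_mul]
    rfl
  rw [piS, piS, hsplit, Finset.sum_union hd2, Finset.sum_union hd1, hup, hdn]
  ring

omit hadm in
lemma piA_le (i : ℕ) : piA I π i ≤ (upsL I i).length := by
  rw [upsL, Finset.length_sort]
  apply Finset.card_le_card
  intro n hn
  simp only [Finset.mem_filter, Finset.mem_univ, true_and, piA] at hn ⊢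
  exact hn.2

omit hadm in
lemma piB_le (i : ℕ) : piB I π i ≤ (dnsL I i).length := by
  rw [dnsL, Finset.length_sort]
  apply Finset.card_le_card
  intro n hn
  simp only [Finset.mem_filter, Finset.mem_univ, true_and, piB] at hn ⊢
  exact hn.2

lemma invariant (hamt : ∀ n, (I.tx n).amt = v) (hv : 1 ≤ v)
    (hinit : v ≤ I.QA0 ∨ v + I.QA0 ≤ I.cap)
    (hnb : ∀ n : Fin N, (I.tx n).ddl = (I.tx n).arr) :
    ∀ j, ∃ x y : ℤ, sim I v j = (I.QA0 : ℤ) + v * x ∧ piS I π j = (I.QA0 : ℤ) + v * y ∧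
      ((∑ i ∈ Finset.range j, (piA I π i + piB I π i) : ℕ) : ℤ) + |x - y| ≤
        ((∑ i ∈ Finset.range j, gCnt I (sim I v i) (blk I v i) : ℕ) : ℤ) := by
  have hv0 : (0 : ℤ) < v := by exact_mod_cast hv
  intro j
  induction j with
  | zero =>
    refine ⟨0, 0, by show (I.QA0 : ℤ) = _; ring, ?_, by simp⟩
    have : univ.filter (fun m : Fin N => ((π.exec? m).isSome : Prop) ∧ idxA I m < 0) = ∅ := by
      ext m; simp
    rw [piS, this]
    simp
  | succ j ih =>
    obtain ⟨x, y, hx, hy, hle⟩ := ih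
    obtain ⟨h0, hc, hdj⟩ := siminv I v hamt hv hinit j
    obtain ⟨c1, c2, c3, c4⟩ := conc_blk I v hamt j h0 hc hdj
    have hstep := piS_step I v π hamt j
    have hbA := piA_le I π j
    have hbB := piB_le I π j
    have hboundS := piS_bound I π hadm hnb (j + 1)
    have hq0 : (0 : ℤ) ≤ (I.QA0 : ℤ) := by positivity
    rcases le_total (dnsL I j).length (upsL I j).length with hud|hud
    · obtain ⟨k, hk1, hk2, hk3, hk4⟩ := c3 hud
      rw [← sim_succ] at hk2
      have hx' : sim I v (j + 1) = (I.QA0 : ℤ) + v * (x + k) := by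
        rw [hk2, hx]; ring
      have hy' : piS I π (j + 1) = (I.QA0 : ℤ) + v * (y + (piA I π j : ℤ) - piB I π j) := by
        rw [hstep, hy]; ring
      refine ⟨x + k, y + (piA I π j : ℤ) - piB I π j, hx', hy', ?_⟩
      have hclamp : (k : ℕ) = (upsL I j).length - (dnsL I j).length ∨
          y + (piA I π j : ℤ) - piB I π j ≤ x + k := by
        rcases hk3 with h|h
        · exact Or.inl h
        · right
          rw [← sim_succ, hx'] at h
          have h1 : (I.QA0 : ℤ) + v * (y + (piA I π j : ℤ) - piB I π j) ≤ (I.cap : ℤ) := by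
            rw [← hy']; exact hboundS.2
          have h2 : (v : ℤ) * (y + (piA I π j : ℤ) - piB I π j) <
              (v : ℤ) * ((x + k) + 1) := by
            have e : (v : ℤ) * ((x + k) + 1) = v * (x + k) + v := by ring
            rw [e]; linarith
          have := lt_of_mul_lt_mul_left h2 (le_of_lt hv0)
          omega
      rw [Finset.sum_range_succ, Finset.sum_range_succ, hk4]
      push_cast
      rcases abs_cases (x - y) with ⟨e1, _⟩|⟨e1, _⟩ <;>
        rcases abs_cases (x + (k : ℤ) - (y + (piA I π j : ℤ) - piB I π j)) with ⟨e2, _⟩|⟨e2, _⟩ <;>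
        rw [e1] at hle <;> rw [e2] <;> push_cast at hle ⊢ <;> omega
    · obtain ⟨k, hk1, hk2, hk3, hk4⟩ := c4 hud
      rw [← sim_succ] at hk2
      have hx' : sim I v (j + 1) = (I.QA0 : ℤ) + v * (x - k) := by
        rw [hk2, hx]; ring
      have hy' : piS I π (j + 1) = (I.QA0 : ℤ) + v * (y + (piA I π j : ℤ) - piB I π j) := by
        rw [hstep, hy]; ring
      refine ⟨x - k, y + (piA I π j : ℤ) - piB I π j, hx', hy', ?_⟩
      have hclamp : (k : ℕ) = (dnsL I j).length - (upsL I j).length ∨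
          x - k ≤ y + (piA I π j : ℤ) - piB I π j := by
        rcases hk3 with h|h
        · exact Or.inl h
        · right
          rw [← sim_succ, hx'] at h
          have h1 : (0 : ℤ) ≤ (I.QA0 : ℤ) + v * (y + (piA I π j : ℤ) - piB I π j) := by
            rw [← hy']; exact hboundS.1
          have h2 : (v : ℤ) * (x - k) <
              (v : ℤ) * ((y + (piA I π j : ℤ) - piB I π j) + 1) := by
            have e : (v : ℤ) * ((y + (piA I π j : ℤ) - piB I π j) + 1) =
                v * (y + (piA I π j : ℤ) - piB I π j) + v := by ring
            rw [e]; linarith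
          have := lt_of_mul_lt_mul_left h2 (le_of_lt hv0)
          omega
      rw [Finset.sum_range_succ, Finset.sum_range_succ, hk4]
      push_cast
      rcases abs_cases (x - y) with ⟨e1, _⟩|⟨e1, _⟩ <;>
        rcases abs_cases (x - (k : ℤ) - (y + (piA I π j : ℤ) - piB I π j)) with ⟨e2, _⟩|⟨e2, _⟩ <;>
        rw [e1] at hle <;> rw [e2] <;> push_cast at hle ⊢ <;> omega

end Pi


lemma updn_split (I : PCInstance N) (π : Policy N) (j i : ℕ) (hij : i < j) :
    (univ.filter (fun n : Fin N => ((π.exec? n).isSome : Prop) ∧ idxA I n < j)).filter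
        (fun n => idxA I n = i) =
      (univ.filter (fun n : Fin N => ((π.exec? n).isSome : Prop) ∧ idxA I n = i ∧
          (I.tx n).dir = false)) ∪
      (univ.filter (fun n : Fin N => ((π.exec? n).isSome : Prop) ∧ idxA I n = i ∧
          (I.tx n).dir = true)) := by
  ext n
  simp only [Finset.mem_filter, Finset.mem_univ, true_and, Finset.mem_union]
  constructor
  · rintro ⟨⟨h1, _⟩, h3⟩
    rcases Bool.eq_false_or_eq_true (I.tx n).dir with hd|hd
    · exact Or.inr ⟨h1, h3, hd⟩
    · exact Or.inl ⟨h1, h3, hd⟩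
  · rintro (⟨h1, h2, _⟩ | ⟨h1, h2, _⟩) <;> exact ⟨⟨h1, by omega⟩, h2⟩

lemma updn_disj (I : PCInstance N) (π : Policy N) (i : ℕ) :
    Disjoint
      (univ.filter (fun n : Fin N => ((π.exec? n).isSome : Prop) ∧ idxA I n = i ∧
          (I.tx n).dir = false))
      (univ.filter (fun n : Fin N => ((π.exec? n).isSome : Prop) ∧ idxA I n = i ∧
          (I.tx n).dir = true)) := by
  rw [Finset.disjoint_left]
  intro m h1 h2
  simp only [Finset.mem_filter] at h1 h2
  rw [h1.2.2.2] at h2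
  exact absurd h2.2.2.2 (by simp)

lemma count_pi_eq (I : PCInstance N) (π : Policy N) (j : ℕ) :
    (univ.filter (fun n : Fin N => ((π.exec? n).isSome : Prop) ∧ idxA I n < j)).card =
      ∑ i ∈ Finset.range j, (piA I π i + piB I π i) := by
  rw [Finset.card_eq_sum_card_fiberwise (f := idxA I) (t := Finset.range j)
    (fun x hx => Finset.mem_range.2 (Finset.mem_filter.1 hx).2.2)]
  apply Finset.sum_congr rfl
  intro i hi
  rw [updn_split I π j i (Finset.mem_range.1 hi), Finset.card_union_of_disjoint (updn_disj I π i)]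
  rfl

lemma card_execB_instant (I : PCInstance N) (v : ℕ) (i : ℕ) :
    (univ.filter (fun n : Fin N => execB I v n = true ∧ idxA I n = i)).card =
      gCnt I (sim I v i) (blk I v i) := by
  rw [← blk_countP I v i, List.countP_eq_length_filter]
  have hnd : ((blk I v i).filter (fun n => execB I v n)).Nodup :=
    List.Nodup.filter _ (blk_nodup I v i)
  rw [← List.toFinset_card_of_nodup hnd]
  congr 1
  ext n
  simp only [List.mem_toFinset, List.mem_filter, Finset.mem_filter, Finset.mem_univ, true_and]
  rw [mem_blk I v]
  tauto

lemma count_P_eq (I : PCInstance N) (v : ℕ) (j : ℕ) :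
    (univ.filter (fun n : Fin N => (((Ppol I v).exec? n).isSome : Prop) ∧ idxA I n < j)).card =
      ∑ i ∈ Finset.range j, gCnt I (sim I v i) (blk I v i) := by
  rw [Finset.card_eq_sum_card_fiberwise (f := idxA I) (t := Finset.range j)
    (fun x hx => Finset.mem_range.2 (Finset.mem_filter.1 hx).2.2)]
  apply Finset.sum_congr rfl
  intro i hi
  have hij := Finset.mem_range.1 hi
  rw [← card_execB_instant I v i]
  congr 1
  ext n
  simp only [Finset.mem_filter, Finset.mem_univ, true_and]
  rw [Ppol_isSome_iff I v]
  constructor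
  · rintro ⟨⟨h1, _⟩, h2⟩
    exact ⟨h1, h2⟩
  · rintro ⟨h1, h2⟩
    exact ⟨⟨h1, by omega⟩, h2⟩

lemma throughput_count (I : PCInstance N) (v : ℕ) (hamt : ∀ n, (I.tx n).amt = v)
    (P' : Policy N) (htime : ∀ n s, P'.exec? n = some s → s = (I.tx n).arr)
    (t : ℝ) (j : ℕ) (hj : ∀ n : Fin N, (I.tx n).arr ≤ t ↔ idxA I n < j) :
    throughput I P' t =
      (univ.filter (fun n : Fin N => ((P'.exec? n).isSome : Prop) ∧ idxA I n < j)).card * v := by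
  rw [throughput]
  have hset : univ.filter (fun n : Fin N => ∃ s, P'.exec? n = some s ∧ s ≤ t) =
      univ.filter (fun n : Fin N => ((P'.exec? n).isSome : Prop) ∧ idxA I n < j) := by
    ext n
    simp only [Finset.mem_filter, Finset.mem_univ, true_and]
    constructor
    · rintro ⟨s, hs, hst⟩
      have := htime n s hs
      subst this
      exact ⟨by rw [hs]; rfl, (hj n).1 hst⟩
    · rintro ⟨h1, h2⟩
      obtain ⟨s, hs⟩ := Option.isSome_iff_exists.1 h1
      have := htime n s hs
      subst this
      exact ⟨(I.tx n).arr, hs, (hj n).2 h2⟩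
  rw [hset, Finset.sum_congr rfl (fun n _ => hamt n), Finset.sum_const, smul_eq_mul]

end PFIAux



/-- **Corollary, PFI throughput optimality.** If every transaction has
zero buffering time (no buffers) and the fixed-amounts assumption holds, the PFI
policy maximizes the throughput among all admissible policies at every time, along
every sample path. -/
theorem pfi_maximizes_throughput_no_buffers {N : ℕ} (I : PCInstance N) (v : ℕ)
    (hnb : ∀ n : Fin N, (I.tx n).ddl = (I.tx n).arr)
    (hfix : FixedAmounts I v) :
    ∃ P : Policy N, IsPFI I P ∧
      ∀ π : Policy N, Admissible I π → ∀ t : ℝ, 0 ≤ t →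
        throughput I π t ≤ throughput I P t := by
  classical
  obtain ⟨hv, hvcap, hamt, hinit⟩ := hfix
  refine ⟨PFIAux.Ppol I v, PFIAux.isPFI_P I v, ?_⟩
  intro π hadm t _
  by_cases hne : ((univ.image (fun n : Fin N => (I.tx n).arr)).filter (fun τ => τ ≤ t)).Nonempty
  · obtain ⟨nstar, -, hns⟩ := Finset.mem_image.1 (Finset.mem_filter.1
      (Finset.max'_mem _ hne)).1
    set j := PFIAux.idxA I nstar + 1 with hjdef
    have htstar : (I.tx nstar).arr ≤ t := by
      have := (Finset.mem_filter.1 (Finset.max'_mem _ hne)).2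
      rw [hns]; exact this
    have hj : ∀ n : Fin N, (I.tx n).arr ≤ t ↔ PFIAux.idxA I n < j := by
      intro n
      constructor
      · intro h
        have hmem : (I.tx n).arr ∈
            (univ.image (fun n : Fin N => (I.tx n).arr)).filter (fun τ => τ ≤ t) :=
          Finset.mem_filter.2 ⟨Finset.mem_image.2 ⟨n, Finset.mem_univ n, rfl⟩, h⟩
        have hle : (I.tx n).arr ≤ (I.tx nstar).arr := by
          rw [hns]; exact Finset.le_max' _ _ hmem
        have := PFIAux.idx_le_of_arr_le I hle
        omega
      · intro h
        have : PFIAux.idxA I n ≤ PFIAux.idxA I nstar := by omega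
        exact le_trans (PFIAux.arr_le_of_idx_le I this) htstar
    rw [PFIAux.throughput_count I v hamt π
        (fun n s hs => PFIAux.pi_time I π hadm hnb hs) t j hj,
      PFIAux.throughput_count I v hamt (PFIAux.Ppol I v)
        (fun n s hs => ((PFIAux.Ppol_exec_iff I v).1 hs).2) t j hj,
      PFIAux.count_pi_eq I π j, PFIAux.count_P_eq I v j]
    apply Nat.mul_le_mul_right
    obtain ⟨x, y, -, -, hle⟩ := PFIAux.invariant I v π hadm hamt hv hinit hnb j
    have habs : (0 : ℤ) ≤ |x - y| := abs_nonneg _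
    exact_mod_cast le_trans (by omega : ((∑ i ∈ Finset.range j, (PFIAux.piA I π i + PFIAux.piB I π i) : ℕ) : ℤ) ≤
      ((∑ i ∈ Finset.range j, PFIAux.gCnt I (PFIAux.sim I v i) (PFIAux.blk I v i) : ℕ) : ℤ)) (le_refl _)
  · have hempty : univ.filter (fun n : Fin N => ∃ s, π.exec? n = some s ∧ s ≤ t) = ∅ := by
      ext n
      simp only [Finset.mem_filter, Finset.mem_univ, true_and, Finset.notMem_empty, iff_false]
      rintro ⟨s, hs, hst⟩
      have := PFIAux.pi_time I π hadm hnb hs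
      subst this
      exact hne ⟨(I.tx n).arr, Finset.mem_filter.2
        ⟨Finset.mem_image.2 ⟨n, Finset.mem_univ n, rfl⟩, hst⟩⟩
    rw [throughput, hempty]
    simp
end

section
/- Buffering even transactions that are feasible at their arrival time can strictly increase both the number of successful transactions and the throughput: there exist a capacity C, initial balances Q^A(0) + Q^B(0) = C, a finite sequence of transactions with strictly positive buffering times (τ_n > t_n), an admissible policy π that delays past its arrival time a transaction which is feasible at its arrival, and a time T, such that π achieves at time T a strictly greater throughput S^π(T) and a strictly greater number of executed transactions than every admissible policy that executes each transaction at the earliest instant in [t_n, τ_n] at which it is feasible. -/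
open scoped Classical
open Finset

variable {N : ℕ}

/-! ### Witnessing instance for Statement 10 -/

def bufTx : Fin 4 → Txn :=
  ![{ dir := true,  arr := 0, amt := 9, ddl := 3,
      arr_nonneg := le_refl 0, amt_pos := by norm_num, arr_le_ddl := by norm_num },
    { dir := true,  arr := 0, amt := 2, ddl := 5,
      arr_nonneg := le_refl 0, amt_pos := by norm_num, arr_le_ddl := by norm_num },
    { dir := false, arr := 1, amt := 2, ddl := 2,
      arr_nonneg := by norm_num, amt_pos := by norm_num, arr_le_ddl := by norm_num },
    { dir := false, arr := 4, amt := 2, ddl := 6,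
      arr_nonneg := by norm_num, amt_pos := by norm_num, arr_le_ddl := by norm_num }]

def bufI : PCInstance 4 :=
  { cap := 9, cap_pos := by norm_num, QA0 := 7, QA0_le := by norm_num, tx := bufTx }

noncomputable def bufP : Policy 4 :=
  { exec? := ![some 2, some 5, some 1, some 4], ord := ![1, 3, 0, 2],
    ord_inj := by decide }

/-- Buffering even transactions that are feasible at their arrival
time can strictly increase both the number of successful transactions and the
throughput: there is an instance with strictly positive buffering times, an admissible
policy `π` that delays past its arrival a transaction feasible at its arrival, and a
time `T`, such that `π` achieves at `T` strictly greater throughput and strictly more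
executed transactions than every admissible policy that executes each transaction at
the earliest feasible instant of its window. -/

theorem buffering_feasible_transactions_helps :
    ∃ (N : ℕ) (I : PCInstance N) (π : Policy N) (T : ℝ),
      Admissible I π ∧
      (∀ n : Fin N, (I.tx n).arr < (I.tx n).ddl) ∧
      (∃ (n : Fin N) (s : ℝ), π.exec? n = some s ∧ (I.tx n).arr < s ∧
        FeasAt I (I.tx n).dir (I.tx n).amt (QAminus I π (I.tx n).arr)) ∧
      ∀ σ : Policy N, GreedyEarliest I σ →
        throughput I σ T < throughput I π T ∧ numExec σ T < numExec π T := by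
  classical
  refine ⟨4, bufI, bufP, 5, ⟨?_, ?_, ?_⟩, ?_, ⟨1, 5, rfl, by norm_num [bufI, bufTx], ?_⟩, ?_⟩
  · -- order consistency for bufP
    intro m n sm sn hm hn hlt
    fin_cases m <;> fin_cases n <;> simp_all [bufP] <;> linarith
  · -- windows for bufP
    intro n s hs
    fin_cases n <;> simp_all [bufP, bufI, bufTx] <;> (try constructor) <;> linarith
  · -- feasibility for bufP
    intro n _
    fin_cases n <;>
      simp [FeasAt, bufI, bufTx, Matrix.cons_val_two, Matrix.cons_val_three, bufP, QAbefore, delta, Finset.sum_filter,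
        Fin.sum_univ_four] <;> decide
  · -- strictly positive buffering times
    intro n
    fin_cases n <;> norm_num [bufI, bufTx]
  · -- tx 1 feasible at its arrival under bufP
    have he : (univ.filter (fun m : Fin 4 => ∃ s, bufP.exec? m = some s ∧ s < (bufI.tx 1).arr)) = ∅ := by
      apply Finset.filter_false_of_mem
      rintro m - ⟨s, hs, hlt⟩
      fin_cases m <;> simp_all [bufP, bufI, bufTx] <;> linarith
    rw [QAminus, he, Finset.sum_empty]
    norm_num [FeasAt, bufI, bufTx]
  · -- every greedy-earliest policy does strictly worse
    intro σ hσ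
    obtain ⟨⟨hord, hwin, hfeas⟩, hgr⟩ := hσ
    have harr0 : ∀ s, σ.exec? 0 = some s → (0:ℝ) ≤ s ∧ s ≤ 3 := by
      intro s h; have := hwin 0 s h; simpa [bufI, bufTx] using this
    have harr1 : ∀ s, σ.exec? 1 = some s → (0:ℝ) ≤ s ∧ s ≤ 5 := by
      intro s h; have := hwin 1 s h; simpa [bufI, bufTx] using this
    have harr2 : ∀ s, σ.exec? 2 = some s → (1:ℝ) ≤ s ∧ s ≤ 2 := by
      intro s h; have := hwin 2 s h; simpa [bufI, bufTx] using this
    have harr3 : ∀ s, σ.exec? 3 = some s → (4:ℝ) ≤ s ∧ s ≤ 6 := by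
      intro s h; have := hwin 3 s h; simpa [bufI, bufTx] using this
    -- balance at 0⁻
    have hQm0 : QAminus bufI σ 0 = 7 := by
      have he : (univ.filter (fun m : Fin 4 => ∃ s, σ.exec? m = some s ∧ s < (0:ℝ))) = ∅ := by
        apply Finset.filter_false_of_mem
        rintro m - ⟨s, hs, hlt⟩
        fin_cases m
        · linarith [(harr0 s hs).1]
        · linarith [(harr1 s hs).1]
        · linarith [(harr2 s hs).1]
        · linarith [(harr3 s hs).1]
      rw [QAminus, he, Finset.sum_empty]
      norm_num [bufI]
    -- σ executes transaction 1 at time 0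
    have h1 : σ.exec? 1 = some 0 := by
      have hfe : FeasAt bufI (bufI.tx 1).dir (bufI.tx 1).amt (QAminus bufI σ 0) := by
        rw [hQm0]; norm_num [FeasAt, bufI, bufTx]
      cases hc : σ.exec? 1 with
      | none =>
        exact absurd hfe ((hgr 1).2 hc 0 (by norm_num [bufI, bufTx]) (by norm_num [bufI, bufTx]))
      | some s =>
        rcases eq_or_lt_of_le (harr1 s hc).1 with h | h
        · rw [← h]
        · exact absurd hfe ((hgr 1).1 s hc 0 (by norm_num [bufI, bufTx]) h)
    -- σ drops transaction 0
    have h0 : σ.exec? 0 = none := by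
      cases hc : σ.exec? 0 with
      | none => rfl
      | some s0 =>
        exfalso
        have hf : (9:ℤ) ≤ QAbefore bufI σ 0 := by
          have := hfeas 0 (by rw [hc]; rfl)
          simpa [FeasAt, bufI, bufTx] using this
        have hs0 := harr0 s0 hc
        have hc0 : ¬ ((σ.exec? 0).isSome ∧ σ.ord 0 < σ.ord 0) := fun h => lt_irrefl _ h.2
        have hc3 : ¬ ((σ.exec? 3).isSome ∧ σ.ord 3 < σ.ord 0) := by
          rintro ⟨hsome, hlt⟩
          obtain ⟨s3, hs3⟩ := Option.isSome_iff_exists.mp hsome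
          have h43 := (harr3 s3 hs3).1
          have : σ.ord 0 < σ.ord 3 := hord 0 3 s0 s3 hc hs3 (by linarith)
          omega
        have hc21 : ((σ.exec? 2).isSome ∧ σ.ord 2 < σ.ord 0) →
            ((σ.exec? 1).isSome ∧ σ.ord 1 < σ.ord 0) := by
          rintro ⟨hsome, hlt⟩
          obtain ⟨s2, hs2⟩ := Option.isSome_iff_exists.mp hsome
          have h12 : σ.ord 1 < σ.ord 2 :=
            hord 1 2 0 s2 h1 hs2 (by linarith [(harr2 s2 hs2).1])
          exact ⟨by rw [h1]; rfl, by omega⟩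
        rw [QAbefore, Finset.sum_filter, Fin.sum_univ_four, if_neg hc0, if_neg hc3] at hf
        by_cases hC2 : (σ.exec? 2).isSome ∧ σ.ord 2 < σ.ord 0
        · rw [if_pos (hc21 hC2), if_pos hC2] at hf
          norm_num [bufI, bufTx, Matrix.cons_val_two, Matrix.cons_val_three, delta] at hf
        · rw [if_neg hC2] at hf
          by_cases hC1 : (σ.exec? 1).isSome ∧ σ.ord 1 < σ.ord 0
          · rw [if_pos hC1] at hf; norm_num [bufI, bufTx, Matrix.cons_val_two, Matrix.cons_val_three, delta] at hf
          · rw [if_neg hC1] at hf; norm_num [bufI, bufTx, Matrix.cons_val_two, Matrix.cons_val_three, delta] at hf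
    -- balance at 1⁻
    have hQm1 : QAminus bufI σ 1 = 5 := by
      have hfil : (univ.filter (fun m : Fin 4 => ∃ s, σ.exec? m = some s ∧ s < (1:ℝ))) = {1} := by
        ext m
        simp only [Finset.mem_filter, Finset.mem_univ, true_and, Finset.mem_singleton]
        constructor
        · rintro ⟨s, hs, hlt⟩
          fin_cases m
          · exact absurd (show σ.exec? 0 = some s from hs) (by simp [h0])
          · rfl
          · linarith [(harr2 s hs).1]
          · linarith [(harr3 s hs).1]
        · rintro rfl; exact ⟨0, h1, by norm_num⟩
      rw [QAminus, hfil, Finset.sum_singleton]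
      norm_num [bufI, bufTx, Matrix.cons_val_two, Matrix.cons_val_three, delta]
    -- σ executes transaction 2 at time 1
    have h2 : σ.exec? 2 = some 1 := by
      have hfe : FeasAt bufI (bufI.tx 2).dir (bufI.tx 2).amt (QAminus bufI σ 1) := by
        rw [hQm1]; norm_num [FeasAt, bufI, bufTx, Matrix.cons_val_two, Matrix.cons_val_three]
      cases hc : σ.exec? 2 with
      | none =>
        exact absurd hfe ((hgr 2).2 hc 1 (by norm_num [bufI, bufTx, Matrix.cons_val_two, Matrix.cons_val_three]) (by norm_num [bufI, bufTx, Matrix.cons_val_two, Matrix.cons_val_three]))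
      | some s =>
        rcases eq_or_lt_of_le (harr2 s hc).1 with h | h
        · rw [← h]
        · exact absurd hfe ((hgr 2).1 s hc 1 (by norm_num [bufI, bufTx, Matrix.cons_val_two, Matrix.cons_val_three]) h)
    -- balance at 4⁻
    have hQm4 : QAminus bufI σ 4 = 7 := by
      have hfil : (univ.filter (fun m : Fin 4 => ∃ s, σ.exec? m = some s ∧ s < (4:ℝ)))
          = {1, 2} := by
        ext m
        simp only [Finset.mem_filter, Finset.mem_univ, true_and, Finset.mem_insert,
          Finset.mem_singleton]
        constructor
        · rintro ⟨s, hs, hlt⟩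
          fin_cases m
          · exact absurd (show σ.exec? 0 = some s from hs) (by simp [h0])
          · exact Or.inl rfl
          · exact Or.inr rfl
          · linarith [(harr3 s hs).1]
        · rintro (rfl | rfl)
          · exact ⟨0, h1, by norm_num⟩
          · exact ⟨1, h2, by norm_num⟩
      rw [QAminus, hfil, Finset.sum_insert (by decide), Finset.sum_singleton]
      norm_num [bufI, bufTx, Matrix.cons_val_two, Matrix.cons_val_three, delta]
    -- σ executes transaction 3 at time 4
    have h3 : σ.exec? 3 = some 4 := by
      have hfe : FeasAt bufI (bufI.tx 3).dir (bufI.tx 3).amt (QAminus bufI σ 4) := by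
        rw [hQm4]; norm_num [FeasAt, bufI, bufTx, Matrix.cons_val_two, Matrix.cons_val_three]
      cases hc : σ.exec? 3 with
      | none =>
        exact absurd hfe ((hgr 3).2 hc 4 (by norm_num [bufI, bufTx, Matrix.cons_val_two, Matrix.cons_val_three]) (by norm_num [bufI, bufTx, Matrix.cons_val_two, Matrix.cons_val_three]))
      | some s =>
        rcases eq_or_lt_of_le (harr3 s hc).1 with h | h
        · rw [← h]
        · exact absurd hfe ((hgr 3).1 s hc 4 (by norm_num [bufI, bufTx, Matrix.cons_val_two, Matrix.cons_val_three]) h)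
    -- executed sets
    have hfilσ : (univ.filter (fun n : Fin 4 => ∃ s, σ.exec? n = some s ∧ s ≤ (5:ℝ)))
        = {1, 2, 3} := by
      ext m
      simp only [Finset.mem_filter, Finset.mem_univ, true_and, Finset.mem_insert,
        Finset.mem_singleton]
      constructor
      · rintro ⟨s, hs, hle⟩
        fin_cases m
        · exact absurd (show σ.exec? 0 = some s from hs) (by simp [h0])
        · exact Or.inl rfl
        · exact Or.inr (Or.inl rfl)
        · exact Or.inr (Or.inr rfl)
      · rintro (rfl | rfl | rfl)
        · exact ⟨0, h1, by norm_num⟩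
        · exact ⟨1, h2, by norm_num⟩
        · exact ⟨4, h3, by norm_num⟩
    have hfilπ : (univ.filter (fun n : Fin 4 => ∃ s, bufP.exec? n = some s ∧ s ≤ (5:ℝ)))
        = univ := by
      ext m
      simp only [Finset.mem_filter, Finset.mem_univ, true_and, iff_true]
      fin_cases m
      · exact ⟨2, rfl, by norm_num⟩
      · exact ⟨5, rfl, by norm_num⟩
      · exact ⟨1, rfl, by norm_num⟩
      · exact ⟨4, rfl, by norm_num⟩
    have hTσ : throughput bufI σ 5 = 6 := by
      rw [throughput, hfilσ, Finset.sum_insert (by decide), Finset.sum_insert (by decide),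
        Finset.sum_singleton]
      norm_num [bufI, bufTx, Matrix.cons_val_two, Matrix.cons_val_three]
    have hTπ : throughput bufI bufP 5 = 15 := by
      rw [throughput, hfilπ, Fin.sum_univ_four]
      norm_num [bufI, bufTx, Matrix.cons_val_two, Matrix.cons_val_three]
    have hNσ : numExec σ 5 = 3 := by
      rw [numExec, hfilσ]; decide
    have hNπ : numExec bufP 5 = 4 := by
      rw [numExec, hfilπ]; decide
    rw [hTσ, hTπ, hNσ, hNπ]
    exact ⟨by norm_num, by norm_num⟩
end
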